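/- arXiv:1602.07839 — 9 statements merged into one kernel-verified Lean document; each statement's English description precedes it below -/
import Mathlib

section
/- The polytope P_n = conv([-1,0]^n ∪ [0,1]^n) in R^n has exactly 2^{n+1} - 2 vertices, and the only integer point of P_n that is not a vertex is the origin. -/
/-!
`P` is the convex join of the two cubes. A nonzero `0/1`-vertex `x` of `[0,1]^n` with `x i = 1`
maximizes the coordinate `w ↦ w i` over `P`, and this maximum is attained only on `[0,1]^n`
(the coordinate is `≤ 0` on the other cube), so `x` stays extreme; symmetrically for `[-1,0]^n`.
Extreme points of `P` lie in one of the cubes, hence are cube vertices, and the common vertex `0`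
is the midpoint of `1` and `-1`; the two vertex sets have `2^n` elements each and meet only in
`0`. An integer point of `P` has coordinates in `{-1, 0, 1}`, and a coordinate `±1` pushes it
into one cube, where it is a vertex.
-/

open Set

section ConvexHullUnion

variable {E : Type*} [AddCommGroup E] [Module ℝ E] {A B : Set E}

lemma mem_of_mem_convexHull_union_of_le (hA : Convex ℝ A) (hB : Convex ℝ B) (hA₀ : A.Nonempty)
    (hB₀ : B.Nonempty) (l : E →ₗ[ℝ] ℝ) {c : ℝ} (hlA : ∀ a ∈ A, l a < c) (hlB : ∀ b ∈ B, l b ≤ c)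
    {w : E} (hw : w ∈ convexHull ℝ (A ∪ B)) (hc : c ≤ l w) : w ∈ B := by
  rw [hA.convexHull_union hB hA₀ hB₀] at hw
  obtain ⟨a, ha, b, hb, s, t, hs, ht, hst, rfl⟩ := mem_convexJoin.1 hw
  have hs0 : s = 0 := by
    simp only [map_add, map_smul, smul_eq_mul] at hc
    have hc' : c = s * c + t * c := by rw [← add_mul, hst, one_mul]
    by_contra hs0
    nlinarith [mul_pos (lt_of_le_of_ne hs (Ne.symm hs0)) (sub_pos.2 (hlA a ha)),
      mul_nonneg ht (sub_nonneg.2 (hlB b hb))]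
  obtain rfl : t = 1 := by linarith
  simpa [hs0] using hb

/-- The face of `conv (A ∪ B)` on which `l` is maximal lies in `B`, so an extreme point of `B`
in that face is extreme in `conv (A ∪ B)`. -/
theorem mem_extremePoints_convexHull_union [TopologicalSpace E] (hA : Convex ℝ A)
    (hB : Convex ℝ B) (hA₀ : A.Nonempty) (l : StrongDual ℝ E) {x : E}
    (hx : x ∈ B.extremePoints ℝ) (hlA : ∀ a ∈ A, l a < l x) (hlB : ∀ b ∈ B, l b ≤ l x) :
    x ∈ (convexHull ℝ (A ∪ B)).extremePoints ℝ := by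
  have hle : ∀ w ∈ convexHull ℝ (A ∪ B), l w ≤ l x :=
    convexHull_min (union_subset (fun a ha => (hlA a ha).le) hlB)
      (convex_halfSpace_le l.isLinear (l x))
  have hxF : x ∈ l.toExposed (convexHull ℝ (A ∪ B)) :=
    ⟨subset_convexHull ℝ _ (Or.inr hx.1), hle⟩
  have hFB : l.toExposed (convexHull ℝ (A ∪ B)) ⊆ B := fun w hw =>
    mem_of_mem_convexHull_union_of_le hA hB hA₀ ⟨x, hx.1⟩ l hlA hlB hw.1 (hw.2 x hxF.1)
  have hxext := inter_extremePoints_subset_extremePoints_of_subset hFB ⟨hxF, hx⟩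
  rw [ContinuousLinearMap.toExposed.isExposed.isExtreme.extremePoints_eq] at hxext
  exact hxext.2

end ConvexHullUnion

theorem Set.ncard_univ_pi {ι : Type*} [Fintype ι] {α : ι → Type*} (t : ∀ i, Set (α i)) :
    (univ.pi t).ncard = ∏ i, (t i).ncard := by
  simp only [← Nat.card_coe_set_eq, Nat.card_congr (Equiv.Set.univPi t), Nat.card_pi]

namespace TwoCubes

variable (ι : Type*)

def negCube : Set (ι → ℝ) := univ.pi fun _ => Icc (-1) 0
def posCube : Set (ι → ℝ) := univ.pi fun _ => Icc 0 1
def hull : Set (ι → ℝ) := convexHull ℝ (negCube ι ∪ posCube ι)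

def negVertices : Set (ι → ℝ) := univ.pi fun _ => {-1, 0}
def posVertices : Set (ι → ℝ) := univ.pi fun _ => {0, 1}

variable {ι}

lemma convex_negCube : Convex ℝ (negCube ι) := convex_pi fun _ _ => convex_Icc _ _
lemma convex_posCube : Convex ℝ (posCube ι) := convex_pi fun _ _ => convex_Icc _ _

lemma zero_mem_negCube : (0 : ι → ℝ) ∈ negCube ι := fun _ _ => by simp
lemma zero_mem_posCube : (0 : ι → ℝ) ∈ posCube ι := fun _ _ => by simp

lemma extremePoints_negCube : (negCube ι).extremePoints ℝ = negVertices ι := by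
  simp only [negCube, negVertices, extremePoints_pi, extremePoints_Icc (neg_one_lt_zero.le)]

lemma extremePoints_posCube : (posCube ι).extremePoints ℝ = posVertices ι := by
  simp only [posCube, posVertices, extremePoints_pi, extremePoints_Icc zero_le_one]

lemma negCube_subset_hull : negCube ι ⊆ hull ι :=
  subset_union_left.trans (subset_convexHull ℝ _)

lemma posCube_subset_hull : posCube ι ⊆ hull ι :=
  subset_union_right.trans (subset_convexHull ℝ _)

lemma hull_subset_pi_Icc : hull ι ⊆ univ.pi fun _ => Icc (-1) 1 :=
  convexHull_min
    (union_subset (pi_mono fun _ _ => Icc_subset_Icc le_rfl zero_le_one)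
      (pi_mono fun _ _ => Icc_subset_Icc (by norm_num) le_rfl))
    (convex_pi fun _ _ => convex_Icc _ _)

lemma mem_posCube_of_mem_hull {x : ι → ℝ} (hx : x ∈ hull ι) {i : ι} (hi : 1 ≤ x i) :
    x ∈ posCube ι :=
  mem_of_mem_convexHull_union_of_le convex_negCube convex_posCube ⟨0, zero_mem_negCube⟩
    ⟨0, zero_mem_posCube⟩ (LinearMap.proj i) (fun a ha => by simp [((ha i trivial).2).trans_lt])
    (fun b hb => (hb i trivial).2) hx hi

lemma mem_negCube_of_mem_hull {x : ι → ℝ} (hx : x ∈ hull ι) {i : ι} (hi : x i ≤ -1) :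
    x ∈ negCube ι := by
  rw [hull, union_comm] at hx
  exact mem_of_mem_convexHull_union_of_le convex_posCube convex_negCube ⟨0, zero_mem_posCube⟩
    ⟨0, zero_mem_negCube⟩ (-LinearMap.proj i) (c := 1)
    (fun a ha => by
      simp only [LinearMap.neg_apply, LinearMap.proj_apply]; linarith [(ha i trivial).1])
    (fun b hb => by
      simp only [LinearMap.neg_apply, LinearMap.proj_apply]; linarith [(hb i trivial).1])
    hx (by simpa using neg_le_neg hi)

lemma mem_extremePoints_hull_of_mem_posVertices {x : ι → ℝ} (hx : x ∈ posVertices ι)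
    (hx₀ : x ≠ 0) : x ∈ (hull ι).extremePoints ℝ := by
  obtain ⟨i, hi⟩ := Function.ne_iff.1 hx₀
  have hxi : x i = 1 := (hx i trivial).resolve_left hi
  refine mem_extremePoints_convexHull_union convex_negCube convex_posCube ⟨0, zero_mem_negCube⟩
    (ContinuousLinearMap.proj i) (extremePoints_posCube.symm ▸ hx) (fun a ha => ?_)
    (fun b hb => ?_)
  · simpa [hxi] using (ha i trivial).2.trans_lt zero_lt_one
  · simpa [hxi] using (hb i trivial).2

lemma mem_extremePoints_hull_of_mem_negVertices {x : ι → ℝ} (hx : x ∈ negVertices ι)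
    (hx₀ : x ≠ 0) : x ∈ (hull ι).extremePoints ℝ := by
  obtain ⟨i, hi⟩ := Function.ne_iff.1 hx₀
  have hxi : x i = -1 := (hx i trivial).resolve_right hi
  rw [hull, union_comm]
  refine mem_extremePoints_convexHull_union convex_posCube convex_negCube ⟨0, zero_mem_posCube⟩
    (-ContinuousLinearMap.proj i) (extremePoints_negCube.symm ▸ hx) (fun a ha => ?_)
    (fun b hb => ?_)
  · simp only [neg_apply, ContinuousLinearMap.proj_apply, hxi]
    linarith [(ha i trivial).1]
  · simp only [neg_apply, ContinuousLinearMap.proj_apply, hxi]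
    linarith [(hb i trivial).1]

lemma zero_notMem_extremePoints_hull [Nonempty ι] : (0 : ι → ℝ) ∉ (hull ι).extremePoints ℝ := by
  intro h
  have h₁ : (1 : ι → ℝ) ∈ hull ι := posCube_subset_hull fun _ _ => by simp
  have h₂ : -(1 : ι → ℝ) ∈ hull ι := negCube_subset_hull fun _ _ => by simp
  have hmid : (0 : ι → ℝ) ∈ openSegment ℝ 1 (-1) := by
    simpa only [midpoint_self_neg] using midpoint_mem_openSegment (𝕜 := ℝ) (1 : ι → ℝ) (-1)
  exact one_ne_zero (h.2 h₁ h₂ hmid)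

theorem extremePoints_hull [Nonempty ι] :
    (hull ι).extremePoints ℝ = (negVertices ι ∪ posVertices ι) \ {0} := by
  refine Subset.antisymm (fun x hx => ⟨?_, fun h => zero_notMem_extremePoints_hull (h ▸ hx)⟩) ?_
  · rw [← extremePoints_negCube, ← extremePoints_posCube]
    rcases extremePoints_convexHull_subset hx with hneg | hpos
    · exact .inl (inter_extremePoints_subset_extremePoints_of_subset negCube_subset_hull ⟨hneg, hx⟩)
    · exact .inr (inter_extremePoints_subset_extremePoints_of_subset posCube_subset_hull ⟨hpos, hx⟩)
  · rintro x ⟨hneg | hpos, hx₀⟩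
    · exact mem_extremePoints_hull_of_mem_negVertices hneg hx₀
    · exact mem_extremePoints_hull_of_mem_posVertices hpos hx₀

lemma zero_mem_negVertices : (0 : ι → ℝ) ∈ negVertices ι := fun _ _ => by simp

lemma negVertices_inter_posVertices : negVertices ι ∩ posVertices ι = {0} := by
  rw [negVertices, posVertices, ← pi_inter_distrib, ← univ_pi_singleton]
  congr! 2 with i
  ext a
  simp only [mem_inter_iff, mem_insert_iff, mem_singleton_iff, Pi.zero_apply]
  grind

theorem ncard_extremePoints_hull [Fintype ι] [Nonempty ι] :
    ((hull ι).extremePoints ℝ).ncard = 2 ^ (Fintype.card ι + 1) - 2 := by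
  have hN : (negVertices ι).ncard = 2 ^ Fintype.card ι := by
    simp [negVertices, ncard_univ_pi]
  have hP : (posVertices ι).ncard = 2 ^ Fintype.card ι := by
    simp [posVertices, ncard_univ_pi]
  have hunion := ncard_union_add_ncard_inter (negVertices ι) (posVertices ι)
    (Finite.pi fun _ => toFinite _) (Finite.pi fun _ => toFinite _)
  rw [negVertices_inter_posVertices, ncard_singleton, hN, hP] at hunion
  rw [extremePoints_hull, ncard_sdiff_singleton_of_mem (mem_union_left _ zero_mem_negVertices),
    pow_succ]
  omega

lemma mem_posVertices_of_mem_posCube {x : ι → ℝ} (hx : x ∈ posCube ι)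
    (hint : ∀ i, ∃ m : ℤ, x i = m) : x ∈ posVertices ι := by
  intro i _
  obtain ⟨m, hm⟩ := hint i
  have hmI : (0 : ℝ) ≤ m ∧ (m : ℝ) ≤ 1 := hm ▸ hx i trivial
  obtain ⟨h₀, h₁⟩ : 0 ≤ m ∧ m ≤ 1 := by exact_mod_cast hmI
  interval_cases m <;> simp [hm]

lemma mem_negVertices_of_mem_negCube {x : ι → ℝ} (hx : x ∈ negCube ι)
    (hint : ∀ i, ∃ m : ℤ, x i = m) : x ∈ negVertices ι := by
  intro i _
  obtain ⟨m, hm⟩ := hint i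
  have hmI : (-1 : ℝ) ≤ m ∧ (m : ℝ) ≤ 0 := hm ▸ hx i trivial
  obtain ⟨h₀, h₁⟩ : -1 ≤ m ∧ m ≤ 0 := by exact_mod_cast hmI
  interval_cases m <;> simp [hm]

theorem intPoints_sdiff_extremePoints_hull [Nonempty ι] :
    {x : ι → ℝ | (∀ i, ∃ m : ℤ, x i = m) ∧ x ∈ hull ι} \ (hull ι).extremePoints ℝ = {0} := by
  refine Subset.antisymm (fun x ⟨⟨hint, hx⟩, hext⟩ => ?_) ?_
  · by_contra hx₀
    obtain ⟨i, hi⟩ := Function.ne_iff.1 hx₀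
    obtain ⟨m, hm⟩ := hint i
    have hmI : (-1 : ℝ) ≤ m ∧ (m : ℝ) ≤ 1 := hm ▸ hull_subset_pi_Icc hx i trivial
    obtain ⟨h₀, h₁⟩ : -1 ≤ m ∧ m ≤ 1 := by exact_mod_cast hmI
    have hxi : x i = -1 ∨ x i = 1 := by interval_cases m <;> simp_all
    rw [extremePoints_hull] at hext
    refine hext ⟨?_, hx₀⟩
    rcases hxi with hxi | hxi
    · exact Or.inl (mem_negVertices_of_mem_negCube (mem_negCube_of_mem_hull hx hxi.le) hint)
    · exact Or.inr (mem_posVertices_of_mem_posCube (mem_posCube_of_mem_hull hx hxi.ge) hint)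
  · rintro _ rfl
    exact ⟨⟨fun _ => ⟨0, by simp⟩, posCube_subset_hull zero_mem_posCube⟩,
      zero_notMem_extremePoints_hull⟩

end TwoCubes

open TwoCubes in
/-- The polytope `P_n = conv([-1,0]^n ∪ [0,1]^n)` in `ℝ^n` has exactly
`2^(n+1) - 2` vertices, and the only integer point of `P_n` that is not a vertex is
the origin. -/
theorem stmt0 (n : ℕ) (hn : 1 ≤ n)
    (P : Set (Fin n → ℝ))
    (hP : P = convexHull ℝ
      ({x : Fin n → ℝ | ∀ i, x i ∈ Set.Icc (-1 : ℝ) 0} ∪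
       {x : Fin n → ℝ | ∀ i, x i ∈ Set.Icc (0 : ℝ) 1})) :
    (Set.extremePoints ℝ P).ncard = 2 ^ (n + 1) - 2 ∧
    {x : Fin n → ℝ | (∀ i, ∃ m : ℤ, x i = (m : ℝ)) ∧ x ∈ P} \ Set.extremePoints ℝ P
      = {0} := by
  have : Nonempty (Fin n) := ⟨⟨0, hn⟩⟩
  simp_rw [← mem_univ_pi, ofPred_mem_eq] at hP
  obtain rfl : P = hull (Fin n) := hP
  exact ⟨by simpa using ncard_extremePoints_hull (ι := Fin n), intPoints_sdiff_extremePoints_hull⟩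
end

section
/- For all n ≥ 2 and k ≥ 1, g(Z^n, k) ≥ 2^{n+1} - 2, where g(Z^n,k) is the maximum number of vertices of a polytope with vertices in Z^n that contains exactly k integer points which are not vertices. -/
/-!
The polytope is the convex hull of the lattice unit cubes `[0,1]^n` and `b + [0,1]^n`, where
`b = (1, …, 1, k, 1, …, 1)` has the entry `k` in a fixed coordinate `L`, with the two facing
corners `1 = (1, …, 1)` and `b` left out of the vertex set. That leaves `2^(n+1) - 2` vertices,
and the lattice points of the polytope that are not vertices are the points
`(1, …, m, …, 1)`, `1 ≤ m ≤ k`, on the segment joining the opposite corners `(1, …, 0, …, 1)`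
and `(1, …, k + 1, …, 1)`.

A vertex `v ≠ 1` of the first cube is the unique maximiser of the functional with weight `1` on
the coordinates where `v` is `1` and a large negative weight where it is `0`; the weight wins on
the second cube, all of whose coordinates are at least `1`. The point reflection
`x ↦ b + 1 - x` exchanges the two cubes, which takes care of the other vertices. A lattice point
`x` of the hull satisfies `0 ≤ x i`, `x i - x j ≤ 1` and `x L - k * x i ≤ 1` for `i, j ≠ L`,
and so does its reflection; if some `x i` with `i ≠ L` is not `1`, these force `x` (or its
reflection) onto the first cube, and otherwise `x` lies on the segment.
-/

def intLat (n : ℕ) : Set (Fin n → ℝ) := {x | ∀ i, ∃ m : ℤ, x i = (m : ℝ)}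

open Set

section ConvexHull

variable {E : Type*} [AddCommGroup E] [Module ℝ E] {s : Set E} {x v : E}

theorem LinearMap.le_of_mem_convexHull (f : E →ₗ[ℝ] ℝ) {c : ℝ} (h : ∀ y ∈ s, f y ≤ c)
    (hx : x ∈ convexHull ℝ s) : f x ≤ c :=
  convexHull_min h (convex_halfSpace_le f.isLinear c) hx

theorem convex_insert_halfSpace_lt (f : E →ₗ[ℝ] ℝ) (v : E) :
    Convex ℝ (insert v {x | f x < f v}) := by
  rw [convex_iff_forall_pos]
  rintro x hx y hy a b ha hb hab
  rcases hx with rfl | hx <;> rcases hy with rfl | hy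
  · exact .inl (by rw [← add_smul, hab, one_smul])
  all_goals
    refine .inr (show f (a • _ + b • _) < f _ from ?_)
    simp only [mem_ofPred_eq, map_add, map_smul, smul_eq_mul] at *
    obtain rfl := eq_sub_of_add_eq hab
    nlinarith

theorem mem_extremePoints_convexHull_of_forall_lt (f : E →ₗ[ℝ] ℝ) (hv : v ∈ s)
    (h : ∀ u ∈ s, u ≠ v → f u < f v) : v ∈ (convexHull ℝ s).extremePoints ℝ := by
  have hT := convex_insert_halfSpace_lt f v
  have hsub : convexHull ℝ s ⊆ insert v {x | f x < f v} :=
    convexHull_min (fun u hu => (eq_or_ne u v).imp id (h u hu)) hT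
  have hext : v ∈ (insert v {x | f x < f v}).extremePoints ℝ := by
    rw [hT.mem_extremePoints_iff_convex_sdiff,
      insert_sdiff_self_of_notMem (s := {x | f x < f v}) (lt_irrefl (f v))]
    exact ⟨mem_insert _ _, convex_halfSpace_lt f.isLinear _⟩
  exact inter_extremePoints_subset_extremePoints_of_subset hsub ⟨subset_convexHull ℝ s hv, hext⟩

end ConvexHull

section TwoCubes

variable {n k : ℕ} {L : Fin n} {x y : Fin n → ℝ}

noncomputable def unitCube (b : Fin n → ℝ) : Finset (Fin n → ℝ) :=
  Fintype.piFinset fun i => {b i, b i + 1}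

theorem mem_unitCube {b : Fin n → ℝ} : y ∈ unitCube b ↔ ∀ i, y i = b i ∨ y i = b i + 1 := by
  simp [unitCube]

theorem card_unitCube (b : Fin n → ℝ) : (unitCube b).card = 2 ^ n := by
  simp [unitCube]

def spinePoint (L : Fin n) (m : ℝ) : Fin n → ℝ := Function.update 1 L m

@[simp]
theorem spinePoint_apply_self (L : Fin n) (m : ℝ) : spinePoint L m L = m :=
  Function.update_self ..

@[simp]
theorem spinePoint_apply_of_ne {i : Fin n} (hi : i ≠ L) (m : ℝ) : spinePoint L m i = 1 :=
  Function.update_of_ne hi ..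

theorem spinePoint_natCast_mem_intLat (m : ℕ) : spinePoint L m ∈ intLat n := by
  intro i
  rcases eq_or_ne i L with rfl | hi
  · exact ⟨m, by simp⟩
  · exact ⟨1, by simp [hi]⟩

theorem one_le_spinePoint_apply (hk : 1 ≤ k) (i : Fin n) : 1 ≤ spinePoint L k i := by
  rcases eq_or_ne i L with rfl | hi
  · simpa using hk
  · simp [hi]

noncomputable def twoCubes (k : ℕ) (L : Fin n) : Finset (Fin n → ℝ) :=
  (unitCube 0).erase 1 ∪ (unitCube (spinePoint L k)).erase (spinePoint L k)

theorem mem_twoCubes : y ∈ twoCubes k L ↔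
    ((∀ i, y i = 0 ∨ y i = 1) ∧ y ≠ 1) ∨
      ((∀ i, y i = spinePoint L k i ∨ y i = spinePoint L k i + 1) ∧ y ≠ spinePoint L k) := by
  simp [twoCubes, mem_unitCube, and_comm]

theorem mem_twoCubes_cases (hy : y ∈ twoCubes k L) :
    (∀ i, y i = 0 ∨ y i = 1) ∨ (∀ i, i ≠ L → y i = 1 ∨ y i = 2) ∧ (y L = k ∨ y L = k + 1) := by
  refine (mem_twoCubes.1 hy).imp (fun h => h.1) fun h => ⟨fun i hi => ?_, by simpa using h.1 L⟩
  have := h.1 i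
  rwa [spinePoint_apply_of_ne hi, one_add_one_eq_two] at this

theorem card_twoCubes (hk : 1 ≤ k) : (twoCubes k L).card = 2 ^ (n + 1) - 2 := by
  have hdisj : Disjoint ((unitCube 0).erase 1)
      ((unitCube (spinePoint L k)).erase (spinePoint L k)) := by
    refine Finset.disjoint_left.2 fun y hy hy' => (Finset.mem_erase.1 hy).1 (funext fun i => ?_)
    have hb := one_le_spinePoint_apply (L := L) hk i
    rcases mem_unitCube.1 (Finset.mem_of_mem_erase hy) i with h | h <;>
      rcases mem_unitCube.1 (Finset.mem_of_mem_erase hy') i with h' | h' <;>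
      simp only [Pi.zero_apply, Pi.one_apply, zero_add] at h ⊢ <;> linarith
  rw [twoCubes, Finset.card_union_of_disjoint hdisj, Finset.card_erase_of_mem,
    Finset.card_erase_of_mem, card_unitCube, card_unitCube, pow_succ]
  · have := Nat.one_le_two_pow (n := n)
    omega
  · exact mem_unitCube.2 fun i => Or.inl rfl
  · exact mem_unitCube.2 fun i => Or.inr (by simp)

theorem twoCubes_subset_intLat : (twoCubes k L : Set (Fin n → ℝ)) ⊆ intLat n := by
  intro y hy i
  obtain ⟨z, hz⟩ := spinePoint_natCast_mem_intLat (L := L) k i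
  rcases mem_twoCubes.1 hy with ⟨h, -⟩ | ⟨h, -⟩ <;> rcases h i with h | h <;> rw [h]
  exacts [⟨0, by simp⟩, ⟨1, by simp⟩, ⟨z, hz⟩, ⟨z + 1, by simp [hz]⟩]

theorem spinePoint_mem_twoCubes_iff {m : ℝ} :
    spinePoint L m ∈ twoCubes k L ↔ m = 0 ∨ m = k + 1 := by
  have hne : ∀ {a b : ℝ}, spinePoint L a ≠ spinePoint L b ↔ a ≠ b :=
    (Function.update_injective _ L).ne_iff
  rw [mem_twoCubes, show (1 : Fin n → ℝ) = spinePoint L 1 by simp [spinePoint], hne, hne]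
  constructor
  · rintro (⟨h, h1⟩ | ⟨h, hk⟩)
    · exact .inl (by simpa [h1] using h L)
    · exact .inr (by simpa [hk] using h L)
  · rintro (rfl | rfl)
    · refine .inl ⟨fun i => ?_, zero_ne_one⟩
      rcases eq_or_ne i L with rfl | hi <;> simp [*]
    · refine .inr ⟨fun i => ?_, by simp⟩
      rcases eq_or_ne i L with rfl | hi <;> simp [*]

noncomputable def spineReflection (k : ℕ) (L : Fin n) : (Fin n → ℝ) →ᵃ[ℝ] (Fin n → ℝ) :=
  AffineMap.const ℝ _ (spinePoint L k + 1) - AffineMap.id ℝ _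

theorem spineReflection_apply (x : Fin n → ℝ) :
    spineReflection k L x = spinePoint L k + 1 - x :=
  rfl

theorem spineReflection_spineReflection (x : Fin n → ℝ) :
    spineReflection k L (spineReflection k L x) = x := by
  simp [spineReflection_apply]

theorem spineReflection_injective : Function.Injective (spineReflection k L) :=
  Function.LeftInverse.injective spineReflection_spineReflection

theorem spineReflection_mem_erase_unitCube_zero
    (hy : y ∈ (unitCube (spinePoint L k)).erase (spinePoint L k)) :
    spineReflection k L y ∈ (unitCube 0).erase 1 := by
  rw [Finset.mem_erase, mem_unitCube] at hy ⊢
  refine ⟨fun h => hy.1 (spineReflection_injective (h.trans ?_)), fun i => ?_⟩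
  · simp [spineReflection_apply]
  · rcases hy.2 i with h | h <;> simp [spineReflection_apply, h]

theorem spineReflection_mem_erase_unitCube_spinePoint (hy : y ∈ (unitCube 0).erase 1) :
    spineReflection k L y ∈ (unitCube (spinePoint L k)).erase (spinePoint L k) := by
  rw [Finset.mem_erase, mem_unitCube] at hy ⊢
  refine ⟨fun h => hy.1 (spineReflection_injective (h.trans ?_)), fun i => ?_⟩
  · simp [spineReflection_apply]
  · rcases hy.2 i with h | h <;> simp [spineReflection_apply, h]

theorem spineReflection_mem_twoCubes (hy : y ∈ twoCubes k L) :
    spineReflection k L y ∈ twoCubes k L := by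
  rcases Finset.mem_union.1 hy with hy | hy
  · exact Finset.mem_union_right _ (spineReflection_mem_erase_unitCube_spinePoint hy)
  · exact Finset.mem_union_left _ (spineReflection_mem_erase_unitCube_zero hy)

theorem spineReflection_mem_convexHull_twoCubes
    (hx : x ∈ convexHull ℝ (twoCubes k L : Set (Fin n → ℝ))) :
    spineReflection k L x ∈ convexHull ℝ (twoCubes k L : Set (Fin n → ℝ)) := by
  have := mem_image_of_mem (spineReflection k L) hx
  rw [AffineMap.image_convexHull] at this
  refine convexHull_mono ?_ this
  rintro _ ⟨y, hy, rfl⟩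
  exact spineReflection_mem_twoCubes hy

theorem spineReflection_mem_intLat (hx : x ∈ intLat n) : spineReflection k L x ∈ intLat n := by
  intro i
  obtain ⟨z, hz⟩ := hx i
  obtain ⟨w, hw⟩ := spinePoint_natCast_mem_intLat (L := L) k i
  exact ⟨w + 1 - z, by simp [spineReflection_apply, hz, hw]⟩

theorem apply_nonneg_of_mem_convexHull_twoCubes
    (hx : x ∈ convexHull ℝ (twoCubes k L : Set (Fin n → ℝ))) (i : Fin n) : 0 ≤ x i := by
  refine neg_nonpos.1 <| (-LinearMap.proj i : (Fin n → ℝ) →ₗ[ℝ] ℝ).le_of_mem_convexHull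
    (fun y hy => neg_nonpos.2 ?_) hx
  show 0 ≤ y i
  rcases mem_twoCubes_cases hy with hv | ⟨hv, hL⟩
  · rcases hv i with h | h <;> norm_num [h]
  · rcases eq_or_ne i L with rfl | hi
    · rcases hL with h | h <;> rw [h] <;> positivity
    · rcases hv i hi with h | h <;> norm_num [h]

theorem apply_le_of_mem_convexHull_twoCubes
    (hx : x ∈ convexHull ℝ (twoCubes k L : Set (Fin n → ℝ))) (i : Fin n) :
    x i ≤ spinePoint L k i + 1 := by
  simpa [spineReflection_apply] using
    apply_nonneg_of_mem_convexHull_twoCubes (spineReflection_mem_convexHull_twoCubes hx) i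

theorem apply_sub_apply_le_one_of_mem_convexHull_twoCubes
    (hx : x ∈ convexHull ℝ (twoCubes k L : Set (Fin n → ℝ))) {i j : Fin n} (hi : i ≠ L)
    (hj : j ≠ L) : x i - x j ≤ 1 := by
  refine ((LinearMap.proj i : (Fin n → ℝ) →ₗ[ℝ] ℝ) - LinearMap.proj j).le_of_mem_convexHull
    (fun y hy => ?_) hx
  show y i - y j ≤ 1
  rcases mem_twoCubes_cases hy with hv | ⟨hv, -⟩
  · rcases hv i with h | h <;> rcases hv j with h' | h' <;> norm_num [h, h']
  · rcases hv i hi with h | h <;> rcases hv j hj with h' | h' <;> norm_num [h, h']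

theorem apply_sub_mul_apply_le_one_of_mem_convexHull_twoCubes
    (hx : x ∈ convexHull ℝ (twoCubes k L : Set (Fin n → ℝ))) {i : Fin n} (hi : i ≠ L) :
    x L - k * x i ≤ 1 := by
  refine (LinearMap.proj L - (k : ℝ) • LinearMap.proj i : (Fin n → ℝ) →ₗ[ℝ] ℝ
    ).le_of_mem_convexHull (fun y hy => ?_) hx
  show y L - k * y i ≤ 1
  have hk : (0 : ℝ) ≤ k := k.cast_nonneg
  rcases mem_twoCubes_cases hy with hv | ⟨hv, hL⟩
  · rcases hv i with h | h <;> rcases hv L with h' | h' <;> rw [h, h'] <;> linarith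
  · rcases hv i hi with h | h <;> rcases hL with h' | h' <;> rw [h, h'] <;> linarith

theorem apply_eq_zero_or_one_of_mem_intLat (hx : x ∈ intLat n) {i : Fin n} (h0 : 0 ≤ x i)
    (h1 : x i ≤ 1) : x i = 0 ∨ x i = 1 := by
  obtain ⟨z, hz⟩ := hx i
  rw [hz] at h0 h1 ⊢
  norm_cast at *
  omega

theorem mem_twoCubes_of_apply_eq_zero (hxI : x ∈ intLat n)
    (hx : x ∈ convexHull ℝ (twoCubes k L : Set (Fin n → ℝ))) {j : Fin n} (hj : j ≠ L)
    (hxj : x j = 0) : x ∈ twoCubes k L := by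
  refine mem_twoCubes.2 (.inl ⟨fun i => apply_eq_zero_or_one_of_mem_intLat hxI
    (apply_nonneg_of_mem_convexHull_twoCubes hx i) ?_, fun h => by simp [h] at hxj⟩)
  rcases eq_or_ne i L with rfl | hi
  · simpa [hxj] using apply_sub_mul_apply_le_one_of_mem_convexHull_twoCubes hx hj
  · simpa [hxj] using apply_sub_apply_le_one_of_mem_convexHull_twoCubes hx hi hj

theorem mem_twoCubes_of_apply_ne_one (hxI : x ∈ intLat n)
    (hx : x ∈ convexHull ℝ (twoCubes k L : Set (Fin n → ℝ))) {j : Fin n} (hj : j ≠ L)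
    (hxj : x j ≠ 1) : x ∈ twoCubes k L := by
  have h0 := apply_nonneg_of_mem_convexHull_twoCubes hx j
  have h2 := apply_le_of_mem_convexHull_twoCubes hx j
  rw [spinePoint_apply_of_ne hj] at h2
  obtain ⟨z, hz⟩ := hxI j
  obtain h | h : x j = 0 ∨ x j = 2 := by
    rw [hz] at h0 h2 hxj ⊢
    norm_cast at *
    omega
  · exact mem_twoCubes_of_apply_eq_zero hxI hx hj h
  · rw [← spineReflection_spineReflection (k := k) (L := L) x]
    refine spineReflection_mem_twoCubes (mem_twoCubes_of_apply_eq_zero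
      (spineReflection_mem_intLat hxI) (spineReflection_mem_convexHull_twoCubes hx) hj ?_)
    norm_num [spineReflection_apply, hj, h]

theorem mem_twoCubes_or_exists_spinePoint_eq (hxI : x ∈ intLat n)
    (hx : x ∈ convexHull ℝ (twoCubes k L : Set (Fin n → ℝ))) :
    x ∈ twoCubes k L ∨ ∃ m ∈ Icc 1 k, spinePoint L m = x := by
  by_cases h : ∃ j ≠ L, x j ≠ 1
  · obtain ⟨j, hj, hxj⟩ := h
    exact .inl (mem_twoCubes_of_apply_ne_one hxI hx hj hxj)
  push Not at h
  have hx_eq : spinePoint L (x L) = x :=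
    funext fun i => by rcases eq_or_ne i L with rfl | hi <;> simp [*]
  have h0 := apply_nonneg_of_mem_convexHull_twoCubes hx L
  have h1 := apply_le_of_mem_convexHull_twoCubes hx L
  rw [spinePoint_apply_self] at h1
  obtain ⟨z, hz⟩ := hxI L
  rw [hz] at h0 h1 hx_eq
  lift z to ℕ using by exact_mod_cast h0
  push_cast at h1 hx_eq
  have hzk : z ≤ k + 1 := by exact_mod_cast h1
  by_cases hz' : z = 0 ∨ z = k + 1
  · refine .inl (hx_eq ▸ spinePoint_mem_twoCubes_iff.2 ?_)
    rcases hz' with rfl | rfl <;> simp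
  · exact .inr ⟨z, ⟨by omega, by omega⟩, by simpa using hx_eq⟩

theorem spinePoint_mem_convexHull_twoCubes {m : ℝ} (h0 : 0 ≤ m) (h1 : m ≤ k + 1) :
    spinePoint L m ∈ convexHull ℝ (twoCubes k L : Set (Fin n → ℝ)) := by
  refine segment_subset_convexHull (spinePoint_mem_twoCubes_iff.2 (.inl rfl))
    (spinePoint_mem_twoCubes_iff.2 (.inr rfl))
    ⟨1 - m / (k + 1), m / (k + 1), ?_, by positivity, by ring, funext fun i => ?_⟩
  · rw [sub_nonneg, div_le_one (by positivity)]
    exact h1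
  · rcases eq_or_ne i L with rfl | hi
    · simp
      field_simp
    · simp [hi]

theorem intLat_inter_convexHull_twoCubes_sdiff :
    (intLat n ∩ convexHull ℝ (twoCubes k L : Set (Fin n → ℝ))) \ twoCubes k L =
      (fun m : ℕ => spinePoint L m) '' Icc 1 k := by
  ext x
  constructor
  · rintro ⟨⟨hxI, hx⟩, hxV⟩
    exact (mem_twoCubes_or_exists_spinePoint_eq hxI hx).resolve_left hxV
  · rintro ⟨m, hm, rfl⟩
    refine ⟨⟨spinePoint_natCast_mem_intLat m, spinePoint_mem_convexHull_twoCubes (by positivity)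
      (by exact_mod_cast hm.2.trans k.le_succ)⟩, fun h => ?_⟩
    rcases spinePoint_mem_twoCubes_iff.1 h with h | h <;> norm_cast at h <;> grind

theorem exists_forall_lt_of_mem_erase_unitCube_zero (hk : 1 ≤ k) {v : Fin n → ℝ}
    (hv : v ∈ (unitCube 0).erase 1) :
    ∃ f : (Fin n → ℝ) →ₗ[ℝ] ℝ, ∀ u ∈ twoCubes k L, u ≠ v → f u < f v := by
  obtain ⟨hv1, hv⟩ := Finset.mem_erase.1 hv
  simp only [mem_unitCube, Pi.zero_apply, zero_add] at hv
  obtain ⟨j, hj⟩ : ∃ j, v j = 0 := by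
    by_contra! h
    exact hv1 (funext fun i => (hv i).resolve_left (h i))
  set M : ℝ := n * (k + 1)
  have hM : 0 < M := by have := j.pos; positivity
  refine ⟨dotProductBilin ℝ ℝ fun i => (M + 1) * v i - M, fun u hu hne => ?_⟩
  simp only [dotProductBilin_apply_apply, dotProduct]
  rcases mem_twoCubes_cases hu with hu' | ⟨hu', huL⟩
  · obtain ⟨i, hi⟩ := Function.ne_iff.1 hne
    refine Finset.sum_lt_sum (fun i _ => ?_) ⟨i, Finset.mem_univ _, ?_⟩
    · rcases hv i with h | h <;> rcases hu' i with h' | h' <;> rw [h, h'] <;> linarith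
    · rcases hv i with h | h <;> rcases hu' i with h' | h'
      · exact absurd (h'.trans h.symm) hi
      · rw [h, h']; linarith
      · rw [h, h']; linarith
      · exact absurd (h'.trans h.symm) hi
  · have hk' : (1 : ℝ) ≤ k := by exact_mod_cast hk
    have hu1 : ∀ i, 1 ≤ u i ∧ u i ≤ k + 1 := by
      intro i
      rcases eq_or_ne i L with rfl | hi
      · rcases huL with h | h <;> rw [h] <;> constructor <;> linarith
      · rcases hu' i hi with h | h <;> rw [h] <;> constructor <;> linarith
    calc ∑ i, ((M + 1) * v i - M) * u i
        ≤ ∑ i, ((k + 1 : ℝ) - (M + k + 1) * if i = j then 1 else 0) := by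
          refine Finset.sum_le_sum fun i _ => ?_
          obtain ⟨h1, h2⟩ := hu1 i
          rcases eq_or_ne i j with rfl | hij
          · rw [hj, if_pos rfl]
            nlinarith
          · rw [if_neg hij]
            rcases hv i with h | h <;> rw [h] <;> nlinarith
      _ < 0 := by
          simp only [mul_ite, mul_one, mul_zero, Finset.sum_sub_distrib, Finset.sum_ite_eq',
            Finset.mem_univ, if_true, Finset.sum_const, Finset.card_univ, Fintype.card_fin,
            nsmul_eq_mul]
          linarith
      _ ≤ ∑ i, ((M + 1) * v i - M) * v i :=
          Finset.sum_nonneg fun i _ => by rcases hv i with h | h <;> rw [h] <;> linarith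

theorem exists_forall_lt_of_mem_twoCubes (hk : 1 ≤ k) {v : Fin n → ℝ} (hv : v ∈ twoCubes k L) :
    ∃ f : (Fin n → ℝ) →ₗ[ℝ] ℝ, ∀ u ∈ twoCubes k L, u ≠ v → f u < f v := by
  rcases Finset.mem_union.1 hv with hv | hv
  · exact exists_forall_lt_of_mem_erase_unitCube_zero hk hv
  · obtain ⟨f, hf⟩ := exists_forall_lt_of_mem_erase_unitCube_zero (L := L) hk
      (spineReflection_mem_erase_unitCube_zero hv)
    refine ⟨-f, fun u hu hne => ?_⟩
    have := hf _ (spineReflection_mem_twoCubes hu) (spineReflection_injective.ne hne)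
    simp only [spineReflection_apply, map_sub, LinearMap.neg_apply] at this ⊢
    linarith

theorem extremePoints_convexHull_twoCubes (hk : 1 ≤ k) :
    (convexHull ℝ (twoCubes k L : Set (Fin n → ℝ))).extremePoints ℝ = twoCubes k L := by
  refine Subset.antisymm extremePoints_convexHull_subset fun v hv => ?_
  obtain ⟨f, hf⟩ := exists_forall_lt_of_mem_twoCubes hk hv
  exact mem_extremePoints_convexHull_of_forall_lt f hv hf

end TwoCubes

/-- For all `n ≥ 2` and `k ≥ 1`, `g(ℤ^n, k) ≥ 2^(n+1) - 2`, i.e. there is a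
polytope with vertices in `ℤ^n` having at least `2^(n+1) - 2` vertices and containing
exactly `k` integer points that are not vertices. -/
theorem stmt1 (n k : ℕ) (hn : 2 ≤ n) (hk : 1 ≤ k) :
    ∃ V : Finset (Fin n → ℝ), ↑V ⊆ intLat n ∧
      Set.extremePoints ℝ (convexHull ℝ (V : Set (Fin n → ℝ))) = ↑V ∧
      ((intLat n ∩ convexHull ℝ (V : Set (Fin n → ℝ))) \ ↑V).Finite ∧
      ((intLat n ∩ convexHull ℝ (V : Set (Fin n → ℝ))) \ ↑V).ncard = k ∧
      2 ^ (n + 1) - 2 ≤ V.card := by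
  let L : Fin n := ⟨0, by omega⟩
  have hcount := intLat_inter_convexHull_twoCubes_sdiff (k := k) (L := L)
  refine ⟨twoCubes k L, twoCubes_subset_intLat, extremePoints_convexHull_twoCubes hk, ?_, ?_,
    (card_twoCubes hk).ge⟩
  · rw [hcount]
    exact (finite_Icc 1 k).image _
  · rw [hcount, ncard_image_of_injective _ fun a b h => by simpa using congrFun h L,
      ← Finset.coe_Icc, ncard_coe_finset, Nat.card_Icc, Nat.add_sub_cancel]
end

section
/- Let S ⊆ R^n be discrete and k ∈ N₀. Then c(S,k) = max{ g(S,ℓ) + ℓ - k : ℓ ∈ {0,...,k}, g(S,ℓ) + ℓ - k ≥ 0 }. -/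
open Set

/-- A set `S ⊆ ℝ^n` is discrete if every bounded subset of it is finite. -/
def DiscreteSet {n : ℕ} (S : Set (Fin n → ℝ)) : Prop :=
  ∀ B : Set (Fin n → ℝ), Bornology.IsBounded B → (S ∩ B).Finite

/-- The Helly-type condition: whenever finitely many convex sets have exactly `k` common
points of `S`, some at most `t` of them already have exactly `k` common points of `S`. -/
def HellyCond {n : ℕ} (S : Set (Fin n → ℝ)) (k t : ℕ) : Prop :=
  ∀ (m : ℕ) (C : Fin m → Set (Fin n → ℝ)), (∀ i, Convex ℝ (C i)) →
    (S ∩ ⋂ i, C i).Finite → (S ∩ ⋂ i, C i).ncard = k →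
    ∃ I : Finset (Fin m), I.card ≤ t ∧ (S ∩ ⋂ i ∈ I, C i).Finite ∧
      (S ∩ ⋂ i ∈ I, C i).ncard = k

/- The quantitative Helly number `c(S,k)` as an extended real number: `⊥` (= -∞) if no
convex set contains exactly `k` points of `S`, `⊤` (= ∞) if no finite `t` works, and
otherwise the smallest `t` satisfying the Helly condition. -/
open Classical in
noncomputable def cER {n : ℕ} (S : Set (Fin n → ℝ)) (k : ℕ) : EReal :=
  if ¬ ∃ C : Set (Fin n → ℝ), Convex ℝ C ∧ (S ∩ C).Finite ∧ (S ∩ C).ncard = k then ⊥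
  else if ∃ t : ℕ, HellyCond S k t then ((sInf {t : ℕ | HellyCond S k t} : ℕ) : EReal)
  else ⊤

/-- `g(S,k)`: the supremum (in `EReal`, so `sSup ∅ = ⊥ = -∞`) of the number of vertices
of a polytope `P` with vertices in `S` such that exactly `k` points of `S ∩ P` are not
vertices of `P`. -/
noncomputable def gER {n : ℕ} (S : Set (Fin n → ℝ)) (k : ℕ) : EReal :=
  sSup {v : EReal | ∃ V : Finset (Fin n → ℝ), ↑V ⊆ S ∧
    Set.extremePoints ℝ (convexHull ℝ (V : Set (Fin n → ℝ))) = ↑V ∧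
    ((S ∩ convexHull ℝ (V : Set (Fin n → ℝ))) \ ↑V).Finite ∧
    ((S ∩ convexHull ℝ (V : Set (Fin n → ℝ))) \ ↑V).ncard = k ∧
    v = (V.card : EReal)}


/-!
Everything is governed by saturated finite sets `F ⊆ S`, those with `S ∩ conv F = F`: the
polytope counted by `g(S,ℓ)` spans one with `g + ℓ` points, and every convex set with finitely
many points of `S` cuts one out.

If a polytope with `V` vertices and `ℓ ≤ k` further points of `S` has `V + ℓ > t + k`, cutting
off `V + ℓ - k` of its vertices, one hull `conv (F \ {v})` each, leaves exactly `k` points of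
`S`, and no `t` of these hulls do; so `c(S,k) ≥ g(S,ℓ) + ℓ - k`.

Conversely, in a subfamily of minimal size `m` with exactly `k` common points `W` of `S`, each
set `C_i` misses a point `x_i ∈ S` lying in all the others. Shrink `C_i` to
`conv ((W ∪ X) \ {x_i})`. As long as the hull of `B = W ∪ X` contains a further point `y` of
`S`, trade a cut point whose hull misses `y` for a suitably minimal such `y`: the configuration
stays critical and `S ∩ conv B`, finite by discreteness, loses a point. In the end `B` is
saturated, its vertices include all cut points, and it gives a polytope with `g + ℓ ≥ m + k` and
`ℓ ≤ k`.
-/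

section ExtremePoints

variable {E : Type*}

section Module
variable [AddCommGroup E] [Module ℝ E] {A T : Set E} {p y : E}

theorem mem_of_mem_extremePoints_convexHull_of_mem_convexHull
    (hp : p ∈ extremePoints ℝ (convexHull ℝ A)) (hT : T ⊆ convexHull ℝ A)
    (hpT : p ∈ convexHull ℝ T) : p ∈ T :=
  extremePoints_convexHull_subset <| inter_extremePoints_subset_extremePoints_of_subset
    (convexHull_min hT (convex_convexHull ℝ A)) ⟨hpT, hp⟩

theorem notMem_convexHull_sdiff_of_mem_extremePoints
    (hp : p ∈ extremePoints ℝ (convexHull ℝ A)) : p ∉ convexHull ℝ (A \ {p}) := fun h =>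
  (mem_of_mem_extremePoints_convexHull_of_mem_convexHull hp
    (sdiff_subset.trans (subset_convexHull ℝ A)) h).2 rfl

theorem notMem_convexHull_insert_sdiff (hp : p ∈ extremePoints ℝ (convexHull ℝ A))
    (hy : y ∈ convexHull ℝ A) (hyp : y ≠ p) : p ∉ convexHull ℝ (insert y (A \ {p})) := by
  intro h
  have hsub : insert y (A \ {p}) ⊆ convexHull ℝ A :=
    insert_subset hy (sdiff_subset.trans (subset_convexHull ℝ A))
  rcases mem_of_mem_extremePoints_convexHull_of_mem_convexHull hp hsub h with h | h
  exacts [hyp h.symm, h.2 rfl]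

theorem convexHull_insert_sdiff_subset (hy : y ∈ convexHull ℝ A) :
    convexHull ℝ (insert y (A \ {p})) ⊆ convexHull ℝ A :=
  convexHull_min (insert_subset hy (sdiff_subset.trans (subset_convexHull ℝ A)))
    (convex_convexHull ℝ A)

end Module

section Normed
variable [NormedAddCommGroup E] [NormedSpace ℝ E] {A : Set E} {p : E}

theorem Set.Finite.convexHull_extremePoints_convexHull (hA : A.Finite) :
    convexHull ℝ (extremePoints ℝ (convexHull ℝ A)) = convexHull ℝ A := by
  conv_rhs => rw [← closure_convexHull_extremePoints (hA.isCompact_convexHull ℝ)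
    (convex_convexHull ℝ A)]
  have hext : (extremePoints ℝ (convexHull ℝ A)).Finite :=
    hA.subset extremePoints_convexHull_subset
  exact (hext.isClosed_convexHull ℝ).closure_eq.symm

theorem Set.Finite.mem_extremePoints_convexHull_iff (hA : A.Finite) :
    p ∈ extremePoints ℝ (convexHull ℝ A) ↔ p ∈ A ∧ p ∉ convexHull ℝ (A \ {p}) := by
  refine ⟨fun hp => ⟨extremePoints_convexHull_subset hp,
    notMem_convexHull_sdiff_of_mem_extremePoints hp⟩, fun ⟨hpA, hp⟩ => ?_⟩
  by_contra hext
  refine hp (convexHull_mono ?_ (hA.convexHull_extremePoints_convexHull.symm ▸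
    subset_convexHull ℝ A hpA))
  exact fun q hq => ⟨extremePoints_convexHull_subset hq, fun hqp => hext (hqp ▸ hq)⟩

end Normed

end ExtremePoints

section Polytopes

variable {E : Type*}

section Module
variable [AddCommGroup E] [Module ℝ E]

/-- The polytopes counted by `gER S ℓ`, given by their vertex sets `V`. -/
def IsSPolytope (S : Set E) (ℓ : ℕ) (V : Finset E) : Prop :=
  ↑V ⊆ S ∧ extremePoints ℝ (convexHull ℝ (V : Set E)) = ↑V ∧
    ((S ∩ convexHull ℝ (V : Set E)) \ ↑V).Finite ∧
    ((S ∩ convexHull ℝ (V : Set E)) \ ↑V).ncard = ℓ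

def PolytopeBound (S : Set E) (k t : ℕ) : Prop :=
  ∀ ℓ ≤ k, ∀ V : Finset E, IsSPolytope S ℓ V → V.card + ℓ ≤ t + k

variable {S : Set E} {ℓ : ℕ} {V : Finset E}

theorem IsSPolytope.exists_saturated (hV : IsSPolytope S ℓ V) :
    ∃ F : Finset E, S ∩ convexHull ℝ ↑F = ↑F ∧
      convexHull ℝ (F : Set E) = convexHull ℝ ↑V ∧ V ⊆ F ∧ F.card = V.card + ℓ := by
  obtain ⟨hVS, -, hfin, hcard⟩ := hV
  have hVsub : (V : Set E) ⊆ S ∩ convexHull ℝ ↑V :=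
    subset_inter hVS (subset_convexHull ℝ _)
  have hFfin : (S ∩ convexHull ℝ (V : Set E)).Finite := hfin.of_sdiff V.finite_toSet
  have hhull : convexHull ℝ (hFfin.toFinset : Set E) = convexHull ℝ ↑V := by
    rw [hFfin.coe_toFinset]
    exact (convexHull_min inter_subset_right (convex_convexHull ℝ _)).antisymm
      (convexHull_mono hVsub)
  refine ⟨hFfin.toFinset, by rw [hhull, hFfin.coe_toFinset], hhull,
    fun z hz => hFfin.mem_toFinset.2 (hVsub hz), ?_⟩
  rw [← Set.ncard_coe_finset, hFfin.coe_toFinset, ← hcard,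
    Set.ncard_sdiff hVsub V.finite_toSet, Set.ncard_coe_finset]
  have := Set.ncard_le_ncard hVsub hFfin
  rw [Set.ncard_coe_finset] at this
  omega

end Module

section Normed
variable [NormedAddCommGroup E] [NormedSpace ℝ E] {S : Set E} {F V : Finset E}

theorem isSPolytope_of_saturated (hF : S ∩ convexHull ℝ ↑F = ↑F)
    (hV : ↑V = extremePoints ℝ (convexHull ℝ (F : Set E))) :
    IsSPolytope S (F.card - V.card) V := by
  have hVF : (V : Set E) ⊆ ↑F := hV ▸ extremePoints_convexHull_subset
  have hhull : convexHull ℝ (V : Set E) = convexHull ℝ ↑F := by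
    rw [hV, F.finite_toSet.convexHull_extremePoints_convexHull]
  have hdiff : (S ∩ convexHull ℝ (V : Set E)) \ ↑V = ↑F \ ↑V := by rw [hhull, hF]
  refine ⟨hVF.trans (hF ▸ inter_subset_left), by rw [hhull, hV], ?_, ?_⟩
  · rw [hdiff]; exact F.finite_toSet.sdiff
  · rw [hdiff, Set.ncard_sdiff hVF V.finite_toSet, Set.ncard_coe_finset, Set.ncard_coe_finset]

theorem exists_isSPolytope_of_convex {C : Set E} (hC : Convex ℝ C) (hfin : (S ∩ C).Finite) :
    ∃ ℓ V, IsSPolytope S ℓ V ∧ V.card + ℓ = (S ∩ C).ncard := by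
  have hF : S ∩ convexHull ℝ (hfin.toFinset : Set E) = ↑hfin.toFinset := by
    rw [hfin.coe_toFinset]
    exact (inter_subset_inter_right _ (convexHull_min inter_subset_right hC)).antisymm
      (subset_inter inter_subset_left (subset_convexHull ℝ _))
  have hext : (extremePoints ℝ (convexHull ℝ (hfin.toFinset : Set E))).Finite :=
    hfin.toFinset.finite_toSet.subset extremePoints_convexHull_subset
  refine ⟨_, _, isSPolytope_of_saturated hF hext.coe_toFinset, ?_⟩
  have : hext.toFinset.card ≤ hfin.toFinset.card := Finset.card_le_card fun v hv =>
    extremePoints_convexHull_subset (hext.mem_toFinset.1 hv)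
  have hcard : hfin.toFinset.card = (S ∩ C).ncard := by
    rw [← Set.ncard_coe_finset, hfin.coe_toFinset]
  omega

/-- Peeling off extreme points one at a time keeps the set saturated. -/
theorem exists_convex_ncard_eq_of_saturated (hF : S ∩ convexHull ℝ ↑F = ↑F) {j : ℕ}
    (hj : j ≤ F.card) :
    ∃ C : Set E, Convex ℝ C ∧ (S ∩ C).Finite ∧ (S ∩ C).ncard = j := by
  classical
  induction F using Finset.strongInduction with
  | H F ih =>
  rcases hj.eq_or_lt with rfl | hlt
  · exact ⟨_, convex_convexHull ℝ _, hF ▸ F.finite_toSet, by rw [hF, Set.ncard_coe_finset]⟩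
  obtain ⟨e, he⟩ := (F.finite_toSet.isCompact_convexHull ℝ).extremePoints_nonempty
    ((Finset.card_pos.1 (by omega)).to_set.mono (subset_convexHull ℝ _))
  have heF : e ∈ F := extremePoints_convexHull_subset he
  refine ih (F.erase e) (Finset.erase_ssubset heF) ?_ (by rw [Finset.card_erase_of_mem heF]; omega)
  rw [Finset.coe_erase]
  have hFS : (F : Set E) ⊆ S := hF ▸ inter_subset_left
  refine subset_antisymm (fun z hz => ?_) fun z hz => ⟨hFS hz.1, subset_convexHull ℝ _ hz⟩
  refine ⟨hF ▸ ⟨hz.1, convexHull_mono sdiff_subset hz.2⟩, ?_⟩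
  rintro rfl
  exact notMem_convexHull_sdiff_of_mem_extremePoints he hz.2

theorem IsSPolytope.exists_convex_ncard_eq {ℓ j : ℕ} (hV : IsSPolytope S ℓ V)
    (hj : j ≤ V.card + ℓ) :
    ∃ C : Set E, Convex ℝ C ∧ (S ∩ C).Finite ∧ (S ∩ C).ncard = j := by
  obtain ⟨F, hF, -, -, hcard⟩ := hV.exists_saturated
  exact exists_convex_ncard_eq_of_saturated hF (hcard ▸ hj)

end Normed

end Polytopes

theorem forall_exists_notMem_of_minimalFor {α ι : Type*} {S : Set α} {C : ι → Set α}
    {k : ℕ} {I : Finset ι}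
    (hI : MinimalFor (fun I : Finset ι => (S ∩ ⋂ i ∈ I, C i).Finite ∧
      (S ∩ ⋂ i ∈ I, C i).ncard = k) Finset.card I) :
    ∀ i ∈ I, ∃ x ∈ S, (∀ j ∈ I, j ≠ i → x ∈ C j) ∧ x ∉ C i := by
  classical
  intro i hi
  by_contra! hall
  have heq : S ∩ ⋂ j ∈ I.erase i, C j = S ∩ ⋂ j ∈ I, C j := by
    refine subset_antisymm (fun z ⟨hzS, hz⟩ => ⟨hzS, ?_⟩)
      (inter_subset_inter_right _ fun z hz => mem_iInter₂.2 fun j hj =>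
        mem_iInter₂.1 hz j (Finset.mem_of_mem_erase hj))
    have hz' : ∀ j ∈ I, j ≠ i → z ∈ C j := fun j hj hji =>
      mem_iInter₂.1 hz j (Finset.mem_erase.2 ⟨hji, hj⟩)
    exact mem_iInter₂.2 fun j hj => if hji : j = i then hji ▸ hall z hzS hz' else hz' j hj hji
  obtain ⟨hfin, hk⟩ := hI.1
  have := hI.2 (j := I.erase i) ⟨heq ▸ hfin, heq ▸ hk⟩ Finset.card_erase_le
  rw [Finset.card_erase_of_mem hi] at this
  have := Finset.card_pos.2 ⟨i, hi⟩
  omega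

section Critical

variable {E : Type*} [NormedAddCommGroup E] [NormedSpace ℝ E] {S : Set E} {B X : Finset E}

/-- A critical family of convex sets `C_x`, indexed by its cut points `x ∈ X`, with common
points `B \ X` in `S`, after shrinking each `C_x` to `conv (B \ {x})`; then `x` lies in every
`C_{x'}` with `x' ≠ x`, but not in `C_x`. -/
structure IsCritical (S : Set E) (B X : Finset E) : Prop where
  subset : ↑B ⊆ S
  cuts_subset : X ⊆ B
  notMem_convexHull : ∀ x ∈ X, x ∉ convexHull ℝ (↑B \ {x})
  mem_of_forall_mem_convexHull :
    ∀ s ∈ S, (∀ x ∈ X, s ∈ convexHull ℝ (↑B \ {x})) → s ∈ B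

def missedCuts (B X : Finset E) (y : E) : Set E :=
  {x | x ∈ X ∧ y ∉ convexHull ℝ (↑B \ {x})}

theorem IsCritical.mem_extremePoints (h : IsCritical S B X) {x : E} (hx : x ∈ X) :
    x ∈ extremePoints ℝ (convexHull ℝ (B : Set E)) :=
  B.finite_toSet.mem_extremePoints_convexHull_iff.2 ⟨h.cuts_subset hx, h.notMem_convexHull x hx⟩

theorem IsCritical.exists_isSPolytope_of_saturated (h : IsCritical S B X)
    (hB : S ∩ convexHull ℝ ↑B = ↑B) :
    ∃ ℓ V, ℓ + X.card ≤ B.card ∧ IsSPolytope S ℓ V ∧ B.card ≤ V.card + ℓ := by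
  have hfin : (extremePoints ℝ (convexHull ℝ (B : Set E))).Finite :=
    B.finite_toSet.subset extremePoints_convexHull_subset
  have hXV : X ⊆ hfin.toFinset := fun x hx => hfin.mem_toFinset.2 (h.mem_extremePoints hx)
  have hVB : hfin.toFinset ⊆ B := fun v hv =>
    extremePoints_convexHull_subset (hfin.mem_toFinset.1 hv)
  refine ⟨_, _, ?_, isSPolytope_of_saturated hB hfin.coe_toFinset, ?_⟩
  all_goals
    have := Finset.card_le_card hXV
    have := Finset.card_le_card hVB
    omega

theorem ncard_inter_convexHull_insert_sdiff_lt {A : Set E} (hfin : (S ∩ convexHull ℝ A).Finite)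
    {x₀ y : E} (hx₀S : x₀ ∈ S) (hx₀ : x₀ ∈ extremePoints ℝ (convexHull ℝ A))
    (hyA : y ∈ convexHull ℝ A) (hyx₀ : y ≠ x₀) :
    (S ∩ convexHull ℝ (insert y (A \ {x₀}))).ncard < (S ∩ convexHull ℝ A).ncard :=
  Set.ncard_lt_ncard ((Set.ssubset_iff_of_subset
    (inter_subset_inter_right _ (convexHull_insert_sdiff_subset hyA))).2
    ⟨x₀, ⟨hx₀S, extremePoints_subset hx₀⟩,
      fun hx => notMem_convexHull_insert_sdiff hx₀ hyA hyx₀ hx.2⟩) hfin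

variable [DecidableEq E]

theorem IsCritical.exchange (h : IsCritical S B X) {y x₀ : E}
    (hy : MinimalFor (· ∈ (S ∩ convexHull ℝ ↑B) \ ↑B) (missedCuts B X) y)
    (hx₀ : x₀ ∈ missedCuts B X y) :
    IsCritical S (insert y (B.erase x₀)) (insert y (X.erase x₀)) := by
  obtain ⟨⟨⟨hyS, hy_hull⟩, hyB⟩, hmin⟩ := hy
  have hcoe : (↑(insert y (B.erase x₀)) : Set E) = insert y (↑B \ {x₀}) := by
    rw [Finset.coe_insert, Finset.coe_erase]
  have hcoe_y : (↑(insert y (B.erase x₀)) : Set E) \ {y} = ↑B \ {x₀} := by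
    rw [hcoe, insert_sdiff_of_mem _ (mem_singleton y)]
    exact sdiff_singleton_eq_self fun hy => hyB hy.1
  have hsub : ∀ x, (↑(insert y (B.erase x₀)) : Set E) \ {x} ⊆ insert y (↑B \ {x}) := by
    intro x z ⟨hz, hzx⟩
    rw [hcoe] at hz
    rcases hz with rfl | ⟨hzB, -⟩
    exacts [mem_insert _ _, Or.inr ⟨hzB, hzx⟩]
  refine ⟨hcoe ▸ insert_subset hyS (sdiff_subset.trans h.subset),
    Finset.insert_subset_insert _ (Finset.erase_subset_erase _ h.cuts_subset), ?_, ?_⟩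
  · intro x hx
    rcases Finset.mem_insert.1 hx with rfl | hx
    · rw [hcoe_y]; exact hx₀.2
    · have hxX := Finset.mem_of_mem_erase hx
      have hyx : y ≠ x := by rintro rfl; exact hyB (h.cuts_subset hxX)
      exact fun hmem => notMem_convexHull_insert_sdiff (h.mem_extremePoints hxX) hy_hull hyx
        (convexHull_mono (hsub x) hmem)
  · intro s hsS hs
    have hs₀ : s ∈ convexHull ℝ (↑B \ {x₀}) :=
      hcoe_y ▸ hs y (Finset.mem_insert_self _ _)
    by_cases hsB : s ∈ B
    · have hsx₀ : s ≠ x₀ := by rintro rfl; exact h.notMem_convexHull s hx₀.1 hs₀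
      exact Finset.mem_insert_of_mem (Finset.mem_erase.2 ⟨hsx₀, hsB⟩)
    -- every cut point missing `s` also misses `y`, while `x₀` misses `y` but not `s`
    have hsy : missedCuts B X s ⊆ missedCuts B X y := by
      rintro x ⟨hxX, hsx⟩
      refine ⟨hxX, fun hyx => hsx ?_⟩
      have hxx₀ : x ≠ x₀ := by rintro rfl; exact hsx hs₀
      have hsx' := hs x (Finset.mem_insert_of_mem (Finset.mem_erase.2 ⟨hxx₀, hxX⟩))
      exact convexHull_min ((hsub x).trans (insert_subset hyx (subset_convexHull ℝ _)))
        (convex_convexHull ℝ _) hsx'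
    exact absurd hs₀ (hmin ⟨⟨hsS, convexHull_mono sdiff_subset hs₀⟩, hsB⟩ hsy hx₀).2

/-- Exchanging cut points for extra points of `S` in the hull strictly shrinks `S ∩ conv B`, until
`B` is saturated. -/
theorem IsCritical.exists_isSPolytope (h : IsCritical S B X)
    (hfin : (S ∩ convexHull ℝ (B : Set E)).Finite) :
    ∃ ℓ V, ℓ + X.card ≤ B.card ∧ IsSPolytope S ℓ V ∧ B.card ≤ V.card + ℓ := by
  induction hn : (S ∩ convexHull ℝ (B : Set E)).ncard using Nat.strong_induction_on
    generalizing B X with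
  | _ n ih =>
  by_cases hsat : S ∩ convexHull ℝ (B : Set E) ⊆ ↑B
  · exact h.exists_isSPolytope_of_saturated
      (hsat.antisymm (subset_inter h.subset (subset_convexHull ℝ _)))
  obtain ⟨y₀, hy₀⟩ := not_subset.1 hsat
  obtain ⟨y, hy⟩ := hfin.sdiff.exists_minimalFor (missedCuts B X) _ ⟨y₀, hy₀⟩
  obtain ⟨⟨⟨hyS, hy_hull⟩, hyB⟩, -⟩ := id hy
  obtain ⟨x₀, hx₀X, hy_miss⟩ : ∃ x₀ ∈ X, y ∉ convexHull ℝ (↑B \ {x₀}) := by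
    by_contra! hall
    exact hyB (h.mem_of_forall_mem_convexHull y hyS hall)
  have hx₀B := h.cuts_subset hx₀X
  have hyx₀ : y ≠ x₀ := by rintro rfl; exact hyB hx₀B
  have hlt := ncard_inter_convexHull_insert_sdiff_lt hfin (h.subset hx₀B)
    (h.mem_extremePoints hx₀X) hy_hull hyx₀
  rw [← Finset.coe_erase, ← Finset.coe_insert, hn] at hlt
  have hfin' : (S ∩ convexHull ℝ (↑(insert y (B.erase x₀)) : Set E)).Finite := by
    rw [Finset.coe_insert, Finset.coe_erase]
    exact hfin.subset (inter_subset_inter_right _ (convexHull_insert_sdiff_subset hy_hull))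
  obtain ⟨ℓ, V, hℓ, hV, hcard⟩ := ih _ hlt (h.exchange hy ⟨hx₀X, hy_miss⟩) hfin' rfl
  have hyXe : y ∉ X.erase x₀ := fun h' => hyB (h.cuts_subset (Finset.mem_of_mem_erase h'))
  have hyBe : y ∉ B.erase x₀ := fun h' => hyB (Finset.mem_of_mem_erase h')
  rw [Finset.card_insert_of_notMem hyXe, Finset.card_erase_of_mem hx₀X] at hℓ
  rw [Finset.card_insert_of_notMem hyBe, Finset.card_erase_of_mem hx₀B] at hℓ hcard
  have := Finset.card_pos.2 ⟨x₀, hx₀X⟩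
  have := Finset.card_le_card h.cuts_subset
  exact ⟨ℓ, V, by omega, hV, by omega⟩

theorem exists_isCritical_of_forall_exists_notMem {ι : Type*} {C : ι → Set E} {I : Finset ι}
    (hC : ∀ i ∈ I, Convex ℝ (C i)) {W : Finset E} (hW : ↑W = S ∩ ⋂ i ∈ I, C i)
    (hcrit : ∀ i ∈ I, ∃ x ∈ S, (∀ j ∈ I, j ≠ i → x ∈ C j) ∧ x ∉ C i) :
    ∃ X : Finset E, X.card = I.card ∧ Disjoint W X ∧ IsCritical S (W ∪ X) X := by
  choose! x hxS hxC hxN using hcrit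
  have hWC : ∀ i ∈ I, ∀ w ∈ W, w ∈ C i := fun i hi w hw =>
    mem_iInter₂.1 (hW ▸ Finset.mem_coe.2 hw : w ∈ S ∩ ⋂ i ∈ I, C i).2 i hi
  have hinj : Set.InjOn x I := fun i hi j hj hij => by
    by_contra hne
    exact hxN j hj (hij ▸ hxC i hi j hj (Ne.symm hne))
  have hhull : ∀ i ∈ I, convexHull ℝ (↑(W ∪ I.image x) \ {x i}) ⊆ C i := by
    intro i hi
    refine convexHull_min ?_ (hC i hi)
    rintro z ⟨hz, hzi⟩
    rcases Finset.mem_union.1 hz with hzW | hzX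
    · exact hWC i hi z hzW
    · obtain ⟨j, hj, rfl⟩ := Finset.mem_image.1 hzX
      exact hxC j hj i hi fun hji => hzi (hji ▸ rfl)
  refine ⟨I.image x, Finset.card_image_of_injOn hinj, ?_, ?_, Finset.subset_union_right, ?_, ?_⟩
  · refine Finset.disjoint_right.2 fun z hz hzW => ?_
    obtain ⟨i, hi, rfl⟩ := Finset.mem_image.1 hz
    exact hxN i hi (hWC i hi _ hzW)
  · intro z hz
    rcases Finset.mem_union.1 hz with hzW | hzX
    · exact (hW ▸ Finset.mem_coe.2 hzW : z ∈ S ∩ ⋂ i ∈ I, C i).1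
    · obtain ⟨i, hi, rfl⟩ := Finset.mem_image.1 hzX
      exact hxS i hi
  · intro z hz hzC
    obtain ⟨i, hi, rfl⟩ := Finset.mem_image.1 hz
    exact hxN i hi (hhull i hi hzC)
  · intro s hsS hs
    have hsC : s ∈ ⋂ i ∈ I, C i :=
      mem_iInter₂.2 fun i hi => hhull i hi (hs _ (Finset.mem_image_of_mem x hi))
    exact Finset.mem_union_left _ (Finset.mem_coe.1 (hW ▸ ⟨hsS, hsC⟩))

end Critical

section Helly

variable {n : ℕ} {S : Set (Fin n → ℝ)} {k t : ℕ}

theorem DiscreteSet.finite_inter_convexHull (hS : DiscreteSet S) {A : Set (Fin n → ℝ)}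
    (hA : A.Finite) : (S ∩ convexHull ℝ A).Finite :=
  hS _ (hA.isCompact_convexHull ℝ).isBounded

theorem HellyCond.exists_subfamily (hH : HellyCond S k t) {ι : Type*} (T : Finset ι)
    {D : ι → Set (Fin n → ℝ)} (hD : ∀ i ∈ T, Convex ℝ (D i))
    (hfin : (S ∩ ⋂ i ∈ T, D i).Finite) (hk : (S ∩ ⋂ i ∈ T, D i).ncard = k) :
    ∃ I ⊆ T, I.card ≤ t ∧ (S ∩ ⋂ i ∈ I, D i).Finite ∧
      (S ∩ ⋂ i ∈ I, D i).ncard = k := by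
  let e : Fin T.card ↪ ι := T.equivFin.symm.toEmbedding.trans (Function.Embedding.subtype _)
  have hinter : ∀ I : Finset (Fin T.card), ⋂ i ∈ I.map e, D i = ⋂ j ∈ I, D (e j) := by
    intro I; ext; simp
  have huniv : ⋂ i ∈ T, D i = ⋂ j, D (e j) := by
    ext z
    simp only [mem_iInter]
    refine ⟨fun h j => h _ (by simp [e]), fun h i hi => ?_⟩
    simpa [e] using h (T.equivFin ⟨i, hi⟩)
  obtain ⟨I, hIcard, hIfin, hIk⟩ := hH T.card (fun j => D (e j)) (fun j => hD _ (by simp [e]))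
    (huniv ▸ hfin) (huniv ▸ hk)
  refine ⟨I.map e, ?_, by rwa [Finset.card_map], by rwa [hinter], by rwa [hinter]⟩
  intro i hi
  obtain ⟨j, -, rfl⟩ := Finset.mem_map.1 hi
  simp [e]

/-- Cutting off the vertices in `T` one hull `conv (F \ {v})` at a time leaves exactly `k` points
of `S`, and no fewer than `|T|` of these hulls do so. -/
theorem HellyCond.card_le (hH : HellyCond S k t) {F T : Finset (Fin n → ℝ)}
    (hF : S ∩ convexHull ℝ ↑F = ↑F)
    (hT : ↑T ⊆ extremePoints ℝ (convexHull ℝ (F : Set (Fin n → ℝ))))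
    (hcard : F.card = k + T.card) : T.card ≤ t := by
  have hTF : T ⊆ F := fun v hv => extremePoints_convexHull_subset (hT hv)
  have hFS : (F : Set (Fin n → ℝ)) ⊆ S := hF ▸ inter_subset_left
  set D : (Fin n → ℝ) → Set (Fin n → ℝ) := fun v => convexHull ℝ (↑F \ {v})
  have hSD : ∀ v ∈ T, S ∩ D v ⊆ ↑F \ {v} := fun v hv z ⟨hzS, hz⟩ =>
    ⟨hF ▸ ⟨hzS, convexHull_mono sdiff_subset hz⟩,
      fun hzv => notMem_convexHull_sdiff_of_mem_extremePoints (hT hv) (hzv ▸ hz)⟩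
  have hsub : ∀ I : Finset (Fin n → ℝ), ↑(F \ I) ⊆ S ∩ ⋂ v ∈ I, D v := by
    intro I z hz
    rw [Finset.coe_sdiff] at hz
    exact ⟨hFS hz.1, mem_iInter₂.2 fun v hv =>
      subset_convexHull ℝ _ ⟨hz.1, fun hzv => hz.2 (hzv ▸ Finset.mem_coe.2 hv)⟩⟩
  by_contra! htT
  obtain ⟨v₀, hv₀⟩ : T.Nonempty := Finset.card_pos.1 (by omega)
  have hinter : S ∩ ⋂ v ∈ T, D v = ↑(F \ T) := by
    refine subset_antisymm (fun z ⟨hzS, hz⟩ => ?_) (hsub T)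
    rw [mem_iInter₂] at hz
    exact Finset.mem_coe.2 (Finset.mem_sdiff.2 ⟨(hSD v₀ hv₀ ⟨hzS, hz v₀ hv₀⟩).1,
      fun hzT => (hSD z hzT ⟨hzS, hz z hzT⟩).2 rfl⟩)
  obtain ⟨I, hIT, hIt, hIfin, hIk⟩ := hH.exists_subfamily T (fun v _ => convex_convexHull ℝ _)
    (hinter ▸ (F \ T).finite_toSet)
    (by rw [hinter, Set.ncard_coe_finset, Finset.card_sdiff_of_subset hTF]; omega)
  have := Set.ncard_le_ncard (hsub I) hIfin
  rw [hIk, Set.ncard_coe_finset, Finset.card_sdiff_of_subset (hIT.trans hTF)] at this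
  omega

theorem HellyCond.polytopeBound (hH : HellyCond S k t) : PolytopeBound S k t := by
  intro ℓ hℓ V hV
  obtain ⟨F, hF, hhull, hVF, hcard⟩ := hV.exists_saturated
  by_contra! hlt
  obtain ⟨T, hTV, hTcard⟩ :=
    Finset.exists_subset_card_eq (s := V) (n := V.card + ℓ - k) (by omega)
  have hT : ↑T ⊆ extremePoints ℝ (convexHull ℝ (F : Set (Fin n → ℝ))) := by
    rw [hhull, hV.2.1]; exact hTV
  have := hH.card_le hF hT (by omega)
  omega

/-- A subfamily of minimal size with exactly `k` common points of `S` is critical, and the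
polytope obtained from its cut points bounds its size. -/
theorem PolytopeBound.hellyCond (hS : DiscreteSet S) (hB : PolytopeBound S k t) :
    HellyCond S k t := by
  intro m C hC hfin hk
  set J : Set (Finset (Fin m)) :=
    {I | (S ∩ ⋂ i ∈ I, C i).Finite ∧ (S ∩ ⋂ i ∈ I, C i).ncard = k}
  have huniv : Finset.univ ∈ J := by simpa [J] using ⟨hfin, hk⟩
  obtain ⟨I, hI⟩ := J.toFinite.exists_minimalFor Finset.card J ⟨_, huniv⟩
  obtain ⟨hIfin, hIk⟩ := hI.1
  refine ⟨I, ?_, hIfin, hIk⟩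
  obtain ⟨X, hXcard, hWX, hX⟩ := exists_isCritical_of_forall_exists_notMem
    (fun i _ => hC i) hIfin.coe_toFinset (forall_exists_notMem_of_minimalFor hI)
  obtain ⟨ℓ, V, hℓ, hV, hcard⟩ :=
    hX.exists_isSPolytope (hS.finite_inter_convexHull (Finset.finite_toSet _))
  have hW : hIfin.toFinset.card = k := by
    rw [← Set.ncard_coe_finset, hIfin.coe_toFinset, hIk]
  rw [Finset.card_union_of_disjoint hWX, hW] at hℓ hcard
  have := hB ℓ (by omega) V hV
  omega

theorem hellyCond_iff_polytopeBound (hS : DiscreteSet S) :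
    HellyCond S k t ↔ PolytopeBound S k t :=
  ⟨HellyCond.polytopeBound, PolytopeBound.hellyCond hS⟩

end Helly

theorem EReal.add_natCast_sub_natCast (x : EReal) {ℓ k : ℕ} (h : ℓ ≤ k) :
    x + ℓ - k = x - ((k - ℓ : ℕ) : EReal) := by
  rw [← EReal.coe_coe_eq_natCast, ← EReal.coe_coe_eq_natCast, ← EReal.coe_coe_eq_natCast,
    Nat.cast_sub h]
  induction x using EReal.rec with
  | bot => simp
  | top => rw [EReal.top_add_coe, EReal.top_sub_coe, EReal.top_sub_coe]
  | coe r =>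
    rw [← EReal.coe_add, ← EReal.coe_sub, ← EReal.coe_sub]
    congr 1
    ring

section Main

variable {n : ℕ} {S : Set (Fin n → ℝ)} {k ℓ : ℕ}

theorem le_gER {V : Finset (Fin n → ℝ)} (hV : IsSPolytope S ℓ V) :
    (V.card : EReal) ≤ gER S ℓ :=
  le_sSup ⟨V, hV.1, hV.2.1, hV.2.2.1, hV.2.2.2, rfl⟩

theorem gER_le {m : ℕ} (h : ∀ V, IsSPolytope S ℓ V → V.card ≤ m) : gER S ℓ ≤ m := by
  refine sSup_le ?_
  rintro v ⟨V, h₁, h₂, h₃, h₄, rfl⟩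
  exact_mod_cast h V ⟨h₁, h₂, h₃, h₄⟩

theorem exists_isSPolytope_of_natCast_le_gER {m : ℕ} (h : (m : EReal) ≤ gER S ℓ) :
    ∃ V, IsSPolytope S ℓ V ∧ m ≤ V.card := by
  by_contra! hlt
  have hle : gER S ℓ ≤ (((m : ℝ) - 1 : ℝ) : EReal) := by
    refine sSup_le ?_
    rintro v ⟨V, h₁, h₂, h₃, h₄, rfl⟩
    have := hlt V ⟨h₁, h₂, h₃, h₄⟩
    rw [← EReal.coe_coe_eq_natCast, EReal.coe_le_coe_iff, le_sub_iff_add_le]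
    exact_mod_cast this
  have := h.trans hle
  rw [← EReal.coe_coe_eq_natCast, EReal.coe_le_coe_iff] at this
  linarith

noncomputable def gMax (S : Set (Fin n → ℝ)) (k : ℕ) : EReal :=
  sSup {v : EReal | ∃ ℓ : ℕ, ℓ ≤ k ∧
    v = gER S ℓ + (ℓ : EReal) - (k : EReal) ∧ 0 ≤ v}

theorem gMax_le {t : ℕ} (hB : PolytopeBound S k t) : gMax S k ≤ t := by
  refine sSup_le ?_
  rintro v ⟨ℓ, hℓ, rfl, -⟩
  rw [EReal.add_natCast_sub_natCast _ hℓ]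
  refine EReal.sub_le_of_le_add ?_
  have : gER S ℓ ≤ ((t + (k - ℓ) : ℕ) : EReal) :=
    gER_le fun V hV => by have := hB ℓ hℓ V hV; omega
  exact_mod_cast this

theorem le_gMax {V : Finset (Fin n → ℝ)} (hℓ : ℓ ≤ k) (hV : IsSPolytope S ℓ V)
    (hk : k ≤ V.card + ℓ) : ((V.card + ℓ - k : ℕ) : EReal) ≤ gMax S k := by
  have hge : ((V.card + ℓ - k : ℕ) : EReal) ≤ gER S ℓ + ℓ - k := by
    rw [EReal.add_natCast_sub_natCast _ hℓ,
      EReal.le_sub_iff_add_le (.inl (EReal.natCast_ne_bot _)) (.inl (EReal.natCast_ne_top _))]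
    have : ((V.card + ℓ - k : ℕ) : EReal) + ((k - ℓ : ℕ) : EReal) = V.card := by
      rw [← Nat.cast_add]; congr 1; omega
    exact this ▸ le_gER hV
  have h0 : (0 : EReal) ≤ ((V.card + ℓ - k : ℕ) : EReal) := by exact_mod_cast Nat.zero_le _
  exact hge.trans (le_sSup ⟨ℓ, hℓ, rfl, h0.trans hge⟩)

theorem gMax_eq_bot
    (h : ¬∃ C : Set (Fin n → ℝ), Convex ℝ C ∧ (S ∩ C).Finite ∧ (S ∩ C).ncard = k) :
    gMax S k = ⊥ := by
  refine sSup_eq_bot.2 ?_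
  rintro v ⟨ℓ, hℓ, rfl, hv⟩
  rw [EReal.add_natCast_sub_natCast _ hℓ, EReal.sub_nonneg (.inr (EReal.natCast_ne_top _))
    (.inr (EReal.natCast_ne_bot _))] at hv
  obtain ⟨V, hV, hle⟩ := exists_isSPolytope_of_natCast_le_gER hv
  exact (h (hV.exists_convex_ncard_eq (by omega))).elim

theorem zero_le_gMax {C : Set (Fin n → ℝ)} (hC : Convex ℝ C) (hfin : (S ∩ C).Finite)
    (hk : (S ∩ C).ncard = k) : 0 ≤ gMax S k := by
  obtain ⟨ℓ, V, hV, hcard⟩ := exists_isSPolytope_of_convex hC hfin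
  have hVk : V.card + ℓ = k := hcard.trans hk
  simpa [hVk] using le_gMax (k := k) (by omega) hV hVk.ge

theorem natCast_add_one_le_gMax {t : ℕ} (ht : ¬PolytopeBound S k t) :
    ((t + 1 : ℕ) : EReal) ≤ gMax S k := by
  simp only [PolytopeBound, not_forall, not_le, exists_prop] at ht
  obtain ⟨ℓ, hℓ, V, hV, hlt⟩ := ht
  exact (Nat.cast_le.2 (by omega)).trans (le_gMax hℓ hV (by omega))

theorem gMax_eq_top (h : ∀ t, ¬PolytopeBound S k t) : gMax S k = ⊤ := by
  refine (EReal.eq_top_iff_forall_lt _).2 fun y => ?_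
  obtain ⟨t, ht⟩ := exists_nat_gt y
  exact lt_of_lt_of_le (by exact_mod_cast ht.trans (by simp)) (natCast_add_one_le_gMax (h t))

end Main

/-- Let `S ⊆ ℝ^n` be discrete and `k ∈ ℕ`. Then
`c(S,k) = max { g(S,ℓ) + ℓ - k : ℓ ∈ {0,...,k}, g(S,ℓ) + ℓ - k ≥ 0 }`
(the maximum of the empty set being `-∞`). -/
theorem stmt4 (n : ℕ) (S : Set (Fin n → ℝ)) (hS : DiscreteSet S) (k : ℕ) :
    cER S k = sSup {v : EReal | ∃ ℓ : ℕ, ℓ ≤ k ∧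
      v = gER S ℓ + (ℓ : EReal) - (k : EReal) ∧ 0 ≤ v} := by
  change cER S k = gMax S k
  unfold cER
  by_cases hC : ∃ C : Set (Fin n → ℝ), Convex ℝ C ∧ (S ∩ C).Finite ∧
    (S ∩ C).ncard = k
  swap
  · rw [if_pos hC, gMax_eq_bot hC]
  obtain ⟨C, hCconv, hfin, hk⟩ := id hC
  rw [if_neg (not_not_intro hC)]
  have hset : {t | HellyCond S k t} = {t | PolytopeBound S k t} :=
    Set.ext fun _ => hellyCond_iff_polytopeBound hS
  split_ifs with hB
  · rw [hset]
    have hB' : {t | PolytopeBound S k t}.Nonempty := hset ▸ hB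
    refine le_antisymm ?_ (gMax_le (Nat.sInf_mem hB'))
    rcases Nat.eq_zero_or_eq_succ_pred (sInf {t | PolytopeBound S k t}) with h | h
    · rw [h]
      exact_mod_cast zero_le_gMax hCconv hfin hk
    · rw [h]
      exact natCast_add_one_le_gMax
        (Nat.notMem_of_lt_sInf (s := {t | PolytopeBound S k t}) (by omega))
  · exact (gMax_eq_top fun t ht => hB ⟨t, (hellyCond_iff_polytopeBound hS).2 ht⟩).symm
end

section
/- Let S ⊆ R^n be discrete with |S| ≥ 2, and k ∈ N₀. Then c(S,k) ≤ ⌊(k+1)/2⌋·(h(S) - 2) + h(S), where h(S) = c(S,0) is the Helly number of S. -/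
/-!
Pick, by Baire's theorem, linear functionals `u` and `w` such that `u` is injective on the
countable set `S` and `x ↦ (u x, w x)` maps non-collinear triples of `S` to non-collinear
triples. Let `P = S ∩ ⋂ Cᵢ` have `k ≥ 1` points and let `v` be its `u`-least point. In the
`(u, w)`-plane, the point `q` of steepest slope from `v` spans an edge `[v, q]` of the image
of `P`, with a supporting functional `f ≤ c` on `P`. The lexicographic half-spaces
`{f < c} ∪ {f = c, u < u v}` and `{f > c} ∪ {f = c, u > u q}` are convex, cover `S` outside
`[v, q] ⊆ conv P ⊆ ⋂ Cᵢ`, and contain at most `k - 2` points of `P`, respectively none.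
Adding either one to the family lowers the count, so a Helly certificate for the enlarged
family must contain it and uses one set `Cᵢ` fewer than its size. Hence
`c(S, k) ≤ c(S, k - 2) + h - 2`, which gives the bound.
-/

open Set

section Generic

variable {E : Type*} [NormedAddCommGroup E] [NormedSpace ℝ E]

theorem exists_strongDual_forall_ne_zero {Z : Set E} (hZ : Z.Countable) (h0 : 0 ∉ Z) :
    ∃ ℓ : StrongDual ℝ E, ∀ z ∈ Z, ℓ z ≠ 0 := by
  by_contra! hcover
  have : Countable Z := hZ.to_subtype
  have hK : ⋃ z : Z, {ℓ : StrongDual ℝ E | ℓ z = 0} = univ := eq_univ_of_forall fun ℓ => by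
    obtain ⟨z, hz, hℓz⟩ := hcover ℓ
    exact mem_iUnion.mpr ⟨⟨z, hz⟩, hℓz⟩
  obtain ⟨⟨z, hz⟩, hint⟩ := nonempty_interior_of_iUnion_of_closed
    (fun z : Z => isClosed_eq (continuous_eval_const (z : E)) continuous_const) hK
  have hz0 : z ≠ 0 := ne_of_mem_of_not_mem hz h0
  obtain ⟨g, -, hg⟩ := exists_dual_vector ℝ z (norm_ne_zero_iff.mpr hz0)
  have : g ∈ LinearMap.ker (ContinuousLinearMap.apply ℝ ℝ z : StrongDual ℝ E →ₗ[ℝ] ℝ) :=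
    Submodule.eq_top_of_nonempty_interior' (LinearMap.ker (ContinuousLinearMap.apply ℝ ℝ z :
      StrongDual ℝ E →ₗ[ℝ] ℝ)) hint ▸ Submodule.mem_top
  simp [hg, hz0] at this

theorem exists_strongDual_injOn {S : Set E} (hS : S.Countable) :
    ∃ u : StrongDual ℝ E, InjOn u S := by
  obtain ⟨u, hu⟩ := exists_strongDual_forall_ne_zero
    (((hS.prod hS).mono sdiff_subset).image fun p : E × E => p.1 - p.2)
    (by rintro ⟨p, ⟨-, hp⟩, h⟩; exact hp (sub_eq_zero.mp h))
  refine ⟨u, fun x hx y hy hxy => by_contra fun hne => ?_⟩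
  exact hu _ ⟨(x, y), ⟨⟨hx, hy⟩, hne⟩, rfl⟩ (by simp [hxy])

theorem exists_strongDual_collinear {S : Set E} (hS : S.Countable) (u : E →ₗ[ℝ] ℝ) :
    ∃ w : StrongDual ℝ E, ∀ v ∈ S, ∀ q ∈ S, ∀ s ∈ S, u v ≠ u q →
      (w s - w v) * (u q - u v) = (w q - w v) * (u s - u v) → ∃ τ : ℝ, s = v + τ • (q - v) := by
  set T := {p : E × E × E | p ∈ S ×ˢ S ×ˢ S ∧ u p.1 ≠ u p.2.1 ∧
    ¬∃ τ : ℝ, p.2.2 = p.1 + τ • (p.2.1 - p.1)}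
  obtain ⟨w, hw⟩ := exists_strongDual_forall_ne_zero
    (((hS.prod (hS.prod hS)).mono fun p (hp : p ∈ T) => hp.1).image fun p : E × E × E =>
      (u p.2.1 - u p.1) • (p.2.2 - p.1) - (u p.2.2 - u p.1) • (p.2.1 - p.1))
    (by
      rintro ⟨⟨v, q, s⟩, ⟨-, huvq, hline⟩, h⟩
      have hne : u q - u v ≠ 0 := sub_ne_zero.mpr (Ne.symm huvq)
      refine hline ⟨(u q - u v)⁻¹ * (u s - u v), ?_⟩
      rw [sub_eq_zero] at h
      rw [mul_smul, ← h, inv_smul_smul₀ hne, add_sub_cancel])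
  refine ⟨w, fun v hv q hq s hs huvq hcol => by_contra fun hline => ?_⟩
  refine hw _ ⟨(v, q, s), ⟨⟨hv, hq, hs⟩, huvq, hline⟩, rfl⟩ ?_
  simp only [map_sub, map_smul, smul_eq_mul]
  linear_combination hcol

end Generic

section Cut

variable {E : Type*} [AddCommGroup E] [Module ℝ E]

theorem convex_lexHalfSpace_lt (f g : E →ₗ[ℝ] ℝ) (c d : ℝ) :
    Convex ℝ {x | f x < c ∨ f x = c ∧ g x < d} := by
  refine convex_iff_forall_pos.mpr fun x hx y hy a b ha hb hab => ?_
  simp only [mem_ofPred_eq, map_add, map_smul, smul_eq_mul] at hx hy ⊢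
  have hc : a * c + b * c = c := by rw [← add_mul, hab, one_mul]
  have hd : a * d + b * d = d := by rw [← add_mul, hab, one_mul]
  rcases hx with hx | ⟨hx, hx'⟩ <;> rcases hy with hy | ⟨hy, hy'⟩
  · left; nlinarith
  · left; rw [hy]; nlinarith
  · left; rw [hx]; nlinarith
  · right; rw [hx, hy]; exact ⟨hc, by nlinarith⟩

theorem convex_lexHalfSpace_gt (f g : E →ₗ[ℝ] ℝ) (c d : ℝ) :
    Convex ℝ {x | c < f x ∨ f x = c ∧ d < g x} := by
  convert convex_lexHalfSpace_lt (-f) (-g) (-c) (-d) using 3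
  simp [neg_inj]

theorem mem_segment_of_eq_add_smul (u : E →ₗ[ℝ] ℝ) {v q s : E} {τ : ℝ} (hs : s = v + τ • (q - v))
    (hvq : u v < u q) (hvs : u v ≤ u s) (hsq : u s ≤ u q) : s ∈ segment ℝ v q := by
  have hus : u s - u v = τ * (u q - u v) := by simp [hs]
  refine segment_eq_image' ℝ v q ▸ ⟨τ, ⟨?_, ?_⟩, hs.symm⟩ <;> nlinarith

theorem lexHalfSpaces_cover_of_supporting_edge {S P : Set E} (f u : E →ₗ[ℝ] ℝ) {c : ℝ} {v q : E}
    (hv : v ∈ P) (hq : q ∈ P) (hfP : ∀ p ∈ P, f p ≤ c) (hfv : f v = c) (hfq : f q = c)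
    (huP : ∀ p ∈ P, f p = c → u v ≤ u p ∧ u p ≤ u q)
    (hseg : ∀ s ∈ S, f s = c → u v ≤ u s → u s ≤ u q → s ∈ segment ℝ v q) :
    P ∩ {x | f x < c ∨ f x = c ∧ u x < u v} ⊆ P \ {v, q} ∧
      P ∩ {x | c < f x ∨ f x = c ∧ u q < u x} = ∅ ∧
      S ⊆ {x | f x < c ∨ f x = c ∧ u x < u v} ∪ {x | c < f x ∨ f x = c ∧ u q < u x} ∪
        convexHull ℝ P := by
  have huvq := huP q hq hfq
  refine ⟨?_, ?_, fun s hs => ?_⟩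
  · rintro p ⟨hp, hpX⟩
    refine ⟨hp, ?_⟩
    rintro (rfl | rfl)
    · simp [hfv] at hpX
    · simp only [mem_ofPred_eq, hfq, lt_self_iff_false, true_and, false_or] at hpX
      linarith [huvq.1]
  · refine eq_empty_of_forall_notMem fun p ⟨hp, hpY⟩ => ?_
    rcases hpY with h | ⟨h, h'⟩
    · linarith [hfP p hp]
    · linarith [(huP p hp h).2]
  · rcases lt_trichotomy (f s) c with h | h | h
    · exact Or.inl (Or.inl (Or.inl h))
    · rcases lt_or_ge (u s) (u v) with h' | h'
      · exact Or.inl (Or.inl (Or.inr ⟨h, h'⟩))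
      rcases lt_or_ge (u q) (u s) with h'' | h''
      · exact Or.inl (Or.inr (Or.inr ⟨h, h''⟩))
      exact Or.inr (segment_subset_convexHull hv hq (hseg s hs h h' h''))
    · exact Or.inl (Or.inr (Or.inl h))

/-- Among the points of `P` other than its `u`-minimum `v`, the one maximizing the slope
`(w p - w v) / (u p - u v)`, ties broken by `u`, spans with `v` an edge supported by
`f = w - slope • u`. -/
theorem exists_supporting_edge (u w : E →ₗ[ℝ] ℝ) {P : Set E} (hP : P.Finite) {v : E} (hv : v ∈ P)
    (hvlt : ∀ p ∈ P, p ≠ v → u v < u p) (hne : (P \ {v}).Nonempty) :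
    ∃ q ∈ P, u v < u q ∧ ∃ f : E →ₗ[ℝ] ℝ, (∀ p ∈ P, f p ≤ f v) ∧ f q = f v ∧
      (∀ p ∈ P, f p = f v → u p ≤ u q) ∧
      ∀ s, f s = f v → (w s - w v) * (u q - u v) = (w q - w v) * (u s - u v) := by
  set σ : E → ℝ := fun p => (w p - w v) / (u p - u v)
  obtain ⟨q, ⟨hq, hqv⟩, hmax⟩ := (P \ {v}).exists_max_image (fun p => toLex (σ p, u p))
    hP.sdiff hne
  have hvq := hvlt q hq hqv
  have hσq : w q - w v = σ q * (u q - u v) := (div_mul_cancel₀ _ (sub_pos.mpr hvq).ne').symm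
  have hmax' : ∀ p ∈ P, p ≠ v → σ p < σ q ∨ σ p = σ q ∧ u p ≤ u q := fun p hp hpv =>
    Prod.Lex.toLex_le_toLex.mp (hmax p ⟨hp, hpv⟩)
  have hσp : ∀ p ∈ P, p ≠ v → w p - w v = σ p * (u p - u v) := fun p hp hpv =>
    (div_mul_cancel₀ _ (sub_pos.mpr (hvlt p hp hpv)).ne').symm
  refine ⟨q, hq, hvq, w - σ q • u, fun p hp => ?_, ?_, fun p hp hfp => ?_, fun s hfs => ?_⟩ <;>
    simp only [LinearMap.sub_apply, LinearMap.smul_apply, smul_eq_mul] at *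
  · rcases eq_or_ne p v with rfl | hpv
    · exact le_rfl
    have := hvlt p hp hpv
    rcases hmax' p hp hpv with h | ⟨h, -⟩ <;> nlinarith [hσp p hp hpv]
  · linarith
  · rcases eq_or_ne p v with rfl | hpv
    · exact hvq.le
    have hσ : σ p = σ q := mul_right_cancel₀ (sub_pos.mpr (hvlt p hp hpv)).ne'
      (by linear_combination -(hσp p hp hpv) + hfp)
    rcases hmax' p hp hpv with h | ⟨-, h⟩
    · exact absurd hσ h.ne
    · exact h
  · linear_combination (u q - u v) * hfs + (-(u s - u v)) * hσq

theorem exists_convex_cut_of_generic {S P : Set E} (u w : E →ₗ[ℝ] ℝ) (hu : InjOn u S)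
    (hw : ∀ v ∈ S, ∀ q ∈ S, ∀ s ∈ S, u v ≠ u q →
      (w s - w v) * (u q - u v) = (w q - w v) * (u s - u v) → ∃ τ : ℝ, s = v + τ • (q - v))
    (hPS : P ⊆ S) (hP : P.Finite) (hne : P.Nonempty) :
    ∃ X Y : Set E, Convex ℝ X ∧ Convex ℝ Y ∧ (P ∩ X).ncard ≤ P.ncard - 2 ∧ P ∩ Y = ∅ ∧
      S ⊆ X ∪ Y ∪ convexHull ℝ P := by
  obtain ⟨v, hv, hvmin⟩ := P.exists_min_image u hP hne
  have hvlt : ∀ p ∈ P, p ≠ v → u v < u p := fun p hp hpv =>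
    (hvmin p hp).lt_of_ne fun h => hpv (hu (hPS hp) (hPS hv) h.symm)
  rcases (P \ {v}).eq_empty_or_nonempty with hPv | hPv
  · have hPv' : ∀ p ∈ P, p = v := fun p hp => by_contra fun hpv => hPv.subset ⟨hp, hpv⟩
    obtain ⟨hX, hY, hcover⟩ := lexHalfSpaces_cover_of_supporting_edge (S := S) 0 u hv hv (c := 0)
      (by simp) rfl rfl (fun p hp _ => by simp [hPv' p hp])
      (fun s hs _ h₁ h₂ => by simp [hu hs (hPS hv) (le_antisymm h₂ h₁)])
    refine ⟨_, _, convex_lexHalfSpace_lt 0 u 0 (u v), convex_lexHalfSpace_gt 0 u 0 (u v), ?_, hY, hcover⟩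
    rw [pair_eq_singleton, hPv, subset_empty_iff] at hX
    rw [hX, ncard_empty]
    exact Nat.zero_le _
  · obtain ⟨q, hq, hvq, f, hfP, hfq, hfu, hfcol⟩ := exists_supporting_edge u w hP hv hvlt hPv
    obtain ⟨hX, hY, hcover⟩ := lexHalfSpaces_cover_of_supporting_edge f u hv hq hfP rfl hfq
      (fun p hp hfp => ⟨hvmin p hp, hfu p hp hfp⟩)
      (fun s hs hfs h₁ h₂ => by
        obtain ⟨τ, hτ⟩ := hw v (hPS hv) q (hPS hq) s hs hvq.ne (hfcol s hfs)
        exact mem_segment_of_eq_add_smul u hτ hvq h₁ h₂)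
    refine ⟨_, _, convex_lexHalfSpace_lt f u _ _, convex_lexHalfSpace_gt f u _ _, ?_, hY, hcover⟩
    have hqv : v ≠ q := fun h => hvq.ne (congrArg u h)
    calc _ ≤ (P \ {v, q}).ncard := ncard_le_ncard hX hP.sdiff
      _ = P.ncard - 2 := by rw [ncard_sdiff (pair_subset hv hq), ncard_pair hqv]

end Cut

theorem exists_convex_cut {E : Type*} [NormedAddCommGroup E] [NormedSpace ℝ E] {S P : Set E}
    (hS : S.Countable) (hPS : P ⊆ S) (hP : P.Finite) (hne : P.Nonempty) :
    ∃ X Y : Set E, Convex ℝ X ∧ Convex ℝ Y ∧ (P ∩ X).ncard ≤ P.ncard - 2 ∧ P ∩ Y = ∅ ∧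
      S ⊆ X ∪ Y ∪ convexHull ℝ P := by
  obtain ⟨u, hu⟩ := exists_strongDual_injOn hS
  obtain ⟨w, hw⟩ := exists_strongDual_collinear hS (u : E →ₗ[ℝ] ℝ)
  exact exists_convex_cut_of_generic (u : E →ₗ[ℝ] ℝ) (w : E →ₗ[ℝ] ℝ) hu hw hPS hP hne

theorem inter_biInter_union_eq {ι E : Type*} [AddCommGroup E] [Module ℝ E] [DecidableEq ι]
    {S X Y : Set E} {C : ι → Set E} {I₀ I₁ : Finset ι} (hC : ∀ i, Convex ℝ (C i))
    (hcover : S ⊆ X ∪ Y ∪ convexHull ℝ (S ∩ ⋂ i, C i))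
    (hX : S ∩ X ∩ ⋂ i ∈ I₀, C i ⊆ ⋂ i, C i) (hY : S ∩ Y ∩ ⋂ i ∈ I₁, C i ⊆ ⋂ i, C i) :
    S ∩ ⋂ i ∈ I₀ ∪ I₁, C i = S ∩ ⋂ i, C i := by
  refine Subset.antisymm (fun z ⟨hzS, hz⟩ => ⟨hzS, ?_⟩) fun z ⟨hzS, hz⟩ =>
    ⟨hzS, iInter_subset_iInter₂ _ _ hz⟩
  rw [Finset.set_biInter_inter] at hz
  rcases hcover hzS with (hzX | hzY) | hzP
  · exact hX ⟨⟨hzS, hzX⟩, hz.1⟩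
  · exact hY ⟨⟨hzS, hzY⟩, hz.2⟩
  · exact convexHull_min inter_subset_right (convex_iInter hC) hzP

section Helly

variable {n : ℕ}

theorem DiscreteSet.countable {S : Set (Fin n → ℝ)} (hS : DiscreteSet S) : S.Countable := by
  refine (countable_iUnion fun r : ℕ =>
    (hS _ (Metric.isBounded_closedBall (x := 0) (r := r))).countable).mono fun x hx => ?_
  exact mem_iUnion.mpr ⟨⌈dist x 0⌉₊, hx, Metric.mem_closedBall.mpr (Nat.le_ceil _)⟩

theorem HellyCond.two_le {S : Set (Fin n → ℝ)} {t : ℕ} (hcard : ∃ x ∈ S, ∃ y ∈ S, x ≠ y)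
    (ht : HellyCond S 0 t) : 2 ≤ t := by
  obtain ⟨x, hx, y, hy, hxy⟩ := hcard
  have hempty : S ∩ ⋂ i, ![{x}, {y}] i = ∅ := eq_empty_of_forall_notMem fun z ⟨_, hz⟩ =>
    hxy ((mem_iInter.mp hz 0).symm.trans (mem_iInter.mp hz 1))
  obtain ⟨I, hIt, hIfin, hI⟩ := ht 2 ![{x}, {y}] (fun i => by fin_cases i <;> exact convex_singleton _)
    (hempty ▸ finite_empty) (hempty ▸ ncard_empty _)
  by_contra! ht2
  have hI1 : ∀ i ∈ I, ∀ j ∈ I, i = j := Finset.card_le_one.mp (by omega)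
  have hIe := eq_empty_iff_forall_notMem.mp ((ncard_eq_zero hIfin).mp hI)
  by_cases h0 : (0 : Fin 2) ∈ I
  · refine hIe x ⟨hx, mem_iInter₂.mpr fun i hi => ?_⟩
    rw [hI1 i hi 0 h0]
    rfl
  · refine hIe y ⟨hy, mem_iInter₂.mpr fun i hi => ?_⟩
    fin_cases i
    · exact absurd hi h0
    · rfl

/-- Adding `X` to the family drops the count below `k`, so every certificate for the enlarged
family must use `X`. -/
theorem HellyCond.exists_subfamily_inter_subset {S X : Set (Fin n → ℝ)} {k t m : ℕ}
    {C : Fin m → Set (Fin n → ℝ)} (hH : HellyCond S k t) (hC : ∀ i, Convex ℝ (C i))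
    (hX : Convex ℝ X) (hfin : (S ∩ ⋂ i, C i).Finite) (hk : ((S ∩ ⋂ i, C i) ∩ X).ncard = k)
    (hlt : k < (S ∩ ⋂ i, C i).ncard) :
    ∃ I : Finset (Fin m), I.card + 1 ≤ t ∧ S ∩ X ∩ ⋂ i ∈ I, C i ⊆ ⋂ i, C i := by
  classical
  have hmem : ∀ (J : Finset (Fin (m + 1))) z, z ∈ ⋂ i ∈ J, (Fin.cons X C : Fin (m + 1) → _) i ↔
      (0 ∈ J → z ∈ X) ∧ z ∈ ⋂ j ∈ Finset.univ.filter (fun j : Fin m => j.succ ∈ J), C j := by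
    intro J z
    simp [Fin.forall_fin_succ]
  have hall : S ∩ ⋂ i, (Fin.cons X C : Fin (m + 1) → _) i = (S ∩ ⋂ i, C i) ∩ X := by
    ext z
    simp [Fin.forall_fin_succ]
    tauto
  obtain ⟨J, hJt, hJfin, hJk⟩ := hH (m + 1) (Fin.cons X C) (Fin.cases hX hC)
    (hall ▸ hfin.subset inter_subset_left) (hall ▸ hk)
  have h0 : 0 ∈ J := by
    by_contra h0
    have hsub : S ∩ ⋂ i, C i ⊆ S ∩ ⋂ i ∈ J, (Fin.cons X C : Fin (m + 1) → _) i :=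
      fun z ⟨hzS, hz⟩ => ⟨hzS, (hmem J z).mpr ⟨fun h => absurd h h0, iInter_subset_iInter₂ _ _ hz⟩⟩
    have := ncard_le_ncard hsub hJfin
    omega
  set I := Finset.univ.filter (fun j : Fin m => j.succ ∈ J)
  have hJI : S ∩ ⋂ i ∈ J, (Fin.cons X C : Fin (m + 1) → _) i = S ∩ X ∩ ⋂ i ∈ I, C i := by
    ext z
    simp only [mem_inter_iff, hmem, h0, true_imp_iff, and_assoc, I]
  have hcard : I.card + 1 = J.card := by
    have := Fin.card_filter_univ_succ (· ∈ J)
    rwa [if_pos h0, Finset.filter_univ_mem, eq_comm] at this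
  refine ⟨I, hcard ▸ hJt, fun z hz => ?_⟩
  have heq : (S ∩ ⋂ i, C i) ∩ X = S ∩ X ∩ ⋂ i ∈ I, C i :=
    eq_of_subset_of_ncard_le (fun z ⟨⟨hzS, hz⟩, hzX⟩ => ⟨⟨hzS, hzX⟩, iInter_subset_iInter₂ _ _ hz⟩)
      (by rw [← hJI, hJk, hk]) (hJI ▸ hJfin)
  exact (heq ▸ hz).1.2

end Helly

/-- Let `S ⊆ ℝ^n` be discrete with `|S| ≥ 2` and `k ∈ ℕ`. If `h = h(S) =
c(S,0)` is the (finite) Helly number of `S`, then `c(S,k) ≤ ⌊(k+1)/2⌋·(h-2) + h`,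
i.e. `t = ⌊(k+1)/2⌋·(h-2) + h` satisfies the Helly condition for `k`. -/
theorem stmt6 (n k : ℕ) (S : Set (Fin n → ℝ)) (hS : DiscreteSet S)
    (hcard : ∃ x ∈ S, ∃ y ∈ S, x ≠ y)
    (h : ℕ) (hh : IsLeast {t : ℕ | HellyCond S 0 t} h) :
    HellyCond S k ((k + 1) / 2 * (h - 2) + h) := by
  have hh2 : 2 ≤ h := hh.1.two_le hcard
  induction k using Nat.strong_induction_on with
  | _ k IH =>
  rcases Nat.eq_zero_or_pos k with rfl | hk0
  · simpa using hh.1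
  intro m C hC hfin hk
  obtain ⟨X, Y, hX, hY, hPX, hPY, hcover⟩ := exists_convex_cut hS.countable inter_subset_left hfin
    (nonempty_of_ncard_ne_zero (by omega))
  obtain ⟨I₀, hI₀, hXI₀⟩ :=
    (IH _ (by omega)).exists_subfamily_inter_subset hC hX hfin rfl (by omega)
  obtain ⟨I₁, hI₁, hYI₁⟩ :=
    hh.1.exists_subfamily_inter_subset hC hY hfin (by rw [hPY, ncard_empty]) (by omega)
  have hI := inter_biInter_union_eq hC hcover hXI₀ hYI₁
  refine ⟨I₀ ∪ I₁, ?_, hI ▸ hfin, hI ▸ hk⟩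
  have hunion := Finset.card_union_le I₀ I₁
  have hstep : ((((S ∩ ⋂ i, C i) ∩ X).ncard + 1) / 2 + 1) * (h - 2) ≤ (k + 1) / 2 * (h - 2) :=
    Nat.mul_le_mul_right _ (by omega)
  rw [add_mul, one_mul] at hstep
  omega
end

section
/- Let S ⊆ R^n be discrete, P a polytope with vertices in S such that Q := conv(S ∩ P \ vert(P)) is nonempty and dim(Q) ≤ 1. Then |vert(P)| ≤ 2·h(S) - 2. -/
open Module Finset

instance Prod.Lex.instPosSMulStrictMono {𝕜 α β : Type*} [Semiring 𝕜] [PartialOrder 𝕜] [AddCommMonoid α] [AddCommMonoid β]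
    [PartialOrder α] [Preorder β] [Module 𝕜 α] [Module 𝕜 β]
    [PosSMulStrictMono 𝕜 α] [PosSMulStrictMono 𝕜 β] : PosSMulStrictMono 𝕜 (α ×ₗ β) where
  smul_lt_smul_of_pos_left c hc a b hab := by
    obtain h | ⟨h₁, h₂⟩ := Prod.Lex.lt_iff.mp hab
    · exact Prod.Lex.lt_iff.mpr (Or.inl (smul_lt_smul_of_pos_left h hc))
    · exact Prod.Lex.lt_iff.mpr (Or.inr ⟨congrArg (c • ·) h₁, smul_lt_smul_of_pos_left h₂ hc⟩)

namespace Module.Dual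
variable {K E : Type*} [Field K] [Infinite K] [AddCommGroup E] [Module K E]

theorem exists_forall_ne_zero_of_notMem (D : Submodule K E) {W : Set E} (hW : W.Finite)
    (hWD : ∀ w ∈ W, w ∉ D) : ∃ f : Dual K E, D ≤ LinearMap.ker f ∧ ∀ w ∈ W, f w ≠ 0 := by
  have := hW.to_subtype
  obtain ⟨f, hfD, hf⟩ := Dual.exists_forall_mem_ne_zero_of_forall_exists D.dualAnnihilator
    (fun w : W ↦ Dual.eval K E w) fun w ↦ by
      obtain ⟨f, hfw, hfD⟩ := D.exists_dual_map_eq_bot_of_notMem (hWD w w.2) inferInstance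
      exact ⟨f, (Submodule.mem_dualAnnihilator f).mpr (LinearMap.le_ker_iff_map.mpr hfD), hfw⟩
  exact ⟨f, fun x hx ↦ (Submodule.mem_dualAnnihilator f).mp hfD x hx, fun w hw ↦ hf ⟨w, hw⟩⟩

theorem exists_eq_imp_sub_mem (D : Submodule K E) {T : Set E} (hT : T.Finite) :
    ∃ f : Dual K E, D ≤ LinearMap.ker f ∧ ∀ a ∈ T, ∀ b ∈ T, f a = f b → a - b ∈ D := by
  obtain ⟨f, hfD, hf⟩ := exists_forall_ne_zero_of_notMem D ((hT.image2 (· - ·) hT).sdiff (t := D))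
    fun w hw ↦ hw.2
  refine ⟨f, hfD, fun a ha b hb hab ↦ ?_⟩
  by_contra hD
  exact hf (a - b) ⟨Set.mem_image2_of_mem ha hb, hD⟩ (by rw [map_sub, hab, sub_self])

theorem exists_injOn {T : Set E} (hT : T.Finite) :
    ∃ f : Dual K E, Set.InjOn f T := by
  obtain ⟨f, -, hf⟩ := exists_eq_imp_sub_mem (⊥ : Submodule K E) hT
  exact ⟨f, fun a ha b hb hab ↦ sub_eq_zero.mp (hf a ha b hb hab)⟩

end Module.Dual

section
variable {𝕜 E : Type*} [Field 𝕜] [LinearOrder 𝕜] [IsStrictOrderedRing 𝕜] [AddCommGroup E]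
  [Module 𝕜 E]

theorem mem_extremePoints_convexHull_insert {x : E} {t : Set E} (hx : x ∉ convexHull 𝕜 t) :
    x ∈ (convexHull 𝕜 (insert x t)).extremePoints 𝕜 := by
  rcases t.eq_empty_or_nonempty with rfl | ht
  · simp
  refine mem_extremePoints.mpr ⟨subset_convexHull 𝕜 _ (Set.mem_insert x t), ?_⟩
  simp only [convexHull_insert ht, convexJoin_singleton_left, Set.mem_iUnion₂]
  rintro - ⟨c, hc, α, s, hα, hs, hαs, rfl⟩ - ⟨c', hc', β, r, hβ, hr, hβr, rfl⟩
    ⟨a, b, ha, hb, hab, hxyz⟩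
  have key : (a * s + b * r) • x = (a * s) • c + (b * r) • c' := by
    linear_combination (norm := module) -hxyz + (a * hαs + b * hβr + hab) • x
  rcases (add_nonneg (mul_nonneg ha.le hs) (mul_nonneg hb.le hr)).eq_or_lt with h0 | hpos
  · obtain rfl : s = 0 := by nlinarith
    obtain rfl : r = 0 := by nlinarith
    obtain rfl : α = 1 := by linarith
    obtain rfl : β = 1 := by linarith
    simp
  · obtain ⟨z, hz, hzx⟩ := (convex_convexHull 𝕜 t).exists_mem_add_smul_eq hc hc'
      (mul_nonneg ha.le hs) (mul_nonneg hb.le hr)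
    exact absurd (smul_right_injective E hpos.ne' (hzx.trans key.symm) ▸ hz) hx

theorem ConvexIndependent.extremePoints_convexHull_eq {s : Set E}
    (hs : ConvexIndependent 𝕜 ((↑) : s → E)) : (convexHull 𝕜 s).extremePoints 𝕜 = s := by
  refine extremePoints_convexHull_subset.antisymm fun x hxs ↦ ?_
  have := mem_extremePoints_convexHull_insert
    (convexIndependent_set_iff_notMem_convexHull_sdiff.mp hs x hxs)
  rwa [Set.insert_sdiff_singleton, Set.insert_eq_of_mem hxs] at this

theorem mem_openSegment_of_sub_mem_span {u v w : E} (g : E →ₗ[𝕜] 𝕜)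
    (hv : v - u ∈ 𝕜 ∙ (w - u)) (huv : g u < g v) (hvw : g v < g w) :
    v ∈ openSegment 𝕜 u w := by
  obtain ⟨t, ht⟩ := Submodule.mem_span_singleton.mp hv
  have hg : t * (g w - g u) = g v - g u := by simpa using congrArg g ht
  rw [openSegment_eq_image']
  exact ⟨t, ⟨by nlinarith, by nlinarith⟩, by simp only [ht]; abel⟩

end

section
variable {E β : Type*} [AddCommGroup E] [Module ℝ E] [AddCommGroup β] [LinearOrder β]
  [IsOrderedAddMonoid β] [Module ℝ β] [PosSMulStrictMono ℝ β]

theorem card_filter_lt_add_one_le {S : Set E} {h : ℕ}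
    (hh : IsGreatest {t : ℕ | ∃ V' : Finset E, ↑V' ⊆ S ∧
      Set.extremePoints ℝ (convexHull ℝ (V' : Set E)) = ↑V' ∧
      S ∩ convexHull ℝ (V' : Set E) = ↑V' ∧ V'.card = t} h)
    {V : Finset E} (hVS : ↑V ⊆ S) (hvert : Set.extremePoints ℝ (convexHull ℝ (V : Set E)) = ↑V)
    (φ : E →ₗ[ℝ] β) (hφ : Set.InjOn φ (S ∩ convexHull ℝ ↑V)) {q : E}
    (hq : q ∈ (S ∩ convexHull ℝ ↑V) \ ↑V)
    (hmax : ∀ p ∈ (S ∩ convexHull ℝ ↑V) \ ↑V, φ p ≤ φ q) :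
    #(V.filter (φ q < φ ·)) + 1 ≤ h := by
  classical
  set V₁ := V.filter (φ q < φ ·)
  set A := insert q V₁
  have hqV₁ : q ∉ V₁ := fun h' ↦ hq.2 (mem_of_mem_filter _ h')
  have hV₁V : (V₁ : Set E) ⊆ V := coe_subset.mpr (filter_subset _ _)
  have hAP : (A : Set E) ⊆ S ∩ convexHull ℝ ↑V := by
    rw [coe_insert, Set.insert_subset_iff]
    exact ⟨hq.1, Set.subset_inter (hV₁V.trans hVS) (hV₁V.trans (subset_convexHull ℝ _))⟩
  have hV₁gt : convexHull ℝ ↑V₁ ⊆ {p | φ q < φ p} :=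
    convexHull_min (fun v hv ↦ (mem_filter.mp hv).2) (convex_halfSpace_gt φ.isLinear _)
  have hAge : convexHull ℝ ↑A ⊆ {p | φ q ≤ φ p} := by
    refine convexHull_min ?_ (convex_halfSpace_ge φ.isLinear _)
    rw [coe_insert, Set.insert_subset_iff]
    exact ⟨le_refl _, fun v hv ↦ (hV₁gt (subset_convexHull ℝ _ hv)).le⟩
  have hSA : S ∩ convexHull ℝ ↑A = ↑A := by
    refine subset_antisymm (fun p hp ↦ ?_) (Set.subset_inter (hAP.trans Set.inter_subset_left)
      (subset_convexHull ℝ _))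
    have hpT : p ∈ S ∩ convexHull ℝ ↑V :=
      ⟨hp.1, convexHull_min (hAP.trans Set.inter_subset_right) (convex_convexHull ℝ _) hp.2⟩
    obtain rfl | hpq := eq_or_ne p q
    · exact mem_insert_self _ _
    have hlt : φ q < φ p := (hAge hp.2).lt_of_ne fun he ↦ hpq (hφ hpT hq.1 he.symm)
    have hpV : p ∈ V := by_contra fun hpV ↦ (hmax p ⟨hpT, hpV⟩).not_gt hlt
    exact mem_insert_of_mem (mem_filter.mpr ⟨hpV, hlt⟩)
  have hindep : ConvexIndependent ℝ ((↑) : ↥(A : Set E) → E) := by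
    refine convexIndependent_set_iff_notMem_convexHull_sdiff.mpr fun x hx ↦ ?_
    rcases mem_insert.mp hx with rfl | hxV₁
    · rw [coe_insert, Set.insert_sdiff_self_of_notMem (mem_coe.not.mpr hqV₁)]
      exact fun h' ↦ (hV₁gt h').false
    · have hxext : x ∈ (convexHull ℝ (V : Set E)).extremePoints ℝ := by
        rw [hvert]; exact hV₁V hxV₁
      have hconv := ((convex_convexHull ℝ _).mem_extremePoints_iff_convex_sdiff.mp hxext).2
      have hsub : (A : Set E) \ {x} ⊆ convexHull ℝ ↑V \ {x} :=
        Set.sdiff_subset_sdiff_left (hAP.trans Set.inter_subset_right)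
      exact fun h' ↦ (convexHull_min hsub hconv h').2 rfl
  have := hh.2 ⟨A, hAP.trans Set.inter_subset_left, hindep.extremePoints_convexHull_eq, hSA, rfl⟩
  rwa [card_insert_of_notMem hqV₁] at this

end

theorem exists_lex_injOn_forall_notMem_Icc {E : Type*} [AddCommGroup E] [Module ℝ E]
    [FiniteDimensional ℝ E] {V : Finset E}
    (hvert : (convexHull ℝ (V : Set E)).extremePoints ℝ = ↑V) {X : Set E} (hXfin : X.Finite)
    (hXV : X ⊆ convexHull ℝ ↑V \ ↑V) (hdim : finrank ℝ (affineSpan ℝ X).direction ≤ 1) :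
    ∃ φ : E →ₗ[ℝ] ℝ ×ₗ ℝ, Set.InjOn φ (↑V ∪ X) ∧
      ∀ v ∈ V, ∀ x ∈ X, ∀ y ∈ X, φ v ∉ Set.Icc (φ x) (φ y) := by
  set D := (affineSpan ℝ X).direction
  have hT : (↑V ∪ X).Finite := V.finite_toSet.union hXfin
  obtain ⟨f, hfD, hf⟩ := Dual.exists_eq_imp_sub_mem D hT
  obtain ⟨g, hg⟩ := Dual.exists_injOn (K := ℝ) hT
  let φ : E →ₗ[ℝ] ℝ ×ₗ ℝ := (toLexLinearEquiv ℝ (ℝ × ℝ)).toLinearMap ∘ₗ f.prod g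
  have hφ (p : E) : φ p = toLex (f p, g p) := rfl
  refine ⟨φ, fun a ha b hb hab ↦ hg ha hb (congrArg (fun z ↦ (ofLex z).2) hab), ?_⟩
  rintro v hv x hx y hy ⟨hxv, hvy⟩
  rw [hφ, hφ, Prod.Lex.toLex_le_toLex'] at hxv hvy
  have hsub (a b : E) (ha : a ∈ X) (hb : b ∈ X) : a - b ∈ D :=
    AffineSubspace.vsub_mem_direction (mem_affineSpan ℝ ha) (mem_affineSpan ℝ hb)
  have hfxy : f x = f y := by
    have := hfD (hsub y x hy hx)
    rwa [LinearMap.mem_ker, map_sub, sub_eq_zero, eq_comm] at this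
  have hfv : f x = f v := le_antisymm hxv.1 (hfxy ▸ hvy.1)
  have hgx : g x < g v := (hxv.2 hfv).lt_of_ne fun h ↦
    (hXV hx).2 (hg (Or.inr hx) (Or.inl hv) h ▸ hv)
  have hgy : g v < g y := (hvy.2 (hfv ▸ hfxy)).lt_of_ne fun h ↦
    (hXV hy).2 (hg (Or.inl hv) (Or.inr hy) h ▸ hv)
  have hxy : y - x ≠ 0 := sub_ne_zero.mpr fun h ↦ (hgx.trans hgy).ne' (congrArg g h)
  have hD : ℝ ∙ (y - x) = D := Submodule.eq_of_le_of_finrank_le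
    ((Submodule.span_singleton_le_iff_mem _ _).mpr (hsub y x hy hx))
    (by rw [finrank_span_singleton hxy]; exact hdim)
  have hline : v - x ∈ ℝ ∙ (y - x) := hD ▸ hf v (Or.inl hv) x (Or.inr hx) hfv.symm
  have hvext : v ∈ (convexHull ℝ (V : Set E)).extremePoints ℝ := by rw [hvert]; exact hv
  exact (hXV hx).2 ((hvext.2 (hXV hx).1 (hXV hy).1
    (mem_openSegment_of_sub_mem_span g hline hgx hgy)) ▸ hv)

/-- Let `S ⊆ ℝ^n` be discrete with finite Helly number `h = h(S)` (the
maximum number of vertices of a polytope `P'` with vertices in `S` satisfying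
`S ∩ P' = vert(P')`). If `P` is a polytope with vertices in `S` such that
`Q := conv(S ∩ P \ vert P)` is nonempty of dimension at most `1`, then
`|vert(P)| ≤ 2·h(S) - 2`. -/
theorem stmt7 (n : ℕ) (S : Set (Fin n → ℝ)) (hS : DiscreteSet S)
    (h : ℕ)
    (hh : IsGreatest {t : ℕ | ∃ V' : Finset (Fin n → ℝ), ↑V' ⊆ S ∧
      Set.extremePoints ℝ (convexHull ℝ (V' : Set (Fin n → ℝ))) = ↑V' ∧
      S ∩ convexHull ℝ (V' : Set (Fin n → ℝ)) = ↑V' ∧ V'.card = t} h)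
    (V : Finset (Fin n → ℝ)) (hVS : ↑V ⊆ S)
    (hvert : Set.extremePoints ℝ (convexHull ℝ (V : Set (Fin n → ℝ))) = ↑V)
    (X : Set (Fin n → ℝ))
    (hX : X = (S ∩ convexHull ℝ (V : Set (Fin n → ℝ))) \ ↑V)
    (hXne : X.Nonempty)
    (hdim : Module.finrank ℝ (affineSpan ℝ X).direction ≤ 1) :
    V.card ≤ 2 * h - 2 := by
  subst hX
  have hXfin : ((S ∩ convexHull ℝ ↑V) \ ↑V).Finite :=
    (hS _ (V.finite_toSet.isCompact_convexHull ℝ).isBounded).sdiff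
  obtain ⟨φ, hφ, hgap⟩ := exists_lex_injOn_forall_notMem_Icc hvert hXfin
    (Set.sdiff_subset_sdiff_left Set.inter_subset_right) hdim
  rw [Set.union_sdiff_cancel (Set.subset_inter hVS (subset_convexHull ℝ _))] at hφ
  obtain ⟨qm, hqm, hmin⟩ := Set.exists_min_image _ φ hXfin hXne
  obtain ⟨qp, hqp, hmax⟩ := Set.exists_max_image _ φ hXfin hXne
  have h₁ := card_filter_lt_add_one_le hh hVS hvert φ hφ hqp hmax
  have h₂ := card_filter_lt_add_one_le hh hVS hvert (-φ)
    (fun a ha b hb hab ↦ hφ ha hb (neg_injective hab)) hqm fun p hp ↦ neg_le_neg (hmin p hp)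
  have hcover : V ⊆ V.filter (φ qp < φ ·) ∪ V.filter ((-φ) qm < (-φ) ·) := fun v hv ↦ by
    have := hgap v hv qm hqm qp hqp
    simp only [Set.mem_Icc, not_and_or, not_le] at this
    simp only [mem_union, mem_filter, LinearMap.neg_apply, neg_lt_neg_iff]
    tauto
  have := (card_le_card hcover).trans (card_union_le _ _)
  omega
end

section
/- For every n ≥ 1 and k ≥ 1, c(Z^n, k) ≥ ⌊(k/(2n))^{1/(n+1)}⌋^{n-1}. -/
/-- The Helly-type condition for `ℤ^n`: whenever finitely many convex sets have exactly
`k` common integer points, some at most `t` of them already have exactly `k` common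
integer points. `c(ℤ^n,k)` is the least such `t`. -/
def HellyCondZ (n k t : ℕ) : Prop :=
  ∀ (m : ℕ) (C : Fin m → Set (Fin n → ℝ)), (∀ i, Convex ℝ (C i)) →
    (intLat n ∩ ⋂ i, C i).Finite → (intLat n ∩ ⋂ i, C i).ncard = k →
    ∃ I : Finset (Fin m), I.card ≤ t ∧ (intLat n ∩ ⋂ i ∈ I, C i).Finite ∧
      (intLat n ∩ ⋂ i ∈ I, C i).ncard = k


def ebd (d : ℕ) (p : (Fin d → ℤ) × ℤ) : Fin (d+1) → ℝ :=
  Fin.snoc (fun i => (p.1 i : ℝ)) (p.2 : ℝ)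

def inB (r d : ℕ) (y : Fin d → ℤ) : Prop := ∀ i, 0 ≤ y i ∧ y i ≤ (r:ℤ) - 1

def sqz {d : ℕ} (y : Fin d → ℤ) : ℤ := ∑ i, (y i)^2

def Lz (r : ℕ) {d : ℕ} (y : Fin d → ℤ) : ℤ := ∑ i, y i * (r:ℤ)^(i:ℕ)

def Fz (r d : ℕ) (p : (Fin d → ℤ) × ℤ) : ℤ := ((r^d : ℕ) : ℤ) * p.2 + Lz r p.1

def Sset (r d : ℕ) (c : ℤ) : Set ((Fin d → ℤ) × ℤ) :=
  {p | inB r d p.1 ∧ sqz p.1 + 1 ≤ p.2 ∧ Fz r d p ≤ c}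

def C0 (r d : ℕ) (c : ℤ) : Set (Fin (d+1) → ℝ) :=
  {x | (∀ i : Fin d, 0 ≤ x i.castSucc ∧ x i.castSucc ≤ (r:ℝ) - 1) ∧
    (∑ i : Fin d, (x i.castSucc)^2) ≤ x (Fin.last d) ∧
    ((r:ℝ))^d * x (Fin.last d) + ∑ i : Fin d, x i.castSucc * (r:ℝ)^(i:ℕ) ≤ (c:ℝ)}

def Hs {d : ℕ} (y₀ : Fin d → ℤ) : Set (Fin (d+1) → ℝ) :=
  {x | (∑ i : Fin d, 2*(y₀ i : ℝ) * x i.castSucc) - (sqz y₀ : ℝ) + 1/2 ≤ x (Fin.last d)}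

lemma ebd_castSucc (d : ℕ) (p) (i : Fin d) : ebd d p i.castSucc = (p.1 i : ℝ) := by
  simp [ebd]

lemma ebd_last (d : ℕ) (p) : ebd d p (Fin.last d) = (p.2 : ℝ) := by simp [ebd]

lemma ebd_inj (d : ℕ) : Function.Injective (ebd d) := by
  intro p p' h
  have h1 : p.1 = p'.1 := by
    funext i
    have := congrFun h i.castSucc
    rw [ebd_castSucc, ebd_castSucc] at this
    exact_mod_cast this
  have h2 : p.2 = p'.2 := by
    have := congrFun h (Fin.last d)
    rw [ebd_last, ebd_last] at this
    exact_mod_cast this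
  exact Prod.ext h1 h2

lemma convex_C0 (r d : ℕ) (c : ℤ) : Convex ℝ (C0 r d c) := by
  intro x hx y hy a b ha hb hab
  obtain ⟨hx1, hx2, hx3⟩ := hx
  obtain ⟨hy1, hy2, hy3⟩ := hy
  refine ⟨?_, ?_, ?_⟩
  · intro i
    have h1 := (hx1 i).1; have h2 := (hx1 i).2
    have h3 := (hy1 i).1; have h4 := (hy1 i).2
    constructor <;> simp only [Pi.add_apply, Pi.smul_apply, smul_eq_mul] <;> nlinarith
  · calc (∑ i : Fin d, ((a • x + b • y) i.castSucc)^2)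
        ≤ ∑ i : Fin d, (a * (x i.castSucc)^2 + b * (y i.castSucc)^2) := by
          apply Finset.sum_le_sum
          intro i _
          simp only [Pi.add_apply, Pi.smul_apply, smul_eq_mul]
          nlinarith [sq_nonneg (x i.castSucc - y i.castSucc), mul_nonneg ha hb]
      _ = a * (∑ i : Fin d, (x i.castSucc)^2) + b * (∑ i : Fin d, (y i.castSucc)^2) := by
          rw [Finset.sum_add_distrib, Finset.mul_sum, Finset.mul_sum]
      _ ≤ (a • x + b • y) (Fin.last d) := by
          simp only [Pi.add_apply, Pi.smul_apply, smul_eq_mul]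
          nlinarith
  · have hsum : (∑ i : Fin d, ((a • x + b • y) i.castSucc) * (r:ℝ)^(i:ℕ))
        = a * (∑ i : Fin d, x i.castSucc * (r:ℝ)^(i:ℕ))
          + b * (∑ i : Fin d, y i.castSucc * (r:ℝ)^(i:ℕ)) := by
      rw [Finset.mul_sum, Finset.mul_sum, ← Finset.sum_add_distrib]
      apply Finset.sum_congr rfl
      intro i _
      simp only [Pi.add_apply, Pi.smul_apply, smul_eq_mul]; ring
    rw [hsum]
    simp only [Pi.add_apply, Pi.smul_apply, smul_eq_mul]
    have hc : a*(c:ℝ) + b*(c:ℝ) = (c:ℝ) := by rw [← add_mul, hab, one_mul]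
    linarith [mul_le_mul_of_nonneg_left hx3 ha, mul_le_mul_of_nonneg_left hy3 hb]

lemma convex_Hs {d : ℕ} (y₀ : Fin d → ℤ) : Convex ℝ (Hs y₀) := by
  intro x hx y hy a b ha hb hab
  simp only [Hs, Set.mem_setOf_eq] at *
  have hsum : (∑ i : Fin d, 2*(y₀ i : ℝ) * ((a • x + b • y) i.castSucc))
      = a * (∑ i : Fin d, 2*(y₀ i : ℝ) * x i.castSucc)
        + b * (∑ i : Fin d, 2*(y₀ i : ℝ) * y i.castSucc) := by
    rw [Finset.mul_sum, Finset.mul_sum, ← Finset.sum_add_distrib]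
    apply Finset.sum_congr rfl
    intro i _
    simp only [Pi.add_apply, Pi.smul_apply, smul_eq_mul]; ring
  rw [hsum]
  simp only [Pi.add_apply, Pi.smul_apply, smul_eq_mul]
  have hc : a*((sqz y₀ : ℝ) - 1/2) + b*((sqz y₀:ℝ) - 1/2) = (sqz y₀:ℝ) - 1/2 := by
    rw [← add_mul, hab, one_mul]
  linarith [mul_le_mul_of_nonneg_left hx ha, mul_le_mul_of_nonneg_left hy hb]

lemma lz_nonneg {r d : ℕ} {y : Fin d → ℤ} (h : inB r d y) : 0 ≤ Lz r y := by
  apply Finset.sum_nonneg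
  intro i _
  exact mul_nonneg (h i).1 (pow_nonneg (by positivity) _)

lemma lz_le {r d : ℕ} {y : Fin d → ℤ} (h : inB r d y) : Lz r y ≤ ((r^d : ℕ) : ℤ) - 1 := by
  have h1 : Lz r y ≤ ∑ i : Fin d, ((r:ℤ) - 1) * (r:ℤ)^(i:ℕ) := by
    apply Finset.sum_le_sum
    intro i _
    exact mul_le_mul_of_nonneg_right (h i).2 (pow_nonneg (by positivity) _)
  have h2 : ∑ i : Fin d, ((r:ℤ) - 1) * (r:ℤ)^(i:ℕ) = (r:ℤ)^d - 1 := by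
    rw [← geom_sum_mul]
    rw [← Fin.sum_univ_eq_sum_range (fun i => (r:ℤ)^i) d]
    rw [Finset.sum_mul]
    apply Finset.sum_congr rfl
    intro i _; ring
  push_cast
  rw [h2] at h1
  exact_mod_cast h1

lemma digits_inj {d : ℕ} (r : ℕ) (y y' : Fin d → ℤ)
    (hy : inB r d y) (hy' : inB r d y') (h : Lz r y = Lz r y') : y = y' := by
  induction d with
  | zero => funext i; exact i.elim0
  | succ d ih =>
    have hsum : ∀ (w : Fin (d+1) → ℤ), Lz r w = w 0 + (r:ℤ) * Lz r (w ∘ Fin.succ) := by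
      intro w
      rw [Lz, Fin.sum_univ_succ]
      simp only [Fin.val_zero, pow_zero, mul_one, Fin.val_succ]
      rw [Lz, Finset.mul_sum]
      congr 1
      apply Finset.sum_congr rfl
      intro i _
      simp only [Function.comp_apply]
      ring
    rw [hsum y, hsum y'] at h
    have hb0 := hy 0
    have hb0' := hy' 0
    have hr : (0:ℤ) < r := by omega
    set A := Lz r (y ∘ Fin.succ) with hA
    set A' := Lz r (y' ∘ Fin.succ) with hA'
    have key : A = A' := by
      rcases lt_trichotomy A A' with hlt | heq | hgt
      · exfalso
        linarith [mul_le_mul_of_nonneg_left (show (1:ℤ) ≤ A' - A by omega) hr.le]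
      · exact heq
      · exfalso
        linarith [mul_le_mul_of_nonneg_left (show (1:ℤ) ≤ A - A' by omega) hr.le]
    have h0 : y 0 = y' 0 := by rw [key] at h; linarith
    have htail : y ∘ Fin.succ = y' ∘ Fin.succ := by
      apply ih
      · intro i; exact hy i.succ
      · intro i; exact hy' i.succ
      · rw [← hA, ← hA', key]
    funext i
    rcases Fin.eq_zero_or_eq_succ i with h | ⟨j, rfl⟩
    · rw [h, h0]
    · exact congrFun htail j

lemma fz_injOn {r d : ℕ} {p p' : (Fin d → ℤ) × ℤ} (hp : inB r d p.1) (hp' : inB r d p'.1)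
    (h : Fz r d p = Fz r d p') : p = p' := by
  have hL := lz_nonneg hp
  have hL' := lz_nonneg hp'
  have hLe := lz_le hp
  have hLe' := lz_le hp'
  rw [Fz, Fz] at h
  set P : ℤ := ((r^d : ℕ) : ℤ) with hP
  have hPpos : 0 < P := by
    rcases Nat.eq_zero_or_pos (r^d) with h0 | h0
    · exfalso; rw [hP] at hLe; omega
    · rw [hP]; exact_mod_cast h0
  have hz : p.2 = p'.2 := by
    rcases lt_trichotomy p.2 p'.2 with hlt | heq | hgt
    · exfalso
      linarith [mul_le_mul_of_nonneg_left (show (1:ℤ) ≤ p'.2 - p.2 by omega) hPpos.le]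
    · exact heq
    · exfalso
      linarith [mul_le_mul_of_nonneg_left (show (1:ℤ) ≤ p.2 - p'.2 by omega) hPpos.le]
  have hLeq : Lz r p.1 = Lz r p'.1 := by rw [hz] at h; omega
  have := digits_inj r p.1 p'.1 hp hp' hLeq
  exact Prod.ext this hz

lemma sset_mono (r d : ℕ) {c c' : ℤ} (h : c ≤ c') : Sset r d c ⊆ Sset r d c' := by
  intro p hp
  exact ⟨hp.1, hp.2.1, le_trans hp.2.2 h⟩

noncomputable def boxFin (r d : ℕ) : Finset (Fin d → ℤ) :=
  Fintype.piFinset (fun _ => Finset.Icc (0:ℤ) ((r:ℤ) - 1))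

lemma boxFin_card (r d : ℕ) : (boxFin r d).card = r^d := by
  rw [boxFin, Fintype.card_piFinset]
  have h1 : ∀ i : Fin d, (Finset.Icc (0:ℤ) ((r:ℤ)-1)).card = r := by
    intro i; rw [Int.card_Icc]; omega
  rw [Finset.prod_congr rfl (fun i _ => h1 i)]
  simp

lemma mem_boxFin {r d : ℕ} {y : Fin d → ℤ} : y ∈ boxFin r d ↔ inB r d y := by
  simp [boxFin, Fintype.mem_piFinset, inB, Finset.mem_Icc]

lemma sset_subset_finset (r d : ℕ) (c : ℤ) (Z : ℤ)
    (hZ : ∀ p ∈ Sset r d c, p.2 ≤ Z) :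
    Sset r d c ⊆ ↑((boxFin r d) ×ˢ Finset.Icc (1:ℤ) Z) := by
  intro p hp
  simp only [Finset.coe_product, Set.mem_prod, Finset.mem_coe, Finset.mem_Icc]
  refine ⟨mem_boxFin.mpr hp.1, ?_, hZ p hp⟩
  have := hp.2.1
  have hs : 0 ≤ sqz p.1 := Finset.sum_nonneg (fun i _ => sq_nonneg _)
  omega

lemma sset_z_bound {r d : ℕ} {c : ℤ} {p} (hp : p ∈ Sset r d c) :
    ((r^d:ℕ):ℤ) * p.2 ≤ c := by
  have h3 := hp.2.2
  have := lz_nonneg hp.1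
  rw [Fz] at h3
  omega

lemma sset_finite (r d : ℕ) (c : ℤ) : (Sset r d c).Finite := by
  have hP : (0:ℤ) < ((r^d:ℕ):ℤ) ∨ Sset r d c = ∅ := by
    rcases Nat.eq_zero_or_pos (r^d) with h | h
    · right
      ext p
      simp only [Set.mem_empty_iff_false, iff_false]
      intro hp
      have h1 := lz_le hp.1
      have h2 := lz_nonneg hp.1
      rw [h] at h1
      simp at h1
      omega
    · left; exact_mod_cast h
  rcases hP with hP | hP
  · apply Set.Finite.subset (Finset.finite_toSet ((boxFin r d) ×ˢ Finset.Icc (1:ℤ) c))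
    apply sset_subset_finset
    intro p hp
    have := sset_z_bound hp
    have h1 := hp.2.1
    have hs : 0 ≤ sqz p.1 := Finset.sum_nonneg (fun i _ => sq_nonneg _)
    nlinarith
  · rw [hP]; exact Set.finite_empty

lemma sset_step (r d : ℕ) (c : ℤ) : (Sset r d (c+1)).ncard ≤ (Sset r d c).ncard + 1 := by
  have hsub : Sset r d (c+1) ⊆ Sset r d c ∪ {p | p ∈ Sset r d (c+1) ∧ Fz r d p = c+1} := by
    intro p hp
    rcases le_or_gt (Fz r d p) c with h | h
    · exact Or.inl ⟨hp.1, hp.2.1, h⟩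
    · exact Or.inr ⟨hp, le_antisymm hp.2.2 h⟩
  have hsub2 : ({p | p ∈ Sset r d (c+1) ∧ Fz r d p = c+1} : Set _).Subsingleton := by
    intro p hp q hq
    exact fz_injOn hp.1.1 hq.1.1 (by rw [hp.2, hq.2])
  have hb : ({p | p ∈ Sset r d (c+1) ∧ Fz r d p = c+1} : Set _).ncard ≤ 1 := by
    rcases ({p | p ∈ Sset r d (c+1) ∧ Fz r d p = c+1} : Set _).eq_empty_or_nonempty with
      he | ⟨a, ha⟩
    · rw [he]; simp
    · have hss : ({p | p ∈ Sset r d (c+1) ∧ Fz r d p = c+1} : Set _) ⊆ {a} :=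
        fun x hx => by rw [hsub2 hx ha]; rfl
      calc ({p | p ∈ Sset r d (c+1) ∧ Fz r d p = c+1} : Set _).ncard
          ≤ ({a} : Set _).ncard := Set.ncard_le_ncard hss (Set.finite_singleton a)
        _ = 1 := Set.ncard_singleton a
  calc (Sset r d (c+1)).ncard ≤ (Sset r d c ∪ {p | p ∈ Sset r d (c+1) ∧ Fz r d p = c+1}).ncard :=
        Set.ncard_le_ncard hsub (Set.Finite.union (sset_finite r d c)
          (Set.Finite.subset (sset_finite r d (c+1)) (fun p hp => hp.1)))
    _ ≤ (Sset r d c).ncard + ({p | p ∈ Sset r d (c+1) ∧ Fz r d p = c+1} : Set _).ncard :=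
        Set.ncard_union_le _ _
    _ ≤ (Sset r d c).ncard + 1 := by omega

lemma sqz_nonneg {d : ℕ} (y : Fin d → ℤ) : 0 ≤ sqz y :=
  Finset.sum_nonneg (fun i _ => sq_nonneg _)

lemma mem_C0 {r d : ℕ} {c : ℤ} {p : (Fin d → ℤ) × ℤ} (h1 : inB r d p.1)
    (h2 : sqz p.1 ≤ p.2) (h3 : Fz r d p ≤ c) : ebd d p ∈ C0 r d c := by
  refine ⟨?_, ?_, ?_⟩
  · intro i
    rw [ebd_castSucc]
    have := h1 i
    constructor
    · exact_mod_cast this.1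
    · have h := this.2
      have : ((p.1 i : ℝ)) ≤ ((r:ℤ) - 1 : ℤ) := by exact_mod_cast h
      push_cast at this ⊢
      linarith
  · have : (∑ i : Fin d, (ebd d p i.castSucc)^2) = ((sqz p.1 : ℤ) : ℝ) := by
      rw [sqz]
      push_cast
      apply Finset.sum_congr rfl
      intro i _
      rw [ebd_castSucc]
    rw [this, ebd_last]
    exact_mod_cast h2
  · have hL : (∑ i : Fin d, ebd d p i.castSucc * (r:ℝ)^(i:ℕ)) = ((Lz r p.1 : ℤ) : ℝ) := by
      rw [Lz]
      push_cast
      apply Finset.sum_congr rfl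
      intro i _
      rw [ebd_castSucc]
    rw [hL, ebd_last]
    have : ((Fz r d p : ℤ) : ℝ) ≤ (c : ℝ) := by exact_mod_cast h3
    rw [Fz] at this
    push_cast at this ⊢
    linarith

lemma mem_Hs {d : ℕ} {p : (Fin d → ℤ) × ℤ} (h2 : sqz p.1 + 1 ≤ p.2) (y₀ : Fin d → ℤ) :
    ebd d p ∈ Hs y₀ := by
  have key : (∑ i, 2 * y₀ i * p.1 i) - sqz y₀ ≤ sqz p.1 := by
    have h : 0 ≤ ∑ i, (p.1 i - y₀ i)^2 := Finset.sum_nonneg (fun i _ => sq_nonneg _)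
    have expand : ∑ i, (p.1 i - y₀ i)^2 = sqz p.1 - ((∑ i, 2 * y₀ i * p.1 i) - sqz y₀) := by
      rw [sqz, sqz, ← Finset.sum_sub_distrib, ← Finset.sum_sub_distrib]
      apply Finset.sum_congr rfl
      intro i _; ring
    omega
  show (∑ i : Fin d, 2*(y₀ i : ℝ) * ebd d p i.castSucc) - (sqz y₀ : ℝ) + 1/2
      ≤ ebd d p (Fin.last d)
  have hsum : (∑ i : Fin d, 2*(y₀ i : ℝ) * ebd d p i.castSucc)
      = (((∑ i, 2 * y₀ i * p.1 i : ℤ)) : ℝ) := by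
    push_cast
    apply Finset.sum_congr rfl
    intro i _
    rw [ebd_castSucc]
  rw [hsum, ebd_last]
  have hle : ((∑ i, 2 * y₀ i * p.1 i : ℤ) : ℝ) - ((sqz y₀ : ℤ):ℝ) ≤ ((p.2 - 1 : ℤ) : ℝ) := by
    exact_mod_cast (by omega : (∑ i, 2 * y₀ i * p.1 i) - sqz y₀ ≤ p.2 - 1)
  push_cast at hle ⊢
  linarith

lemma mem_Hs_q {d : ℕ} {y₀ y₁ : Fin d → ℤ} (h : y₀ ≠ y₁) :
    ebd d (y₀, sqz y₀) ∈ Hs y₁ := by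
  have hne : ∃ i, y₀ i ≠ y₁ i := by
    by_contra hc
    push_neg at hc
    exact h (funext hc)
  obtain ⟨i₀, hi₀⟩ := hne
  have key : (∑ i, 2 * y₁ i * y₀ i) - sqz y₁ + 1 ≤ sqz y₀ := by
    have h1 : (1:ℤ) ≤ (y₀ i₀ - y₁ i₀)^2 := by
      have hx : y₀ i₀ - y₁ i₀ ≠ 0 := sub_ne_zero.mpr hi₀
      rcases hx.lt_or_gt with hh | hh <;> nlinarith
    have h2 : (1:ℤ) ≤ ∑ i, (y₀ i - y₁ i)^2 := by
      calc (1:ℤ) ≤ (y₀ i₀ - y₁ i₀)^2 := h1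
        _ ≤ ∑ i, (y₀ i - y₁ i)^2 :=
          Finset.single_le_sum (f := fun i => (y₀ i - y₁ i)^2)
            (fun i _ => sq_nonneg _) (Finset.mem_univ i₀)
    have expand : ∑ i, (y₀ i - y₁ i)^2 = sqz y₀ - ((∑ i, 2 * y₁ i * y₀ i) - sqz y₁) := by
      rw [sqz, sqz, ← Finset.sum_sub_distrib, ← Finset.sum_sub_distrib]
      apply Finset.sum_congr rfl
      intro i _; ring
    omega
  show (∑ i : Fin d, 2*(y₁ i : ℝ) * ebd d (y₀, sqz y₀) i.castSucc) - (sqz y₁ : ℝ) + 1/2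
      ≤ ebd d (y₀, sqz y₀) (Fin.last d)
  have hsum : (∑ i : Fin d, 2*(y₁ i : ℝ) * ebd d (y₀, sqz y₀) i.castSucc)
      = (((∑ i, 2 * y₁ i * y₀ i : ℤ)) : ℝ) := by
    push_cast
    apply Finset.sum_congr rfl
    intro i _
    rw [ebd_castSucc]
  rw [hsum, ebd_last]
  have hle : ((∑ i, 2 * y₁ i * y₀ i : ℤ) : ℝ) - ((sqz y₁ : ℤ):ℝ) + 1 ≤ ((sqz y₀ : ℤ) : ℝ) := by
    exact_mod_cast key
  linarith

lemma ebd_mem_intLat (d : ℕ) (p) : ebd d p ∈ intLat (d+1) := by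
  intro i
  cases i using Fin.lastCases with
  | last => exact ⟨p.2, by rw [ebd_last]⟩
  | cast j => exact ⟨p.1 j, by rw [ebd_castSucc]⟩

lemma ivt (r d k : ℕ) (c₀ : ℤ) (h0 : (Sset r d c₀).ncard ≤ k) :
    ∀ N : ℕ, k ≤ (Sset r d (c₀ + N)).ncard → ∃ c : ℤ, c₀ ≤ c ∧ (Sset r d c).ncard = k := by
  intro N
  induction N with
  | zero =>
    intro h
    exact ⟨c₀, le_refl _, le_antisymm (by simpa using h0) (by simpa using h)⟩
  | succ N ih =>
    intro h
    rcases le_or_gt k ((Sset r d (c₀ + N)).ncard) with h1 | h1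
    · exact ih h1
    · refine ⟨c₀ + N + 1, by omega, ?_⟩
      have hstep := sset_step r d (c₀ + N)
      have : (c₀ + ((N:ℤ) + 1)) = (c₀ + N) + 1 := by ring
      rw [show ((N + 1 : ℕ) : ℤ) = (N : ℤ) + 1 by push_cast; ring] at h
      rw [this] at h
      omega


/-- decoding indices into box vectors -/
noncomputable def ydec (r d : ℕ) (j : Fin (r^d)) : Fin d → ℤ :=
  fun i => ((finFunctionFinEquiv.symm j) i : ℤ)

lemma ydec_inB (r d : ℕ) (j : Fin (r^d)) : inB r d (ydec r d j) := by
  intro i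
  have := ((finFunctionFinEquiv.symm j) i).isLt
  constructor
  · rw [ydec]; positivity
  · have : ((finFunctionFinEquiv.symm j) i : ℕ) ≤ r - 1 := by omega
    have hr : 1 ≤ r := Nat.pos_of_ne_zero (by
      intro h
      subst h
      exact absurd ((finFunctionFinEquiv.symm j) i).isLt (by omega))
    push_cast [ydec]
    omega

lemma ydec_inj (r d : ℕ) : Function.Injective (ydec r d) := by
  intro j j' h
  apply finFunctionFinEquiv.symm.injective
  funext i
  have := congrFun h i
  rw [ydec, ydec] at this
  exact Fin.ext (by exact_mod_cast this)

lemma ydec_surj {r d : ℕ} {y : Fin d → ℤ} (hy : inB r d y) : ∃ j, ydec r d j = y := by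
  have hf : ∀ i, (y i).toNat < r := by
    intro i
    have := hy i
    omega
  refine ⟨finFunctionFinEquiv (fun i => ⟨(y i).toNat, hf i⟩), ?_⟩
  funext i
  rw [ydec, Equiv.symm_apply_apply]
  have := (hy i).1
  simp
  omega


lemma ebd_sq_sum (d : ℕ) (p : (Fin d → ℤ) × ℤ) :
    (∑ i : Fin d, (ebd d p i.castSucc)^2) = ((sqz p.1 : ℤ) : ℝ) := by
  rw [sqz]; push_cast
  exact Finset.sum_congr rfl (fun i _ => by rw [ebd_castSucc])

lemma ebd_L_sum (r d : ℕ) (p : (Fin d → ℤ) × ℤ) :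
    (∑ i : Fin d, ebd d p i.castSucc * (r:ℝ)^(i:ℕ)) = ((Lz r p.1 : ℤ) : ℝ) := by
  rw [Lz]; push_cast
  exact Finset.sum_congr rfl (fun i _ => by rw [ebd_castSucc])

lemma ebd_H_sum (d : ℕ) (y₀ : Fin d → ℤ) (p : (Fin d → ℤ) × ℤ) :
    (∑ i : Fin d, 2*(y₀ i:ℝ) * ebd d p i.castSucc) = ((∑ i, 2 * y₀ i * p.1 i : ℤ) : ℝ) := by
  push_cast
  exact Finset.sum_congr rfl (fun i _ => by rw [ebd_castSucc])

lemma construction (d r k t : ℕ) (hk : 1 ≤ k)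
    (hA : r^d * (d * (r-1)^2) ≤ k) (hrd : 1 ≤ r ∨ d = 0)
    (hH : HellyCondZ (d+1) k t) : r^d ≤ t := by
  classical
  have hP : 1 ≤ r^d := by
    rcases hrd with hr | hd
    · exact Nat.one_le_pow _ _ hr
    · subst hd; simp
  have hPZ : (1:ℤ) ≤ ((r^d : ℕ) : ℤ) := by exact_mod_cast hP
  set Z₀ : ℕ := d * (r-1)^2 with hZdef
  set c₀ : ℤ := ((r^d:ℕ):ℤ) * Z₀ + (((r^d:ℕ):ℤ) - 1) with hc₀
  have hc₀0 : 0 ≤ c₀ := by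
    rw [hc₀]
    have : (0:ℤ) ≤ ((r^d:ℕ):ℤ) * Z₀ := by positivity
    omega
  -- squares bounded by Z₀ on the box
  have hsqZ : ∀ y : Fin d → ℤ, inB r d y → sqz y ≤ (Z₀:ℤ) := by
    intro y hy
    rcases hrd with hr | hd
    · have hterm : ∀ i : Fin d, (y i)^2 ≤ ((r:ℤ)-1)^2 := by
        intro i; have h := hy i; nlinarith [h.1, h.2]
      have hcast : ((Z₀:ℕ):ℤ) = (d:ℤ) * ((r:ℤ)-1)^2 := by
        rw [hZdef]
        have : ((r-1:ℕ):ℤ) = (r:ℤ) - 1 := by omega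
        push_cast [this]
        ring
      calc sqz y ≤ ∑ _i : Fin d, ((r:ℤ)-1)^2 := Finset.sum_le_sum (fun i _ => hterm i)
        _ = (d:ℤ) * ((r:ℤ)-1)^2 := by
            rw [Finset.sum_const, Finset.card_univ, Fintype.card_fin, nsmul_eq_mul]
        _ = (Z₀:ℤ) := hcast.symm
    · subst hd
      have : sqz y = 0 := by rw [sqz]; exact Finset.sum_of_isEmpty _
      rw [this]
      positivity
  -- upper bound on the count at c₀
  have hg0 : (Sset r d c₀).ncard ≤ k := by
    have hzle : ∀ p ∈ Sset r d c₀, p.2 ≤ (Z₀:ℤ) := by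
      intro p hp
      by_contra hcc
      push_neg at hcc
      have h1 : ((r^d:ℕ):ℤ) * ((Z₀:ℤ)+1) ≤ ((r^d:ℕ):ℤ) * p.2 :=
        mul_le_mul_of_nonneg_left (by omega) (by positivity)
      have h2 := sset_z_bound hp
      rw [hc₀] at h2
      nlinarith
    have hsub := sset_subset_finset r d c₀ (Z₀:ℤ) hzle
    calc (Sset r d c₀).ncard
        ≤ ((boxFin r d ×ˢ Finset.Icc (1:ℤ) (Z₀:ℤ)) : Finset _).card := by
          rw [← Set.ncard_coe_finset]
          exact Set.ncard_le_ncard hsub (Finset.finite_toSet _)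
      _ = r^d * Z₀ := by
          rw [Finset.card_product, boxFin_card, Int.card_Icc]
          congr 1
          omega
      _ ≤ k := hA
  -- lower bound on the count at c₀ + r^d * k
  have hcol : k ≤ (Sset r d (c₀ + ((r^d * k : ℕ) : ℤ))).ncard := by
    have hzin : inB r d (fun _ : Fin d => (0:ℤ)) := by
      intro i
      rcases hrd with hr | hd
      · exact ⟨le_refl 0, by show (0:ℤ) ≤ (r:ℤ) - 1; omega⟩
      · subst hd; exact i.elim0
    have hcolsub : (fun z : ℤ => ((fun _ : Fin d => (0:ℤ)), z)) '' ↑(Finset.Icc (1:ℤ) (k:ℤ))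
        ⊆ Sset r d (c₀ + ((r^d * k : ℕ) : ℤ)) := by
      rintro p ⟨z, hz, rfl⟩
      rw [Finset.mem_coe, Finset.mem_Icc] at hz
      refine ⟨hzin, ?_, ?_⟩
      · have : sqz (fun _ : Fin d => (0:ℤ)) = 0 := by simp [sqz]
        simp only [this]
        omega
      · rw [Fz]
        have hLz : Lz r (fun _ : Fin d => (0:ℤ)) = 0 := by simp [Lz]
        simp only [hLz, add_zero]
        have h1 : ((r^d:ℕ):ℤ) * z ≤ ((r^d:ℕ):ℤ) * (k:ℤ) :=
          mul_le_mul_of_nonneg_left hz.2 (by positivity)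
        have h2 : (((r^d * k : ℕ)):ℤ) = ((r^d:ℕ):ℤ) * (k:ℤ) := by push_cast; ring
        omega
    have hinj : Set.InjOn (fun z : ℤ => ((fun _ : Fin d => (0:ℤ)), z))
        ↑(Finset.Icc (1:ℤ) (k:ℤ)) := by
      intro a _ b _ h
      exact (Prod.ext_iff.mp h).2
    calc k = ((fun z : ℤ => ((fun _ : Fin d => (0:ℤ)), z)) ''
            ↑(Finset.Icc (1:ℤ) (k:ℤ))).ncard := by
          rw [Set.ncard_image_of_injOn hinj, Set.ncard_coe_finset, Int.card_Icc]
          omega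
      _ ≤ _ := Set.ncard_le_ncard hcolsub (sset_finite _ _ _)
  obtain ⟨c, hc₀c, hScard⟩ := ivt r d k c₀ hg0 (r^d * k) hcol
  -- the family of convex sets
  set X : Set (Fin (d+1) → ℝ) := ebd d '' Sset r d c with hXdef
  have hXfin : X.Finite := (sset_finite r d c).image _
  have hXcard : X.ncard = k := by
    rw [hXdef, Set.ncard_image_of_injOn (ebd_inj d).injOn]
    exact hScard
  set C : Fin (r^d + 1) → Set (Fin (d+1) → ℝ) :=
    Fin.cons (C0 r d c) (fun j => Hs (ydec r d j)) with hC
  have hconv : ∀ i, Convex ℝ (C i) := by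
    intro i
    rcases i.eq_zero_or_eq_succ with rfl | ⟨j, rfl⟩
    · rw [hC, Fin.cons_zero]; exact convex_C0 r d c
    · rw [hC, Fin.cons_succ]; exact convex_Hs _
  -- the intersection is exactly X
  have hXeq : intLat (d+1) ∩ ⋂ i, C i = X := by
    apply Set.Subset.antisymm
    · rintro x ⟨hxl, hxC⟩
      rw [Set.mem_iInter] at hxC
      choose f hf using hxl
      set y : Fin d → ℤ := fun i => f i.castSucc with hy
      set z : ℤ := f (Fin.last d) with hz
      have hxe : x = ebd d (y, z) := by
        funext i
        induction i using Fin.lastCases with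
        | last => rw [ebd_last]; exact hf _
        | cast i => rw [ebd_castSucc]; exact hf _
      have hC0x : x ∈ C0 r d c := by
        have := hxC 0
        rwa [hC, Fin.cons_zero] at this
      obtain ⟨hb, hsq, hφ⟩ := hC0x
      have hyB : inB r d y := by
        intro i
        have hbi := hb i
        rw [hxe, ebd_castSucc] at hbi
        constructor
        · exact_mod_cast hbi.1
        · have h2 := hbi.2
          have h3 : ((y i : ℝ)) ≤ (((r:ℤ) - 1 : ℤ) : ℝ) := by push_cast; linarith
          exact_mod_cast h3
      obtain ⟨j, hj⟩ := ydec_surj hyB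
      have hHx : x ∈ Hs y := by
        have := hxC j.succ
        rw [hC, Fin.cons_succ, hj] at this
        exact this
      have hstrict : sqz y + 1 ≤ z := by
        rw [hxe] at hHx
        have hHx' := hHx
        rw [Hs] at hHx'
        simp only [Set.mem_setOf_eq] at hHx'
        rw [ebd_H_sum d y (y, z), ebd_last] at hHx'
        have hiden : (∑ i, 2 * y i * y i : ℤ) = 2 * sqz y := by
          rw [sqz, Finset.mul_sum]
          exact Finset.sum_congr rfl (fun i _ => by ring)
        rw [hiden] at hHx'
        have hlt : ((sqz y : ℤ) : ℝ) < (z : ℝ) := by push_cast at hHx' ⊢; linarith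
        have : sqz y < z := by exact_mod_cast hlt
        omega
      have hφ' : Fz r d (y, z) ≤ c := by
        rw [hxe] at hφ
        rw [ebd_L_sum r d (y, z), ebd_last] at hφ
        rw [Fz]
        have hcast : ((((r^d:ℕ):ℤ) * z + Lz r y : ℤ) : ℝ) ≤ (c : ℝ) := by
          push_cast at hφ ⊢
          linarith
        exact_mod_cast hcast
      exact ⟨(y, z), ⟨hyB, hstrict, hφ'⟩, hxe.symm⟩
    · rintro x ⟨p, hp, rfl⟩
      refine ⟨ebd_mem_intLat d p, ?_⟩
      rw [Set.mem_iInter]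
      intro i
      rcases i.eq_zero_or_eq_succ with rfl | ⟨j, rfl⟩
      · rw [hC, Fin.cons_zero]
        exact mem_C0 hp.1 (by have := hp.2.1; omega) hp.2.2
      · rw [hC, Fin.cons_succ]
        exact mem_Hs hp.2.1 _
  -- apply the Helly hypothesis
  have hXfin' : (intLat (d+1) ∩ ⋂ i, C i).Finite := by rw [hXeq]; exact hXfin
  have hXcard' : (intLat (d+1) ∩ ⋂ i, C i).ncard = k := by rw [hXeq]; exact hXcard
  obtain ⟨I, hIt, hIfin, hIcard⟩ := hH (r^d + 1) C hconv hXfin' hXcard'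
  by_contra hcon
  push_neg at hcon
  have hIlt : I.card < r^d := lt_of_le_of_lt hIt hcon
  have hmiss : ∃ j : Fin (r^d), j.succ ∉ I := by
    by_contra hall
    push_neg at hall
    have hsub : (Finset.univ.image (Fin.succ : Fin (r^d) → Fin (r^d+1))) ⊆ I := by
      intro i hi
      rw [Finset.mem_image] at hi
      obtain ⟨j, _, rfl⟩ := hi
      exact hall j
    have hcard := Finset.card_le_card hsub
    rw [Finset.card_image_of_injective _ (Fin.succ_injective _), Finset.card_univ,
      Fintype.card_fin] at hcard
    omega
  obtain ⟨j, hj⟩ := hmiss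
  have hy₀B : inB r d (ydec r d j) := ydec_inB r d j
  set q : Fin (d+1) → ℝ := ebd d (ydec r d j, sqz (ydec r d j)) with hq
  have hqC0 : q ∈ C0 r d c := by
    apply mem_C0 hy₀B (le_refl _)
    rw [Fz]
    dsimp only
    have h1 := lz_le hy₀B
    have h2 := hsqZ _ hy₀B
    have h3 : ((r^d:ℕ):ℤ) * sqz (ydec r d j) ≤ ((r^d:ℕ):ℤ) * (Z₀:ℤ) :=
      mul_le_mul_of_nonneg_left h2 (by positivity)
    have : ((r^d:ℕ):ℤ) * sqz (ydec r d j) + Lz r (ydec r d j) ≤ c₀ := by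
      rw [hc₀]; omega
    omega
  have hqY : q ∈ intLat (d+1) ∩ ⋂ i ∈ I, C i := by
    refine ⟨ebd_mem_intLat d _, ?_⟩
    rw [Set.mem_iInter₂]
    intro i hi
    rcases i.eq_zero_or_eq_succ with rfl | ⟨j', rfl⟩
    · rw [hC, Fin.cons_zero]; exact hqC0
    · rw [hC, Fin.cons_succ]
      have hjj' : ydec r d j ≠ ydec r d j' := by
        intro he
        have : j = j' := ydec_inj r d he
        subst this
        exact hj hi
      exact mem_Hs_q hjj'
  have hXY : X ⊆ intLat (d+1) ∩ ⋂ i ∈ I, C i := by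
    intro x hx
    rw [← hXeq] at hx
    refine ⟨hx.1, ?_⟩
    rw [Set.mem_iInter₂]
    intro i _
    exact Set.mem_iInter.mp hx.2 i
  have hqnX : q ∉ X := by
    rw [hXdef]
    rintro ⟨p, hp, hpe⟩
    have hpp := ebd_inj d hpe
    rw [hpp] at hp
    have hcontra := hp.2.1
    dsimp only at hcontra
    omega
  have hsubY : insert q X ⊆ intLat (d+1) ∩ ⋂ i ∈ I, C i := by
    intro x hx
    rcases Set.mem_insert_iff.mp hx with rfl | hx
    · exact hqY
    · exact hXY hx
  have h1 : (insert q X).ncard = k + 1 := by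
    rw [Set.ncard_insert_of_notMem hqnX hXfin, hXcard]
  have hfinal : k + 1 ≤ k := by
    calc k + 1 = (insert q X).ncard := h1.symm
      _ ≤ (intLat (d+1) ∩ ⋂ i ∈ I, C i).ncard := Set.ncard_le_ncard hsubY hIfin
      _ = k := hIcard
  omega

/-- For every `n ≥ 1` and `k ≥ 1`,
`c(ℤ^n, k) ≥ ⌊(k/(2n))^(1/(n+1))⌋^(n-1)`: every `t` satisfying the Helly condition is
at least this bound. -/
theorem stmt9 (n k : ℕ) (hn : 1 ≤ n) (hk : 1 ≤ k) :
    ∀ t : ℕ, HellyCondZ n k t →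
      (⌊((k : ℝ) / (2 * n)) ^ ((1 : ℝ) / (n + 1))⌋₊) ^ (n - 1) ≤ t := by
  intro t hH
  obtain ⟨d, rfl⟩ : ∃ d, n = d + 1 := ⟨n - 1, by omega⟩
  set r : ℕ := ⌊((k : ℝ) / (2 * ((d+1 : ℕ) : ℝ))) ^ ((1 : ℝ) / (((d+1:ℕ) : ℝ) + 1))⌋₊ with hrdef
  show r ^ (d + 1 - 1) ≤ t
  have hgoal : r ^ (d + 1 - 1) = r ^ d := by norm_num
  rw [hgoal]
  rcases Nat.eq_zero_or_pos d with rfl | hd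
  · exact construction 0 r k t hk (by simp) (Or.inr rfl) hH
  · rcases Nat.eq_zero_or_pos r with hr0 | hr1
    · rw [hr0, zero_pow (by omega : d ≠ 0)]
      exact Nat.zero_le t
    · -- derive the arithmetic bound
      have hx0 : (0:ℝ) ≤ (k:ℝ)/(2*((d+1:ℕ):ℝ)) := by positivity
      have hfl : (r:ℝ) ≤ ((k:ℝ)/(2*((d+1:ℕ):ℝ)))^((1:ℝ)/(((d+1:ℕ):ℝ)+1)) := by
        rw [hrdef]
        exact Nat.floor_le (Real.rpow_nonneg hx0 _)
      have h1 : ((1:ℝ)/(((d+1:ℕ):ℝ)+1)) * (((d+2:ℕ)):ℝ) = 1 := by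
        push_cast
        field_simp
        ring
      have hpow : (r:ℝ)^(d+2) ≤ (k:ℝ)/(2*((d+1:ℕ):ℝ)) := by
        calc (r:ℝ)^(d+2)
            ≤ (((k:ℝ)/(2*((d+1:ℕ):ℝ)))^((1:ℝ)/(((d+1:ℕ):ℝ)+1)))^(d+2) := by
              apply pow_le_pow_left₀ (by positivity) hfl
          _ = (k:ℝ)/(2*((d+1:ℕ):ℝ)) := by
              rw [← Real.rpow_natCast (((k:ℝ)/(2*((d+1:ℕ):ℝ)))^((1:ℝ)/(((d+1:ℕ):ℝ)+1))) (d+2),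
                ← Real.rpow_mul hx0, h1, Real.rpow_one]
      have h2R : (2*((d+1:ℕ):ℝ)) * (r:ℝ)^(d+2) ≤ (k:ℝ) := by
        have hpos : (0:ℝ) < 2*((d+1:ℕ):ℝ) := by positivity
        have := mul_le_mul_of_nonneg_left hpow hpos.le
        rw [mul_div_cancel₀ _ (ne_of_gt hpos)] at this
        exact this
      have h2 : 2*(d+1)*r^(d+2) ≤ k := by exact_mod_cast h2R
      have hA : r^d * (d * (r-1)^2) ≤ k := by
        calc r^d * (d * (r-1)^2) ≤ r^d * (d * r^2) := by
              apply Nat.mul_le_mul_left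
              apply Nat.mul_le_mul_left
              exact Nat.pow_le_pow_left (Nat.sub_le r 1) 2
          _ = d * r^(d+2) := by ring
          _ ≤ 2*(d+1)*r^(d+2) := Nat.mul_le_mul_right _ (by omega)
          _ ≤ k := h2
      exact construction d r k t hk hA (Or.inl hr1) hH
end

section
/- Let P be a polytope with vertices in Z^n such that the set X of non-vertex integer points of P has |X| = 4 and conv(X) is a tetrahedron with Z^n ∩ conv(X) = X. Then |vert(P)| ≤ 2^{n+1}. -/
/-!
Split the lattice points `L = V ∪ X` of `P` into the `2^n` classes of `ℤ^n / 2ℤ^n`. The midpoint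
of two distinct points of `L` in the same class is a lattice point of `P` but not a vertex, i.e. a
point of `X`. A triangle is recovered from its three edge midpoints (`a = m_ab + m_ac - m_bc`), so
the three-element subsets of the classes inject into the three-element subsets of `X`, giving
`∑_c C(|L_c|, 3) ≤ C(|X|, 3)`. As `k ≤ 2 + C(k, 3)` for all `k`, this yields
`|V| + |X| ≤ 2^(n+1) + C(|X|, 3)`, and for `|X| = 4` the two correction terms cancel.
-/

open Finset

lemma le_two_add_choose_three (k : ℕ) : k ≤ 2 + k.choose 3 := by
  induction k with
  | zero => simp
  | succ k ih =>
    have h : (k + 1).choose 3 = k.choose 2 + k.choose 3 := Nat.choose_succ_succ' k 2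
    rcases lt_or_ge k 2 with hk | hk
    · omega
    · have := Nat.choose_pos (n := k) hk
      omega

lemma card_le_two_mul_card_add_sum_choose_three {α β : Type*} [Fintype β] [DecidableEq β]
    (L : Finset α) (f : α → β) :
    #L ≤ 2 * Fintype.card β + ∑ b, (#{a ∈ L | f a = b}).choose 3 := by
  calc #L = ∑ b, #{a ∈ L | f a = b} := card_eq_sum_card_fiberwise fun _ _ => mem_univ _
    _ ≤ ∑ b, (2 + (#{a ∈ L | f a = b}).choose 3) := sum_le_sum fun _ _ => le_two_add_choose_three _
    _ = _ := by rw [sum_add_distrib, sum_const, card_univ, smul_eq_mul, mul_comm]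

section Midpoints

variable {R E : Type*} [Ring R] [Invertible (2 : R)] [AddCommGroup E] [Module R E]

lemma midpoint_right_injective (a : E) : Function.Injective (midpoint R a) := fun b c h =>
  add_left_cancel <| (midpoint_add_self R a b).symm.trans (h ▸ midpoint_add_self R a c)

lemma midpoint_add_midpoint_sub_midpoint (a b c : E) :
    midpoint R a b + midpoint R a c - midpoint R b c = a := by
  rw [midpoint_eq_smul_add, midpoint_eq_smul_add, midpoint_eq_smul_add, ← smul_add, ← smul_sub,
    show a + b + (a + c) - (b + c) = a + a by abel, ← midpoint_eq_smul_add, midpoint_self]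

variable (R) [DecidableEq E]

def midpoints (T : Finset E) : Finset E := T.offDiag.image fun p => midpoint R p.1 p.2

variable {R}

lemma midpoints_triple {a b c : E} (hab : a ≠ b) (hac : a ≠ c) (hbc : b ≠ c) :
    midpoints R {a, b, c} = ({midpoint R a b, midpoint R a c, midpoint R b c} : Finset E) := by
  ext m
  simp only [midpoints, mem_image, mem_offDiag, mem_insert, mem_singleton, Prod.exists]
  constructor
  · rintro ⟨x, y, ⟨hx, hy, hxy⟩, rfl⟩
    rcases hx with rfl | rfl | rfl <;> rcases hy with rfl | rfl | rfl <;>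
      simp_all [midpoint_comm]
  · rintro (rfl | rfl | rfl)
    exacts [⟨a, b, by simp [hab]⟩, ⟨a, c, by simp [hac]⟩, ⟨b, c, by simp [hbc]⟩]

/-- A triangle is the anti-medial triangle of its medial triangle. -/
lemma image_midpoints_of_card_eq_three {T : Finset E} (hT : #T = 3) :
    (midpoints R T).image (fun m => ∑ x ∈ midpoints R T, x - 2 • m) = T := by
  obtain ⟨a, b, c, hab, hac, hbc, rfl⟩ := card_eq_three.1 hT
  have ha := midpoint_add_midpoint_sub_midpoint (R := R) a b c
  have hb := midpoint_add_midpoint_sub_midpoint (R := R) b a c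
  have hc := midpoint_add_midpoint_sub_midpoint (R := R) c a b
  have h₁ := (midpoint_right_injective (R := R) a).ne hbc
  have h₂ := (midpoint_right_injective (R := R) b).ne hac
  have h₃ := (midpoint_right_injective (R := R) c).ne hab
  rw [midpoint_comm b a, midpoint_comm c a, midpoint_comm c b] at *
  rw [midpoints_triple hab hac hbc]
  set mab := midpoint R a b
  set mac := midpoint R a c
  set mbc := midpoint R b c
  have ea : mab + (mac + mbc) - 2 • mbc = a := by rw [← ha]; abel
  have eb : mab + (mac + mbc) - 2 • mac = b := by rw [← hb]; abel
  have ec : mab + (mac + mbc) - 2 • mab = c := by rw [← hc]; abel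
  rw [sum_insert (by simp [h₁, h₂]), sum_pair h₃]
  simp only [image_insert, image_singleton, ea, eb, ec]
  rw [insert_comm, pair_comm, insert_comm]

lemma card_midpoints_of_card_eq_three {T : Finset E} (hT : #T = 3) : #(midpoints R T) = 3 := by
  refine le_antisymm ?_ ?_
  · obtain ⟨a, b, c, hab, hac, hbc, rfl⟩ := card_eq_three.1 hT
    exact midpoints_triple (R := R) hab hac hbc ▸ card_le_three
  · calc 3 = #((midpoints R T).image fun m => ∑ x ∈ midpoints R T, x - 2 • m) := by
          rw [image_midpoints_of_card_eq_three hT, hT]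
      _ ≤ #(midpoints R T) := card_image_le

lemma sum_choose_three_le_choose_three {β : Type*} [Fintype β] [DecidableEq β] {L X : Finset E}
    (f : E → β) (hmid : ∀ p ∈ L, ∀ q ∈ L, p ≠ q → f p = f q → midpoint R p q ∈ X) :
    ∑ b, (#{a ∈ L | f a = b}).choose 3 ≤ (#X).choose 3 := by
  calc ∑ b, (#{a ∈ L | f a = b}).choose 3
      = #(univ.sigma fun b => {a ∈ L | f a = b}.powersetCard 3) := by
        simp only [card_sigma, card_powersetCard]
    _ ≤ #(X.powersetCard 3) := by
        refine card_le_card_of_injOn (fun t => midpoints R t.2) ?_ ?_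
        · rintro ⟨b, T⟩ hT
          simp only [coe_sigma, Set.mem_sigma_iff, mem_coe, mem_univ, true_and, mem_powersetCard,
            subset_iff, mem_filter] at hT ⊢
          refine ⟨?_, card_midpoints_of_card_eq_three hT.2⟩
          simp only [midpoints, mem_image, mem_offDiag, Prod.exists]
          rintro _ ⟨p, q, ⟨hp, hq, hpq⟩, rfl⟩
          exact hmid p (hT.1 hp).1 q (hT.1 hq).1 hpq ((hT.1 hp).2.trans (hT.1 hq).2.symm)
        · rintro ⟨b, T⟩ hT ⟨b', T'⟩ hT' hTT'
          simp only [coe_sigma, Set.mem_sigma_iff, mem_coe, mem_univ, true_and, mem_powersetCard,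
            subset_iff, mem_filter] at hT hT'
          have hT_eq : T = T' := by
            rw [← image_midpoints_of_card_eq_three (R := R) hT.2,
              ← image_midpoints_of_card_eq_three (R := R) hT'.2]
            simp only at hTT'
            rw [hTT']
          subst hT_eq
          obtain ⟨a, ha⟩ := card_pos.1 (hT.2 ▸ three_pos : 0 < #T)
          obtain rfl : b = b' := (hT.1 ha).2.symm.trans (hT'.1 ha).2
          rfl
    _ = (#X).choose 3 := card_powersetCard _ _

end Midpoints

noncomputable def parityClass {n : ℕ} (x : Fin n → ℝ) : Fin n → ZMod 2 :=
  fun i => (round (x i) : ZMod 2)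

lemma midpoint_mem_intLat {n : ℕ} {p q : Fin n → ℝ} (hp : p ∈ intLat n) (hq : q ∈ intLat n)
    (h : parityClass p = parityClass q) : midpoint ℝ p q ∈ intLat n := by
  intro i
  obtain ⟨a, ha⟩ := hp i
  obtain ⟨b, hb⟩ := hq i
  have hab : (a : ZMod 2) = b := by simpa [parityClass, ha, hb] using congrFun h i
  obtain ⟨k, hk⟩ := (ZMod.intCast_eq_intCast_iff_dvd_sub a b 2).1 hab
  refine ⟨a + k, ?_⟩
  rw [pi_midpoint_apply, ha, hb, midpoint_eq_smul_add, smul_eq_mul, invOf_eq_inv,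
    show b = a + 2 * k by omega]
  push_cast
  ring

lemma midpoint_notMem_extremePoints {𝕜 E : Type*} [Ring 𝕜] [LinearOrder 𝕜] [IsStrictOrderedRing 𝕜]
    [AddCommGroup E] [Module 𝕜 E] [Invertible (2 : 𝕜)] {A : Set E} {x y : E} (hx : x ∈ A)
    (hy : y ∈ A) (hxy : x ≠ y) : midpoint 𝕜 x y ∉ A.extremePoints 𝕜 := fun h =>
  have hxy' := (mem_extremePoints.1 h).2 x hx y hy (midpoint_mem_openSegment x y)
  hxy (hxy'.1.trans hxy'.2.symm)

section LatticePolytope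

variable {n : ℕ} {V : Finset (Fin n → ℝ)}

lemma midpoint_mem_nonvertex_of_parityClass_eq
    (hvert : Set.extremePoints ℝ (convexHull ℝ (V : Set (Fin n → ℝ))) = ↑V)
    {p q : Fin n → ℝ} (hp : p ∈ intLat n ∩ convexHull ℝ ↑V) (hq : q ∈ intLat n ∩ convexHull ℝ ↑V)
    (hpq : p ≠ q) (h : parityClass p = parityClass q) :
    midpoint ℝ p q ∈ (intLat n ∩ convexHull ℝ ↑V) \ ↑V :=
  ⟨⟨midpoint_mem_intLat hp.1 hq.1 h, (convex_convexHull ℝ _).midpoint_mem hp.2 hq.2⟩,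
    hvert ▸ midpoint_notMem_extremePoints hp.2 hq.2 hpq⟩

theorem card_add_card_le_two_pow_add_choose_three (hVS : ↑V ⊆ intLat n)
    (hvert : Set.extremePoints ℝ (convexHull ℝ (V : Set (Fin n → ℝ))) = ↑V)
    {X : Finset (Fin n → ℝ)} (hX : ↑X = (intLat n ∩ convexHull ℝ (V : Set (Fin n → ℝ))) \ ↑V) :
    #V + #X ≤ 2 ^ (n + 1) + (#X).choose 3 := by
  have hL : ↑(V ∪ X) ⊆ intLat n ∩ convexHull ℝ (V : Set (Fin n → ℝ)) := by
    rw [coe_union, hX]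
    exact Set.union_subset (Set.subset_inter hVS (subset_convexHull ℝ _)) Set.sdiff_subset
  have hdisj : Disjoint V X := by
    rw [← disjoint_coe, hX]
    exact Set.disjoint_sdiff_right
  calc #V + #X = #(V ∪ X) := (card_union_of_disjoint hdisj).symm
    _ ≤ 2 * Fintype.card (Fin n → ZMod 2) +
        ∑ c, (#{a ∈ V ∪ X | parityClass a = c}).choose 3 :=
      card_le_two_mul_card_add_sum_choose_three _ _
    _ ≤ 2 * 2 ^ n + (#X).choose 3 := by
      gcongr
      · simp
      · refine sum_choose_three_le_choose_three (R := ℝ) parityClass fun p hp q hq hpq h => ?_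
        rw [← mem_coe, hX]
        exact midpoint_mem_nonvertex_of_parityClass_eq hvert (hL hp) (hL hq) hpq h
    _ = 2 ^ (n + 1) + (#X).choose 3 := by ring

end LatticePolytope

theorem stmt13_general (n : ℕ)
    (V : Finset (Fin n → ℝ)) (hVS : ↑V ⊆ intLat n)
    (hvert : Set.extremePoints ℝ (convexHull ℝ (V : Set (Fin n → ℝ))) = ↑V)
    (X : Set (Fin n → ℝ))
    (hX : X = (intLat n ∩ convexHull ℝ (V : Set (Fin n → ℝ))) \ ↑V)
    (hXcard : X.ncard = 4) :
    V.card ≤ 2 ^ (n + 1) := by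
  have hXfin : X.Finite := Set.finite_of_ncard_ne_zero (by omega)
  have h := card_add_card_le_two_pow_add_choose_three hVS hvert (X := hXfin.toFinset)
    (by rw [Set.Finite.coe_toFinset, hX])
  rw [← Set.ncard_eq_toFinset_card X hXfin, hXcard] at h
  simpa using h

/-- Let `P` be a polytope with vertices in `ℤ^n` (`n ≥ 3`) such that the
set `X` of non-vertex integer points of `P` has `|X| = 4` and `conv(X)` is a
tetrahedron (a 3-dimensional polytope with the four points of `X` as its vertices)
with `ℤ^n ∩ conv(X) = X`. Then `|vert(P)| ≤ 2^(n+1)`. -/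
theorem stmt13 (n : ℕ) (hn : 3 ≤ n)
    (V : Finset (Fin n → ℝ)) (hVS : ↑V ⊆ intLat n)
    (hvert : Set.extremePoints ℝ (convexHull ℝ (V : Set (Fin n → ℝ))) = ↑V)
    (X : Set (Fin n → ℝ))
    (hX : X = (intLat n ∩ convexHull ℝ (V : Set (Fin n → ℝ))) \ ↑V)
    (hXfin : X.Finite) (hXcard : X.ncard = 4)
    (hXvert : Set.extremePoints ℝ (convexHull ℝ X) = X)
    (hXdim : Module.finrank ℝ (affineSpan ℝ X).direction = 3)
    (hXint : intLat n ∩ convexHull ℝ X = X) :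
    V.card ≤ 2 ^ (n + 1) :=
  stmt13_general n V hVS hvert X hX hXcard
end

section
/- Let V ⊆ Z^n be a set of vertices of a polytope P with vertices in Z^n, all lying in the same residue class modulo 2, and suppose the set X of non-vertex integer points of P satisfies |X| = 4. Then |V| ≤ 3. -/
/-- Let `W` be the vertex set of a polytope `P` with vertices in `ℤ^n`,
and let `V ⊆ W` consist of vertices all lying in the same residue class modulo `2`
(i.e. `v - w ∈ 2ℤ^n` for all `v, w ∈ V`). If the set `X` of non-vertex integer points
of `P` satisfies `|X| = 4`, then `|V| ≤ 3`. -/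
theorem stmt14 (n : ℕ)
    (W : Finset (Fin n → ℝ)) (hWS : ↑W ⊆ intLat n)
    (hvert : Set.extremePoints ℝ (convexHull ℝ (W : Set (Fin n → ℝ))) = ↑W)
    (V : Finset (Fin n → ℝ)) (hVW : V ⊆ W)
    (hmod : ∀ v ∈ V, ∀ w ∈ V, ∀ i, ∃ m : ℤ, v i - w i = 2 * (m : ℝ))
    (X : Set (Fin n → ℝ))
    (hX : X = (intLat n ∩ convexHull ℝ (W : Set (Fin n → ℝ))) \ ↑W)
    (hXfin : X.Finite) (hXcard : X.ncard = 4) :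
    V.card ≤ 3 := by
  by_contra hcard
  push_neg at hcard
  have h4 : 4 ≤ V.card := hcard
  -- extract 4 distinct elements
  obtain ⟨v1, hv1⟩ := Finset.card_pos.mp (show 0 < V.card by omega)
  have hc1 : 3 ≤ (V.erase v1).card := by
    rw [Finset.card_erase_of_mem hv1]; omega
  obtain ⟨v2, hv2⟩ := Finset.card_pos.mp (show 0 < (V.erase v1).card by omega)
  have hc2 : 2 ≤ ((V.erase v1).erase v2).card := by
    rw [Finset.card_erase_of_mem hv2]; omega
  obtain ⟨v3, hv3⟩ := Finset.card_pos.mp (show 0 < ((V.erase v1).erase v2).card by omega)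
  have hc3 : 1 ≤ (((V.erase v1).erase v2).erase v3).card := by
    rw [Finset.card_erase_of_mem hv3]; omega
  obtain ⟨v4, hv4⟩ := Finset.card_pos.mp (show 0 < (((V.erase v1).erase v2).erase v3).card by omega)
  have h43 : v4 ≠ v3 := Finset.ne_of_mem_erase hv4
  have hv4' := Finset.mem_of_mem_erase hv4
  have h42 : v4 ≠ v2 := Finset.ne_of_mem_erase hv4'
  have hv4'' := Finset.mem_of_mem_erase hv4'
  have h41 : v4 ≠ v1 := Finset.ne_of_mem_erase hv4''
  have hv4V : v4 ∈ V := Finset.mem_of_mem_erase hv4''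
  have h32 : v3 ≠ v2 := Finset.ne_of_mem_erase hv3
  have hv3' := Finset.mem_of_mem_erase hv3
  have h31 : v3 ≠ v1 := Finset.ne_of_mem_erase hv3'
  have hv3V : v3 ∈ V := Finset.mem_of_mem_erase hv3'
  have h21 : v2 ≠ v1 := Finset.ne_of_mem_erase hv2
  have hv2V : v2 ∈ V := Finset.mem_of_mem_erase hv2
  -- midpoints lie in X
  have hmid : ∀ v ∈ V, ∀ w ∈ V, v ≠ w → ((1/2 : ℝ) • (v + w)) ∈ X := by
    intro v hv w hw hvw
    have hvh : v ∈ convexHull ℝ (W : Set (Fin n → ℝ)) :=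
      subset_convexHull ℝ _ (hVW hv)
    have hwh : w ∈ convexHull ℝ (W : Set (Fin n → ℝ)) :=
      subset_convexHull ℝ _ (hVW hw)
    rw [hX]
    refine ⟨⟨?_, ?_⟩, ?_⟩
    · intro i
      obtain ⟨a, ha⟩ := hWS (hVW hv) i
      obtain ⟨m, hm⟩ := hmod v hv w hw i
      refine ⟨a - m, ?_⟩
      have : ((1/2 : ℝ) • (v + w)) i = (1/2 : ℝ) * (v i + w i) := rfl
      rw [this]
      push_cast
      linarith
    · have := (convex_convexHull ℝ (W : Set (Fin n → ℝ))) hvh hwh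
        (by norm_num : (0:ℝ) ≤ 1/2) (by norm_num : (0:ℝ) ≤ 1/2) (by norm_num)
      simpa [smul_add] using this
    · intro hmem
      have hext : (1/2 : ℝ) • (v + w) ∈
          Set.extremePoints ℝ (convexHull ℝ (W : Set (Fin n → ℝ))) := by
        rw [hvert]; exact hmem
      rw [mem_extremePoints] at hext
      have hseg : (1/2 : ℝ) • (v + w) ∈ openSegment ℝ v w :=
        ⟨1/2, 1/2, by norm_num, by norm_num, by norm_num, by rw [smul_add]⟩
      obtain ⟨h1, h2⟩ := hext.2 v hvh w hwh hseg
      exact hvw (h1.trans h2.symm)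
  -- midpoints are distinct when the sums are
  have hne : ∀ a b c d : Fin n → ℝ, a + b ≠ c + d →
      (1/2 : ℝ) • (a + b) ≠ (1/2 : ℝ) • (c + d) := by
    intro a b c d h hc
    exact h (smul_right_injective _ (by norm_num : (1/2 : ℝ) ≠ 0) hc)
  -- card bound helper
  have hF : hXfin.toFinset.card = 4 := by
    rw [← Set.ncard_eq_toFinset_card X hXfin]; exact hXcard
  have main : ∀ a b c d e : Fin n → ℝ, a ∈ X → b ∈ X → c ∈ X → d ∈ X → e ∈ X →
      a ≠ b → a ≠ c → a ≠ d → a ≠ e → b ≠ c → b ≠ d → b ≠ e → c ≠ d → c ≠ e → d ≠ e →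
      False := by
    intro a b c d e ha hb hc hd he hab hac had hae hbc hbd hbe hcd hce hde
    have hsub : ({a, b, c, d, e} : Finset (Fin n → ℝ)) ⊆ hXfin.toFinset := by
      intro x hx
      simp only [Finset.mem_insert, Finset.mem_singleton] at hx
      rw [Set.Finite.mem_toFinset]
      rcases hx with rfl | rfl | rfl | rfl | rfl <;> assumption
    have hle := Finset.card_le_card hsub
    rw [hF] at hle
    have h5 : ({a, b, c, d, e} : Finset (Fin n → ℝ)).card = 5 := by
      rw [Finset.card_insert_of_notMem (by simp [hab, hac, had, hae]),
          Finset.card_insert_of_notMem (by simp [hbc, hbd, hbe]),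
          Finset.card_insert_of_notMem (by simp [hcd, hce]),
          Finset.card_insert_of_notMem (by simp [hde]),
          Finset.card_singleton]
    omega
  set m12 := (1/2 : ℝ) • (v1 + v2) with hm12
  set m13 := (1/2 : ℝ) • (v1 + v3) with hm13
  set m14 := (1/2 : ℝ) • (v1 + v4) with hm14
  set m23 := (1/2 : ℝ) • (v2 + v3) with hm23
  set m24 := (1/2 : ℝ) • (v2 + v4) with hm24
  set m34 := (1/2 : ℝ) • (v3 + v4) with hm34
  have x12 := hmid v1 hv1 v2 hv2V (Ne.symm h21)
  have x13 := hmid v1 hv1 v3 hv3V (Ne.symm h31)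
  have x14 := hmid v1 hv1 v4 hv4V (Ne.symm h41)
  have x23 := hmid v2 hv2V v3 hv3V (Ne.symm h32)
  have x24 := hmid v2 hv2V v4 hv4V (Ne.symm h42)
  have x34 := hmid v3 hv3V v4 hv4V (Ne.symm h43)
  by_cases hs : v1 + v2 = v3 + v4
  · have ht : v1 + v3 ≠ v2 + v4 := fun h => h32 (funext fun i => by
      have a := congrFun hs i; have b := congrFun h i
      simp only [Pi.add_apply] at a b; linarith)
    have hu : v1 + v4 ≠ v2 + v3 := fun h => h42 (funext fun i => by
      have a := congrFun hs i; have b := congrFun h i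
      simp only [Pi.add_apply] at a b; linarith)
    exact main m12 m13 m14 m23 m24 x12 x13 x14 x23 x24
      (hne _ _ _ _ (fun h => h32 (funext fun i => by
        have b := congrFun h i; simp only [Pi.add_apply] at b; linarith)))
      (hne _ _ _ _ (fun h => h42 (funext fun i => by
        have b := congrFun h i; simp only [Pi.add_apply] at b; linarith)))
      (hne _ _ _ _ (fun h => h31 (funext fun i => by
        have b := congrFun h i; simp only [Pi.add_apply] at b; linarith)))
      (hne _ _ _ _ (fun h => h41 (funext fun i => by
        have b := congrFun h i; simp only [Pi.add_apply] at b; linarith)))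
      (hne _ _ _ _ (fun h => h43 (funext fun i => by
        have b := congrFun h i; simp only [Pi.add_apply] at b; linarith)))
      (hne _ _ _ _ (fun h => h21 (funext fun i => by
        have b := congrFun h i; simp only [Pi.add_apply] at b; linarith)))
      (hne _ _ _ _ ht)
      (hne _ _ _ _ hu)
      (hne _ _ _ _ (fun h => h21 (funext fun i => by
        have b := congrFun h i; simp only [Pi.add_apply] at b; linarith)))
      (hne _ _ _ _ (fun h => h43 (funext fun i => by
        have b := congrFun h i; simp only [Pi.add_apply] at b; linarith)))
  · by_cases hu : v1 + v4 = v2 + v3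
    · have ht : v1 + v3 ≠ v2 + v4 := fun h => h43 (funext fun i => by
        have a := congrFun hu i; have b := congrFun h i
        simp only [Pi.add_apply] at a b; linarith)
      exact main m12 m13 m14 m24 m34 x12 x13 x14 x24 x34
        (hne _ _ _ _ (fun h => h32 (funext fun i => by
          have b := congrFun h i; simp only [Pi.add_apply] at b; linarith)))
        (hne _ _ _ _ (fun h => h42 (funext fun i => by
          have b := congrFun h i; simp only [Pi.add_apply] at b; linarith)))
        (hne _ _ _ _ (fun h => h41 (funext fun i => by
          have b := congrFun h i; simp only [Pi.add_apply] at b; linarith)))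
        (hne _ _ _ _ hs)
        (hne _ _ _ _ (fun h => h43 (funext fun i => by
          have b := congrFun h i; simp only [Pi.add_apply] at b; linarith)))
        (hne _ _ _ _ ht)
        (hne _ _ _ _ (fun h => h41 (funext fun i => by
          have b := congrFun h i; simp only [Pi.add_apply] at b; linarith)))
        (hne _ _ _ _ (fun h => h21 (funext fun i => by
          have b := congrFun h i; simp only [Pi.add_apply] at b; linarith)))
        (hne _ _ _ _ (fun h => h31 (funext fun i => by
          have b := congrFun h i; simp only [Pi.add_apply] at b; linarith)))
        (hne _ _ _ _ (fun h => h32 (funext fun i => by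
          have b := congrFun h i; simp only [Pi.add_apply] at b; linarith)))
    · exact main m12 m13 m14 m23 m34 x12 x13 x14 x23 x34
        (hne _ _ _ _ (fun h => h32 (funext fun i => by
          have b := congrFun h i; simp only [Pi.add_apply] at b; linarith)))
        (hne _ _ _ _ (fun h => h42 (funext fun i => by
          have b := congrFun h i; simp only [Pi.add_apply] at b; linarith)))
        (hne _ _ _ _ (fun h => h31 (funext fun i => by
          have b := congrFun h i; simp only [Pi.add_apply] at b; linarith)))
        (hne _ _ _ _ hs)
        (hne _ _ _ _ (fun h => h43 (funext fun i => by
          have b := congrFun h i; simp only [Pi.add_apply] at b; linarith)))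
        (hne _ _ _ _ (fun h => h21 (funext fun i => by
          have b := congrFun h i; simp only [Pi.add_apply] at b; linarith)))
        (hne _ _ _ _ (fun h => h41 (funext fun i => by
          have b := congrFun h i; simp only [Pi.add_apply] at b; linarith)))
        (hne _ _ _ _ hu)
        (hne _ _ _ _ (fun h => h31 (funext fun i => by
          have b := congrFun h i; simp only [Pi.add_apply] at b; linarith)))
        (hne _ _ _ _ (fun h => h42 (funext fun i => by
          have b := congrFun h i; simp only [Pi.add_apply] at b; linarith)))
end

section
/- Let K ⊆ R^n be a convex body and x ∈ int(K). Then ac(K,x) = min{λ ≥ 0 : x + (1/(λ+1))(K - K) ⊆ K}, where ac(K,x) = min{λ ≥ 0 : x - K ⊆ λ(K - x)} is the coefficient of asymmetry. -/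
open scoped Pointwise

/-- Let `K ⊆ ℝ^n` be a convex body (compact convex with nonempty
interior) and `x ∈ int(K)`. Then the coefficient of asymmetry
`ac(K,x) = min{λ ≥ 0 : x - K ⊆ λ(K - x)}` exists and coincides with
`min{λ ≥ 0 : x + (1/(λ+1))(K - K) ⊆ K}`, where `K - K` is the Minkowski difference
body. -/
theorem stmt19 (n : ℕ) (K : Set (Fin n → ℝ))
    (hKconv : Convex ℝ K) (hKcomp : IsCompact K) (hKint : (interior K).Nonempty)
    (x : Fin n → ℝ) (hx : x ∈ interior K) :
    ∃ l : ℝ,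
      IsLeast {lam : ℝ | 0 ≤ lam ∧
        (fun y => x - y) '' K ⊆ lam • ((fun y => y - x) '' K)} l ∧
      IsLeast {lam : ℝ | 0 ≤ lam ∧
        (fun z => x + (1 / (lam + 1)) • z) '' (Set.image2 (· - ·) K K) ⊆ K} l := by
  have hxK : x ∈ K := interior_subset hx
  set C : Set (Fin n → ℝ) := (fun y => y - x) '' K with hCdef
  have hCcomp : IsCompact C := hKcomp.image (continuous_id.sub continuous_const)
  have hCclosed : IsClosed C := hCcomp.isClosed
  have hCconv : Convex ℝ C := by
    have : C = (fun z => (-x) + z) '' K := by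
      ext v; constructor
      · rintro ⟨b, hb, rfl⟩; exact ⟨b, hb, by abel⟩
      · rintro ⟨b, hb, rfl⟩; exact ⟨b, hb, by abel⟩
    rw [this]; exact hKconv.translate (-x)
  have hC0 : (0 : Fin n → ℝ) ∈ C := ⟨x, hxK, sub_self x⟩
  have hCne : C.Nonempty := ⟨0, hC0⟩
  -- C is a neighborhood of 0
  have hCnhds : C ∈ nhds (0 : Fin n → ℝ) := by
    have hKx : K ∈ nhds x := mem_interior_iff_mem_nhds.1 hx
    obtain ⟨ε, hε, hball⟩ := Metric.mem_nhds_iff.1 hKx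
    refine Metric.mem_nhds_iff.2 ⟨ε, hε, fun v hv => ?_⟩
    refine ⟨v + x, hball ?_, by simp⟩
    simpa [Metric.mem_ball, dist_eq_norm] using hv
  have habs : Absorbent ℝ C := absorbent_nhds_zero hCnhds
  have hbdd : Bornology.IsVonNBounded ℝ C :=
    NormedSpace.isVonNBounded_of_isBounded _ hCcomp.isBounded
  -- key: membership in scaled C from gauge bound
  have mem_of_gauge_le : ∀ (r : ℝ) (v : Fin n → ℝ), 0 ≤ r → gauge C v ≤ r → v ∈ r • C := by
    intro r v hr hg
    rcases hr.eq_or_lt with h0 | hpos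
    · have : gauge C v = 0 := le_antisymm (h0 ▸ hg) (gauge_nonneg v)
      have hv0 : v = 0 := (gauge_eq_zero habs hbdd).1 this
      rw [← h0, hv0, Set.zero_smul_set hCne]; exact rfl
    · have h1 : gauge C (r⁻¹ • v) ≤ 1 := by
        rw [gauge_smul_of_nonneg (inv_nonneg.2 hr) v, smul_eq_mul]
        rw [inv_mul_le_iff₀ hpos, mul_one]; exact hg
      have : r⁻¹ • v ∈ C := by
        have := (gauge_le_one_iff_mem_closure hCconv hCnhds).1 h1
        rwa [hCclosed.closure_eq] at this
      exact ⟨r⁻¹ • v, this, by show r • r⁻¹ • v = v; rw [smul_smul, mul_inv_cancel₀ hpos.ne', one_smul]⟩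
  have gauge_le_mem : ∀ (r : ℝ) (v : Fin n → ℝ), 0 ≤ r → v ∈ r • C → gauge C v ≤ r :=
    fun r v hr hv => gauge_le_of_mem hr hv
  -- the maximizer of gauge over x - K
  have hgc : Continuous (fun b => gauge C (x - b)) :=
    (continuous_gauge hCconv hCnhds).comp (continuous_const.sub continuous_id)
  obtain ⟨b₀, hb₀K, hb₀max⟩ := hKcomp.exists_isMaxOn ⟨x, hxK⟩ hgc.continuousOn
  set l : ℝ := gauge C (x - b₀) with hldef
  have hl0 : 0 ≤ l := gauge_nonneg _
  have hl1 : l + 1 ≠ 0 := by positivity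
  -- l ∈ S1
  have hlS1 : l ∈ {lam : ℝ | 0 ≤ lam ∧
      (fun y => x - y) '' K ⊆ lam • ((fun y => y - x) '' K)} := by
    refine ⟨hl0, ?_⟩
    rintro v ⟨b, hb, rfl⟩
    exact mem_of_gauge_le l (x - b) hl0 (hb₀max hb)
  -- S1 implies lower bound l ≤ lam
  have hS1lb : ∀ lam ∈ {lam : ℝ | 0 ≤ lam ∧
      (fun y => x - y) '' K ⊆ lam • ((fun y => y - x) '' K)}, l ≤ lam := by
    rintro lam ⟨hlam0, hlam⟩
    exact gauge_le_mem lam (x - b₀) hlam0 (hlam ⟨b₀, hb₀K, rfl⟩)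
  refine ⟨l, ⟨hlS1, hS1lb⟩, ⟨⟨hl0, ?_⟩, ?_⟩⟩
  · -- l ∈ S2
    rintro v ⟨w, ⟨a, ha, b, hb, rfl⟩, rfl⟩
    obtain ⟨a', ha'C, ha'eq⟩ := hlS1.2 ⟨b, hb, rfl⟩
    obtain ⟨a'', ha''K, rfl⟩ := ha'C
    -- x - b = l • (a'' - x)
    have hcomb : (1 / (l + 1)) • a + (l / (l + 1)) • a'' ∈ K := by
      apply hKconv ha ha''K (by positivity) (by positivity)
      field_simp
      ring
    have heq : x + (1 / (l + 1)) • (a - b) =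
        (1 / (l + 1)) • a + (l / (l + 1)) • a'' := by
      have hb' : b = x - l • (a'' - x) := by
        have h2 : l • (a'' - x) = x - b := ha'eq
        rw [h2]; exact (sub_sub_cancel x b).symm
      rw [hb']
      match_scalars <;> field_simp <;> ring
    show x + (1 / (l + 1)) • (a - b) ∈ K
    rw [heq]; exact hcomb
  · -- lower bound for S2
    rintro lam ⟨hlam0, hlam⟩
    -- show -C ⊆ lam • C, then gauge bound gives l ≤ lam
    have hlam1 : (0:ℝ) < lam + 1 := by positivity
    have hsub : ∀ c ∈ C, ∀ y ∈ C, c + (-y) ∈ (lam + 1) • C := by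
      rintro c ⟨a, ha, rfl⟩ y ⟨b, hb, rfl⟩
      have hmem : x + (1 / (lam + 1)) • (a - b) ∈ K :=
        hlam ⟨a - b, Set.mem_image2_of_mem ha hb, rfl⟩
      refine ⟨(1 / (lam + 1)) • (a - b), ⟨_, hmem, by simp⟩, ?_⟩
      show (lam + 1) • (1 / (lam + 1)) • (a - b) = (a - x) + -(b - x)
      rw [smul_smul, mul_one_div, div_self hlam1.ne', one_smul]
      abel
    have hnegC : ∀ y ∈ C, -y ∈ lam • C := by
      intro y hy
      by_contra hyn
      have hclosed : IsClosed (lam • C) := by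
        have : IsCompact (lam • C) := hCcomp.smul lam
        exact this.isClosed
      have hconv : Convex ℝ (lam • C) := hCconv.smul lam
      obtain ⟨f, u, hfu, huy⟩ := geometric_hahn_banach_closed_point hconv hclosed hyn
      obtain ⟨c', hc'C, hc'max⟩ := hCcomp.exists_isMaxOn hCne f.continuous.continuousOn
      obtain ⟨c'', hc''C, hc''eq⟩ := hsub c' hc'C y hy
      have h1 : f c' + f (-y) = (lam + 1) * f c'' := by
        rw [← f.map_add, ← hc''eq]; simp
      have h2 : f c'' ≤ f c' := hc'max hc''C
      have h3 : f (-y) ≤ lam * f c' := by nlinarith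
      have h4 : lam * f c' < u := by
        have : f (lam • c') < u := hfu _ ⟨c', hc'C, rfl⟩
        simpa using this
      linarith [huy]
    have : x - b₀ ∈ lam • C := by
      have : -(b₀ - x) ∈ lam • C := hnegC (b₀ - x) ⟨b₀, hb₀K, rfl⟩
      simpa [neg_sub] using this
    exact gauge_le_mem lam (x - b₀) hlam0 this
end
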